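/- arXiv:1405.6631 — 12 statements merged into one kernel-verified Lean document; each statement's English description precedes it below -/
import Mathlib

section
/- For any locally finite Borel measure μ on the real line and any α ∈ (0,1), the sharp Tauberian constant of the uncentered Hardy–Littlewood maximal operator with respect to μ satisfies C_μ(α) ≤ (2−α)/α; equivalently, for every measurable set E with 0 < μ(E) < ∞, μ({x ∈ ℝ : M_μ χ_E(x) > α}) ≤ ((2−α)/α) μ(E). -/
/-!
Call an interval `I` dense if `α μ(I) ≤ μ(I ∩ E)`; then `μ(I \ E) ≤ ((1 - α)/α) μ(I ∩ E)`,
so only the part of a dense interval outside `E` costs anything. A finite family of closed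
intervals has an irredundant subfamily with the same union, and no point lies in three of its
members, so the sets `I ∩ E` have total measure at most `2 μ(E)`. The union of finitely many
dense intervals therefore has measure at most `μ(E) + 2 ((1 - α)/α) μ(E) = ((2 - α)/α) μ(E)`.
By continuity from above, a dense interval can be enlarged to one containing it in its
interior, so the level set is covered by the interiors of dense intervals, and inner regularity
reduces to finitely many of them.
-/

open MeasureTheory Set Filter Topology
open scoped ENNReal Finset

theorem Finset.exists_irredundant_subfamily {ι X : Type*} [DecidableEq ι] (s : Finset ι)
    (A : ι → Set X) :
    ∃ t ⊆ s, ⋃ i ∈ t, A i = ⋃ i ∈ s, A i ∧ ∀ k ∈ t, ¬A k ⊆ ⋃ i ∈ t.erase k, A i := by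
  induction s using Finset.strongInduction with
  | H s ih =>
    by_cases hred : ∃ k ∈ s, A k ⊆ ⋃ i ∈ s.erase k, A i
    · obtain ⟨k, hk, hsub⟩ := hred
      obtain ⟨t, hts, hU, hirr⟩ := ih _ (Finset.erase_ssubset hk)
      refine ⟨t, hts.trans (Finset.erase_subset k s), ?_, hirr⟩
      conv_rhs => rw [← Finset.insert_erase hk, Finset.set_biUnion_insert]
      rw [hU, union_eq_self_of_subset_left hsub]
    · push Not at hred
      exact ⟨s, subset_rfl, rfl, hred⟩

theorem Icc_subset_union_Icc_of_le {a₁ b₁ a₂ b₂ a b x : ℝ} (ha : a₁ ≤ a) (hb : b ≤ b₂)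
    (hx₁ : x ≤ b₁) (hx₂ : a₂ ≤ x) : Icc a b ⊆ Icc a₁ b₁ ∪ Icc a₂ b₂ := by
  intro y hy
  rcases le_total y x with h | h
  · exact Or.inl ⟨ha.trans hy.1, h.trans hx₁⟩
  · exact Or.inr ⟨hx₂.trans h, hy.2.trans hb⟩

theorem card_filter_mem_Icc_le_two {ι : Type*} [DecidableEq ι] {t : Finset ι} {a b : ι → ℝ}
    (x : ℝ) [DecidablePred fun i => x ∈ Icc (a i) (b i)]
    (hirr : ∀ k ∈ t, ¬Icc (a k) (b k) ⊆ ⋃ i ∈ t.erase k, Icc (a i) (b i)) :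
    #{i ∈ t | x ∈ Icc (a i) (b i)} ≤ 2 := by
  set S := {i ∈ t | x ∈ Icc (a i) (b i)}
  by_contra! hS
  have hne : S.Nonempty := Finset.card_pos.mp (by omega)
  -- The members with the leftmost left end and the rightmost right end cover any third one.
  obtain ⟨i, hiS, hi⟩ := S.exists_min_image a hne
  obtain ⟨j, hjS, hj⟩ := S.exists_max_image b hne
  obtain ⟨k, hk⟩ : ((S.erase i).erase j).Nonempty := by
    apply Finset.card_pos.mp
    have := Finset.pred_card_le_card_erase (s := S) (a := i)
    have := Finset.pred_card_le_card_erase (s := S.erase i) (a := j)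
    omega
  obtain ⟨hkj, hki, hkS⟩ : k ≠ j ∧ k ≠ i ∧ k ∈ S := by simpa using hk
  have hmem {l : ι} (hl : l ∈ S) : l ∈ t ∧ x ∈ Icc (a l) (b l) := Finset.mem_filter.mp hl
  have hcover : Icc (a k) (b k) ⊆ Icc (a i) (b i) ∪ Icc (a j) (b j) :=
    Icc_subset_union_Icc_of_le (hi k hkS) (hj k hkS) (hmem hiS).2.2 (hmem hjS).2.1
  refine hirr k (hmem hkS).1 (hcover.trans (union_subset ?_ ?_))
  · exact Finset.subset_set_biUnion_of_mem (f := fun i => Icc (a i) (b i))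
      (Finset.mem_erase.mpr ⟨hki.symm, (hmem hiS).1⟩)
  · exact Finset.subset_set_biUnion_of_mem (f := fun i => Icc (a i) (b i))
      (Finset.mem_erase.mpr ⟨hkj.symm, (hmem hjS).1⟩)

theorem sum_measure_le_mul_measure_biUnion {ι X : Type*} [MeasurableSpace X] (μ : Measure X)
    {t : Finset ι} {A : ι → Set X} [∀ x, DecidablePred fun i => x ∈ A i]
    (hA : ∀ i ∈ t, MeasurableSet (A i)) {n : ℕ} (hn : ∀ x, #{i ∈ t | x ∈ A i} ≤ n) :
    ∑ i ∈ t, μ (A i) ≤ n * μ (⋃ i ∈ t, A i) := by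
  calc ∑ i ∈ t, μ (A i) = ∫⁻ x, ∑ i ∈ t, (A i).indicator 1 x ∂μ := by
        rw [lintegral_finsetSum' _ fun i hi => (measurable_one.indicator (hA i hi)).aemeasurable]
        exact Finset.sum_congr rfl fun i hi => (lintegral_indicator_one (hA i hi)).symm
    _ ≤ ∫⁻ x, (⋃ i ∈ t, A i).indicator (fun _ => (n : ℝ≥0∞)) x ∂μ := by
        refine lintegral_mono fun x => ?_
        by_cases hx : x ∈ ⋃ i ∈ t, A i
        · rw [indicator_of_mem hx, Finset.sum_indicator_eq_sum_filter]
          simpa using hn x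
        · rw [indicator_of_notMem hx]
          refine (Finset.sum_eq_zero fun i hi => indicator_of_notMem ?_ _).le
          exact fun hxi => hx (mem_biUnion hi hxi)
    _ = n * μ (⋃ i ∈ t, A i) :=
        lintegral_indicator_const (t.measurableSet_biUnion hA) _

theorem measure_diff_le_of_le_measure_inter {X : Type*} [MeasurableSpace X] {μ : Measure X}
    {I E : Set X} {α : ℝ} (hα0 : 0 < α) (hα1 : α ≤ 1) (hE : MeasurableSet E) (hI : μ I ≠ ∞)
    (h : ENNReal.ofReal α * μ I ≤ μ (I ∩ E)) :
    μ (I \ E) ≤ ENNReal.ofReal ((1 - α) / α) * μ (I ∩ E) := by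
  have hIE : μ (I ∩ E) ≠ ∞ := measure_ne_top_of_subset inter_subset_left hI
  rw [← ENNReal.add_le_add_iff_left hIE, measure_inter_add_sdiff I hE]
  calc μ I = ENNReal.ofReal α⁻¹ * (ENNReal.ofReal α * μ I) := by
        rw [← mul_assoc, ← ENNReal.ofReal_mul (by positivity), inv_mul_cancel₀ hα0.ne',
          ENNReal.ofReal_one, one_mul]
    _ ≤ ENNReal.ofReal α⁻¹ * μ (I ∩ E) := by gcongr
    _ = μ (I ∩ E) + ENNReal.ofReal ((1 - α) / α) * μ (I ∩ E) := by
        rw [show α⁻¹ = 1 + (1 - α) / α by field_simp; ring,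
          ENNReal.ofReal_add zero_le_one (div_nonneg (by linarith) hα0.le), ENNReal.ofReal_one,
          add_mul, one_mul]

theorem measure_biUnion_Icc_le {ι : Type*} {μ : Measure ℝ} [IsFiniteMeasureOnCompacts μ]
    {α : ℝ} (hα0 : 0 < α) (hα1 : α ≤ 1) {E : Set ℝ} (hE : MeasurableSet E) (s : Finset ι)
    (a b : ι → ℝ)
    (hs : ∀ i ∈ s, ENNReal.ofReal α * μ (Icc (a i) (b i)) ≤ μ (Icc (a i) (b i) ∩ E)) :
    μ (⋃ i ∈ s, Icc (a i) (b i)) ≤ ENNReal.ofReal ((2 - α) / α) * μ E := by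
  classical
  obtain ⟨t, hts, hU, hirr⟩ := s.exists_irredundant_subfamily fun i => Icc (a i) (b i)
  set c := ENNReal.ofReal ((1 - α) / α)
  have hsum : ∑ i ∈ t, μ (Icc (a i) (b i) ∩ E) ≤ 2 * μ E := by
    refine (sum_measure_le_mul_measure_biUnion μ (n := 2)
      (fun i _ => measurableSet_Icc.inter hE) fun x => ?_).trans ?_
    · exact (Finset.card_le_card (Finset.monotone_filter_right t fun _ _ hi => hi.1)).trans
        (card_filter_mem_Icc_le_two x hirr)
    · exact mul_le_mul_right (measure_mono (iUnion₂_subset fun _ _ => inter_subset_right)) _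
  rw [← hU]
  calc μ (⋃ i ∈ t, Icc (a i) (b i))
      = μ ((⋃ i ∈ t, Icc (a i) (b i)) ∩ E) + μ ((⋃ i ∈ t, Icc (a i) (b i)) \ E) :=
        (measure_inter_add_sdiff _ hE).symm
    _ ≤ μ E + ∑ i ∈ t, μ (Icc (a i) (b i) \ E) := by
        simp only [iUnion_sdiff]
        exact add_le_add (measure_mono inter_subset_right) (measure_biUnion_finset_le t _)
    _ ≤ μ E + ∑ i ∈ t, c * μ (Icc (a i) (b i) ∩ E) := by
        gcongr with i hi
        exact measure_diff_le_of_le_measure_inter hα0 hα1 hE isCompact_Icc.measure_ne_top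
          (hs i (hts hi))
    _ ≤ μ E + c * (2 * μ E) := by
        rw [← Finset.mul_sum]
        gcongr
    _ = ENNReal.ofReal ((2 - α) / α) * μ E := by
        rw [show (2 - α) / α = 1 + 2 * ((1 - α) / α) by field_simp; ring,
          ENNReal.ofReal_add zero_le_one
            (mul_nonneg zero_le_two (div_nonneg (sub_nonneg.2 hα1) hα0.le)),
          ENNReal.ofReal_mul zero_le_two, ENNReal.ofReal_one, ENNReal.ofReal_ofNat]
        ring

theorem tendsto_measure_Icc_sub_add (μ : Measure ℝ) [IsFiniteMeasureOnCompacts μ] (a b : ℝ) :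
    Tendsto (fun r => μ (Icc (a - r) (b + r))) (𝓝[>] 0) (𝓝 (μ (Icc a b))) := by
  have hIcc : Icc a b = ⋂ r > 0, Icc (a - r) (b + r) := by
    ext y
    simp only [mem_Icc, mem_iInter]
    exact ⟨fun h r hr => ⟨by linarith [h.1], by linarith [h.2]⟩,
      fun h => ⟨le_of_forall_pos_le_add fun r hr => by linarith [(h r hr).1],
        le_of_forall_pos_le_add fun r hr => (h r hr).2⟩⟩
  rw [hIcc]
  exact tendsto_measure_biInter_gt (fun _ _ => nullMeasurableSet_Icc)
    (fun r s _ hrs => Icc_subset_Icc (by linarith) (by linarith))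
    ⟨1, zero_lt_one, isCompact_Icc.measure_ne_top⟩

theorem exists_pos_measure_Icc_sub_add_lt {μ : Measure ℝ} [IsFiniteMeasureOnCompacts μ]
    {a b : ℝ} {c d : ℝ≥0∞} (hc : c ≠ ∞) (h : c * μ (Icc a b) < d) :
    ∃ r > 0, c * μ (Icc (a - r) (b + r)) < d := by
  have hlim := ENNReal.Tendsto.const_mul (tendsto_measure_Icc_sub_add μ a b) (Or.inr hc)
  exact ((hlim.eventually_lt_const h).and self_mem_nhdsWithin).exists.imp fun _ h => ⟨h.2, h.1⟩

theorem measure_biUnion_Ioo_le {μ : Measure ℝ} [IsFiniteMeasureOnCompacts μ] {α : ℝ}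
    (hα0 : 0 < α) (hα1 : α ≤ 1) {E : Set ℝ} (hE : MeasurableSet E) (G : Set (ℝ × ℝ))
    (hG : ∀ p ∈ G, ENNReal.ofReal α * μ (Icc p.1 p.2) ≤ μ (Icc p.1 p.2 ∩ E)) :
    μ (⋃ p ∈ G, Ioo p.1 p.2) ≤ ENNReal.ofReal ((2 - α) / α) * μ E := by
  rw [(isOpen_biUnion fun _ _ => isOpen_Ioo).measure_eq_iSup_isCompact]
  refine iSup₂_le fun K hKU => iSup_le fun hK => ?_
  obtain ⟨t, htG, htfin, hKt⟩ := hK.elim_finite_subcover_image (fun _ _ => isOpen_Ioo) hKU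
  calc μ K ≤ μ (⋃ p ∈ htfin.toFinset, Icc p.1 p.2) := by
        refine measure_mono (hKt.trans ?_)
        simp only [Finite.mem_toFinset]
        exact biUnion_mono subset_rfl fun _ _ => Ioo_subset_Icc_self
    _ ≤ _ := measure_biUnion_Icc_le hα0 hα1 hE _ _ _ fun p hp =>
        hG p (htG (htfin.mem_toFinset.mp hp))

theorem solyanik_one_dim_measure_general (μ : Measure ℝ) [IsLocallyFiniteMeasure μ]
    (α : ℝ) (hα0 : 0 < α) (hα1 : α < 1)
    (E : Set ℝ) (hE : MeasurableSet E) :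
    μ {x : ℝ | ∃ a b : ℝ, a ≤ x ∧ x ≤ b ∧ 0 < μ (Icc a b) ∧
        ENNReal.ofReal α * μ (Icc a b) < μ (Icc a b ∩ E)} ≤
      ENNReal.ofReal ((2 - α) / α) * μ E := by
  set G := {p : ℝ × ℝ | ENNReal.ofReal α * μ (Icc p.1 p.2) < μ (Icc p.1 p.2 ∩ E)}
  refine (measure_mono (t := ⋃ p ∈ G, Ioo p.1 p.2) ?_).trans
    (measure_biUnion_Ioo_le hα0 hα1.le hE G fun _ hp => le_of_lt hp)
  rintro x ⟨a, b, hax, hxb, -, hab⟩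
  obtain ⟨r, hr, hr'⟩ := exists_pos_measure_Icc_sub_add_lt ENNReal.ofReal_ne_top hab
  have hsub : Icc a b ⊆ Icc (a - r) (b + r) := Icc_subset_Icc (by linarith) (by linarith)
  exact mem_biUnion (x := (a - r, b + r))
    (hr'.trans_le (measure_mono (inter_subset_inter_left _ hsub))) ⟨by linarith, by linarith⟩

/-- For any locally finite Borel measure μ on ℝ and α ∈ (0,1), the uncentered
Hardy–Littlewood maximal operator with respect to μ satisfies the Tauberian estimate
μ({M_μ χ_E > α}) ≤ ((2−α)/α) μ(E). -/
theorem solyanik_one_dim_measure (μ : Measure ℝ) [IsLocallyFiniteMeasure μ]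
    (α : ℝ) (hα0 : 0 < α) (hα1 : α < 1)
    (E : Set ℝ) (hE : MeasurableSet E) (hE0 : 0 < μ E) (hEfin : μ E < ⊤) :
    μ {x : ℝ | ∃ a b : ℝ, a ≤ x ∧ x ≤ b ∧ 0 < μ (Icc a b) ∧
        ENNReal.ofReal α * μ (Icc a b) < μ (Icc a b ∩ E)} ≤
      ENNReal.ofReal ((2 - α) / α) * μ E :=
  solyanik_one_dim_measure_general μ α hα0 hα1 E hE
end

section
/- Let {Q_j}_{j=0}^N be a finite collection of axis-parallel cubes in ℝ^n, ordered so that their sidelengths are decreasing, and set E_0 = Q_0 and E_j = Q_j \ ∪_{k<j} Q_k for j ≥ 1. Then for all δ ∈ (0,1) and all k ≤ N, the union of the dilates (1+δ)Q_j for j = 0,…,k (each dilated about its own center) equals the union of the corresponding dilates (1+δ)_j E_j, where (1+δ)_j E_j denotes the image of E_j under the homothety with center the center of Q_j and ratio 1+δ. -/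
open MeasureTheory Metric Set
open scoped ENNReal

/-- The homothety with center `c` and ratio `t`. -/
noncomputable def homothety {n : ℕ} (c : Fin n → ℝ) (t : ℝ) (S : Set (Fin n → ℝ)) :
    Set (Fin n → ℝ) :=
  (fun z => c + t • (z - c)) '' S

lemma homothety_mem_closedBall {n : ℕ} (c : Fin n → ℝ) {t ρ : ℝ} (ht : 0 < t) (hρ : 0 ≤ ρ)
    (x : Fin n → ℝ) (hx : dist x c ≤ t * ρ) :
    x ∈ homothety c t (closedBall c ρ) := by
  refine ⟨c + t⁻¹ • (x - c), ?_, ?_⟩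
  · rw [mem_closedBall, dist_pi_le_iff hρ]
    intro i
    have h1 := dist_le_pi_dist x c i
    have h2 : dist x c ≤ t * ρ := hx
    simp only [Pi.add_apply, Pi.smul_apply, Pi.sub_apply, smul_eq_mul, Real.dist_eq] at h1 ⊢
    have : |c i + t⁻¹ * (x i - c i) - c i| = t⁻¹ * |x i - c i| := by
      rw [add_sub_cancel_left, abs_mul, abs_of_pos (inv_pos.mpr ht)]
    rw [this]
    calc t⁻¹ * |x i - c i| ≤ t⁻¹ * (t * ρ) := by
          apply mul_le_mul_of_nonneg_left (le_trans h1 h2) (inv_pos.mpr ht).le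
      _ = ρ := by field_simp
  · funext i
    simp only [Pi.add_apply, Pi.smul_apply, Pi.sub_apply, smul_eq_mul]
    field_simp
    ring

/-- For a finite collection of axis-parallel cubes (closed balls in the sup metric on ℝⁿ)
ordered with decreasing sidelengths, with increments E_j = Q_j \ ⋃_{l<j} Q_l, the union of
the dilates (1+δ)Q_j equals the union of the homothety images (1+δ)_j E_j of the increments,
for every initial segment. -/
theorem union_dilates_eq_union_dilated_increments (n N : ℕ)
    (c : ℕ → (Fin n → ℝ)) (r : ℕ → ℝ) (hr : ∀ j ≤ N, 0 < r j)
    (hdec : ∀ j k, j ≤ k → k ≤ N → r k ≤ r j)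
    (δ : ℝ) (hδ0 : 0 < δ) (hδ1 : δ < 1) :
    ∀ k ≤ N,
      (⋃ j ∈ Finset.range (k + 1), homothety (c j) (1 + δ) (closedBall (c j) (r j))) =
      (⋃ j ∈ Finset.range (k + 1), homothety (c j) (1 + δ)
        ((closedBall (c j) (r j)) \ ⋃ l ∈ Finset.range j, closedBall (c l) (r l))) := by
  intro k hk
  have h1δ : (0:ℝ) < 1 + δ := by linarith
  apply Subset.antisymm
  · intro x hx
    simp only [mem_iUnion, Finset.mem_range, exists_prop] at hx
    obtain ⟨j, hj, hxj⟩ := hx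
    have key : ∀ j, j < k + 1 → x ∈ homothety (c j) (1 + δ) (closedBall (c j) (r j)) →
        x ∈ ⋃ j ∈ Finset.range (k + 1), homothety (c j) (1 + δ)
          ((closedBall (c j) (r j)) \ ⋃ l ∈ Finset.range j, closedBall (c l) (r l)) := by
      clear hxj hj
      intro j
      induction j using Nat.strong_induction_on with
      | _ j ih =>
        intro hj hxj
        obtain ⟨z, hz, hxeq⟩ := hxj
        have hjN : j ≤ N := le_trans (Nat.lt_succ_iff.mp hj) hk
        by_cases hmem : z ∈ ⋃ l ∈ Finset.range j, closedBall (c l) (r l)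
        · simp only [mem_iUnion, Finset.mem_range, exists_prop] at hmem
          obtain ⟨l, hl, hzl⟩ := hmem
          have hlN : l ≤ N := le_trans hl.le hjN
          have hrl : 0 < r l := hr l hlN
          have hrjl : r j ≤ r l := hdec l j hl.le hjN
          refine ih l hl (lt_trans hl hj) ?_
          apply homothety_mem_closedBall _ h1δ hrl.le
          rw [dist_pi_le_iff (by positivity)]
          intro i
          have hz1 : dist (z i) (c j i) ≤ r j :=
            le_trans (dist_le_pi_dist z (c j) i) hz
          have hz2 : dist (z i) (c l i) ≤ r l :=
            le_trans (dist_le_pi_dist z (c l) i) hzl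
          rw [Real.dist_eq] at hz1 hz2 ⊢
          have hxi : x i = c j i + (1 + δ) * (z i - c j i) := by
            rw [← hxeq]; simp [smul_eq_mul]
          rw [hxi]
          have heq : c j i + (1 + δ) * (z i - c j i) - c l i
              = (z i - c l i) + δ * (z i - c j i) := by ring
          rw [heq]
          calc |(z i - c l i) + δ * (z i - c j i)|
              ≤ |z i - c l i| + |δ * (z i - c j i)| := abs_add_le _ _
            _ ≤ r l + δ * r j := by
                rw [abs_mul, abs_of_pos hδ0]
                exact add_le_add hz2 (mul_le_mul_of_nonneg_left hz1 hδ0.le)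
            _ ≤ (1 + δ) * r l := by nlinarith
        · exact mem_iUnion₂.mpr ⟨j, Finset.mem_range.mpr hj, ⟨z, ⟨hz, hmem⟩, hxeq⟩⟩
    exact key j hj hxj
  · refine iUnion₂_mono fun j _ => ?_
    exact image_mono diff_subset
end

section
/- There is a constant C_n depending only on n such that for any finite collection {Q_j}_{j=0}^N of axis-parallel cubes in ℝ^n and any δ ∈ (0,1), the Lebesgue measure of (∪_j (1+δ)Q_j) \ (∪_j Q_j) is at most C_n δ times the Lebesgue measure of ∪_j Q_j. -/
open MeasureTheory Metric Set
open scoped ENNReal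

lemma one_dim_enlarge (a r : ℕ → ℝ) (l : ℝ) (hl : 1 ≤ l) :
    ∀ G : Finset ℕ, (∀ j ∈ G, 0 ≤ r j) →
      volume (⋃ j ∈ G, Icc (a j - l * r j) (a j + l * r j)) ≤
        ENNReal.ofReal l * volume (⋃ j ∈ G, Icc (a j - r j) (a j + r j)) := by
  classical
  intro G
  induction G using Finset.strongInduction with
  | _ G IH =>
    intro hr
    rcases G.eq_empty_or_nonempty with rfl | hG
    · simp
    by_cases hsep : ∃ G₁ : Finset ℕ, G₁ ⊆ G ∧ G₁.Nonempty ∧ (G \ G₁).Nonempty ∧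
        Disjoint (⋃ j ∈ G₁, Icc (a j - r j) (a j + r j))
          (⋃ j ∈ G \ G₁, Icc (a j - r j) (a j + r j))
    · obtain ⟨G₁, hsub, h1, h2, hdisj⟩ := hsep
      have hG1 : G₁ ⊂ G := by
        refine hsub.ssubset_of_ne ?_
        rintro rfl
        simp at h2
      have hG2 : G \ G₁ ⊂ G := by
        refine (Finset.sdiff_subset).ssubset_of_ne ?_
        intro h
        obtain ⟨x, hx⟩ := h1
        have hx2 : x ∈ G \ G₁ := by rw [h]; exact hsub hx
        simp [hx] at hx2
      have hGsplit : G₁ ∪ (G \ G₁) = G := Finset.union_sdiff_of_subset hsub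
      have hmeas : ∀ H : Finset ℕ, MeasurableSet (⋃ j ∈ H, Icc (a j - r j) (a j + r j)) :=
        fun H => H.measurableSet_biUnion fun j _ => measurableSet_Icc
      calc volume (⋃ j ∈ G, Icc (a j - l * r j) (a j + l * r j))
          = volume ((⋃ j ∈ G₁, Icc (a j - l * r j) (a j + l * r j)) ∪
              (⋃ j ∈ G \ G₁, Icc (a j - l * r j) (a j + l * r j))) := by
            rw [← Finset.set_biUnion_union, hGsplit]
        _ ≤ volume (⋃ j ∈ G₁, Icc (a j - l * r j) (a j + l * r j)) +
            volume (⋃ j ∈ G \ G₁, Icc (a j - l * r j) (a j + l * r j)) := measure_union_le _ _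
        _ ≤ ENNReal.ofReal l * volume (⋃ j ∈ G₁, Icc (a j - r j) (a j + r j)) +
            ENNReal.ofReal l * volume (⋃ j ∈ G \ G₁, Icc (a j - r j) (a j + r j)) := by
            gcongr
            · exact IH _ hG1 fun j hj => hr j (hsub hj)
            · exact IH _ hG2 fun j hj => hr j (Finset.mem_sdiff.mp hj).1
        _ = ENNReal.ofReal l * (volume (⋃ j ∈ G₁, Icc (a j - r j) (a j + r j)) +
            volume (⋃ j ∈ G \ G₁, Icc (a j - r j) (a j + r j))) := by ring
        _ = ENNReal.ofReal l * volume (⋃ j ∈ G, Icc (a j - r j) (a j + r j)) := by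
            rw [← measure_union hdisj (hmeas _), ← Finset.set_biUnion_union, hGsplit]
    · -- connected case
      set a0 := G.inf' hG (fun j => a j - r j) with ha0
      set b0 := G.sup' hG (fun j => a j + r j) with hb0
      have hab : a0 ≤ b0 := by
        obtain ⟨j, hj⟩ := hG
        calc a0 ≤ a j - r j := Finset.inf'_le (fun j => a j - r j) hj
          _ ≤ a j + r j := by have := hr j hj; linarith
          _ ≤ b0 := Finset.le_sup' (fun j => a j + r j) hj
      have hcover : (⋃ j ∈ G, Icc (a j - r j) (a j + r j)) = Icc a0 b0 := by
        apply Set.Subset.antisymm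
        · refine Set.iUnion₂_subset fun j hj => Icc_subset_Icc (Finset.inf'_le (fun j => a j - r j) hj)
            (Finset.le_sup' (fun j => a j + r j) hj)
        · by_contra hcon
          rw [Set.not_subset] at hcon
          obtain ⟨x, hx, hxn⟩ := hcon
          have hxI : ∀ j ∈ G, x ∉ Icc (a j - r j) (a j + r j) := by
            intro j hj hmem
            exact hxn (Set.mem_biUnion hj hmem)
          apply hsep
          refine ⟨G.filter (fun j => a j + r j < x), Finset.filter_subset _ _, ?_, ?_, ?_⟩
          · obtain ⟨j0, hj0, hj0e⟩ := G.exists_mem_eq_inf' hG (fun j => a j - r j)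
            refine ⟨j0, Finset.mem_filter.mpr ⟨hj0, ?_⟩⟩
            by_contra hlt
            push_neg at hlt
            have hax := hx.1
            rw [ha0, hj0e] at hax
            exact hxI j0 hj0 ⟨hax, hlt⟩
          · obtain ⟨j1, hj1, hj1e⟩ := G.exists_mem_eq_sup' hG (fun j => a j + r j)
            refine ⟨j1, Finset.mem_sdiff.mpr ⟨hj1, ?_⟩⟩
            simp only [Finset.mem_filter, not_and, not_lt]
            intro _
            have hbx := hx.2
            rw [hb0, hj1e] at hbx
            exact hbx
          · have hL : (⋃ j ∈ G.filter (fun j => a j + r j < x), Icc (a j - r j) (a j + r j))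
                ⊆ Iio x := by
              refine Set.iUnion₂_subset fun j hj => ?_
              have := (Finset.mem_filter.mp hj).2
              exact fun y hy => lt_of_le_of_lt hy.2 this
            have hR : (⋃ j ∈ G \ G.filter (fun j => a j + r j < x),
                Icc (a j - r j) (a j + r j)) ⊆ Ioi x := by
              refine Set.iUnion₂_subset fun j hj => ?_
              obtain ⟨hjG, hjn⟩ := Finset.mem_sdiff.mp hj
              simp only [Finset.mem_filter, not_and, not_lt] at hjn
              have hxb : x ≤ a j + r j := hjn hjG
              have : x < a j - r j := by
                by_contra hge
                push_neg at hge
                exact hxI j hjG ⟨hge, hxb⟩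
              exact fun y hy => lt_of_lt_of_le this hy.1
            exact Set.disjoint_of_subset hL hR ((Set.Iio_disjoint_Ici le_rfl).mono_right Set.Ioi_subset_Ici_self)
      have hsubL : (⋃ j ∈ G, Icc (a j - l * r j) (a j + l * r j)) ⊆
          Icc (a0 - (l - 1) * (b0 - a0) / 2) (b0 + (l - 1) * (b0 - a0) / 2) := by
        refine Set.iUnion₂_subset fun j hj => ?_
        have h1 : a0 ≤ a j - r j := Finset.inf'_le (fun j => a j - r j) hj
        have h2 : a j + r j ≤ b0 := Finset.le_sup' (fun j => a j + r j) hj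
        have h3 : 0 ≤ r j := hr j hj
        refine Icc_subset_Icc ?_ ?_ <;> nlinarith
      calc volume (⋃ j ∈ G, Icc (a j - l * r j) (a j + l * r j))
          ≤ volume (Icc (a0 - (l - 1) * (b0 - a0) / 2) (b0 + (l - 1) * (b0 - a0) / 2)) :=
            measure_mono hsubL
        _ = ENNReal.ofReal (l * (b0 - a0)) := by
            rw [Real.volume_Icc]
            congr 1
            ring
        _ = ENNReal.ofReal l * volume (Icc a0 b0) := by
            rw [Real.volume_Icc, ← ENNReal.ofReal_mul (by linarith)]
        _ = ENNReal.ofReal l * volume (⋃ j ∈ G, Icc (a j - r j) (a j + r j)) := by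
            rw [hcover]

lemma box_enlarge : ∀ (n : ℕ) (F : Finset ℕ) (c ρ : ℕ → Fin n → ℝ),
    (∀ j ∈ F, ∀ i, 0 ≤ ρ j i) → ∀ l : ℝ, 1 ≤ l →
    volume (⋃ j ∈ F, Set.pi univ fun i => Icc (c j i - l * ρ j i) (c j i + l * ρ j i)) ≤
      ENNReal.ofReal (l ^ n) *
        volume (⋃ j ∈ F, Set.pi univ fun i => Icc (c j i - ρ j i) (c j i + ρ j i)) := by
  intro n
  induction n with
  | zero =>
    intro F c ρ hρ l hl
    have hpi : ∀ (t : Fin 0 → Set ℝ), Set.pi univ t = univ := fun t => by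
      ext x; simp
    simp only [hpi, pow_zero, ENNReal.ofReal_one, one_mul, le_refl]
  | succ n IH =>
    intro F c ρ hρ l hl
    classical
    have hl0 : (0:ℝ) ≤ l := by linarith
    set e := MeasurableEquiv.piFinSuccAbove (fun _ : Fin (n+1) => ℝ) 0 with he_def
    have he : MeasurePreserving e volume volume :=
      volume_preserving_piFinSuccAbove (fun _ : Fin (n+1) => ℝ) 0
    set I : ℝ → ℕ → Set ℝ :=
      fun t j => Icc (c j 0 - t * ρ j 0) (c j 0 + t * ρ j 0) with hI
    set B : ℝ → ℕ → Set (Fin n → ℝ) :=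
      fun t j => Set.pi univ fun i => Icc (c j i.succ - t * ρ j i.succ)
        (c j i.succ + t * ρ j i.succ) with hB
    have hmeasB : ∀ (t : ℝ) (j : ℕ), MeasurableSet (B t j) :=
      fun t j => MeasurableSet.univ_pi fun i => measurableSet_Icc
    have hmeasU : ∀ t s : ℝ, MeasurableSet (⋃ j ∈ F, I t j ×ˢ B s j) :=
      fun t s => F.measurableSet_biUnion fun j _ => measurableSet_Icc.prod (hmeasB s j)
    -- preimage identity
    have hpre : ∀ t : ℝ,
        e ⁻¹' (⋃ j ∈ F, I t j ×ˢ B t j) =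
          ⋃ j ∈ F, Set.pi univ fun i : Fin (n+1) =>
            Icc (c j i - t * ρ j i) (c j i + t * ρ j i) := by
      intro t
      rw [Set.preimage_iUnion₂]
      refine Set.iUnion₂_congr fun j hj => ?_
      ext x
      simp only [he_def, Set.mem_preimage, MeasurableEquiv.piFinSuccAbove_apply,
        Fin.insertNthEquiv_symm_apply, Fin.removeNth,
        Set.mem_prod, Set.mem_pi, Set.mem_univ, true_implies, hI, hB,
        Fin.zero_succAbove, Set.mem_Icc]
      rw [Fin.forall_fin_succ]
    have hvol : ∀ t : ℝ,
        volume (⋃ j ∈ F, Set.pi univ fun i : Fin (n+1) =>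
            Icc (c j i - t * ρ j i) (c j i + t * ρ j i)) =
          volume (⋃ j ∈ F, I t j ×ˢ B t j) := by
      intro t
      rw [← hpre t]
      exact he.measure_preimage (hmeasU t t).nullMeasurableSet
    have hslice1 : ∀ (t s x : ℝ),
        Prod.mk x ⁻¹' (⋃ j ∈ F, I t j ×ˢ B s j) =
          ⋃ j ∈ F.filter (fun j => x ∈ I t j), B s j := by
      intro t s x
      ext y
      simp only [Set.preimage_iUnion₂, Set.mem_iUnion, Finset.mem_filter,
        Set.mem_preimage, Set.mem_prod]
      constructor
      · rintro ⟨j, hj, hx, hy⟩; exact ⟨j, ⟨hj, hx⟩, hy⟩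
      · rintro ⟨j, ⟨hj, hx⟩, hy⟩; exact ⟨j, hj, hx, hy⟩
    have hslice2 : ∀ (t : ℝ) (y : Fin n → ℝ),
        (fun x => (x, y)) ⁻¹' (⋃ j ∈ F, I t j ×ˢ B 1 j) =
          ⋃ j ∈ F.filter (fun j => y ∈ B 1 j), I t j := by
      intro t y
      ext x
      simp only [Set.preimage_iUnion₂, Set.mem_iUnion, Finset.mem_filter,
        Set.mem_preimage, Set.mem_prod]
      constructor
      · rintro ⟨j, hj, hx, hy⟩; exact ⟨j, ⟨hj, hy⟩, hx⟩
      · rintro ⟨j, ⟨hj, hy⟩, hx⟩; exact ⟨j, hj, hx, hy⟩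
    have honeB : ∀ j : ℕ, (Set.pi univ fun i : Fin n =>
        Icc (c j i.succ - ρ j i.succ) (c j i.succ + ρ j i.succ)) = B 1 j := by
      intro j; simp [hB]
    have hone : (⋃ j ∈ F, Set.pi univ fun i : Fin (n+1) =>
        Icc (c j i - ρ j i) (c j i + ρ j i)) =
        ⋃ j ∈ F, Set.pi univ fun i : Fin (n+1) =>
          Icc (c j i - 1 * ρ j i) (c j i + 1 * ρ j i) := by
      simp
    rw [hone, hvol l, hvol 1]
    have step2 : volume (⋃ j ∈ F, I l j ×ˢ B 1 j) ≤
        ENNReal.ofReal l * volume (⋃ j ∈ F, I 1 j ×ˢ B 1 j) := by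
      rw [Measure.volume_eq_prod, Measure.prod_apply_symm (hmeasU l 1),
        Measure.prod_apply_symm (hmeasU 1 1)]
      simp only [hslice2]
      rw [← lintegral_const_mul' _ _ ENNReal.ofReal_ne_top]
      refine lintegral_mono fun y => ?_
      have h1d := one_dim_enlarge (fun j => c j 0) (fun j => ρ j 0) l hl
        (F.filter (fun j => y ∈ B 1 j))
        (fun j hj => hρ j (Finset.mem_filter.mp hj).1 0)
      simp only [hI, one_mul]
      simpa using h1d
    calc volume (⋃ j ∈ F, I l j ×ˢ B l j)
        = ∫⁻ x, volume (⋃ j ∈ F.filter (fun j => x ∈ I l j), B l j) := by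
          rw [Measure.volume_eq_prod, Measure.prod_apply (hmeasU l l)]
          simp only [hslice1]
      _ ≤ ∫⁻ x, ENNReal.ofReal (l ^ n) *
            volume (⋃ j ∈ F.filter (fun j => x ∈ I l j), B 1 j) := by
          refine lintegral_mono fun x => ?_
          have hIH := IH (F.filter (fun j => x ∈ I l j)) (fun j i => c j i.succ)
            (fun j i => ρ j i.succ)
            (fun j hj i => hρ j (Finset.mem_filter.mp hj).1 i.succ) l hl
          simp only [honeB] at hIH
          exact hIH
      _ = ENNReal.ofReal (l ^ n) * volume (⋃ j ∈ F, I l j ×ˢ B 1 j) := by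
          rw [lintegral_const_mul' _ _ ENNReal.ofReal_ne_top]
          congr 1
          rw [Measure.volume_eq_prod, Measure.prod_apply (hmeasU l 1)]
          simp only [hslice1]
      _ ≤ ENNReal.ofReal (l ^ n) * (ENNReal.ofReal l *
            volume (⋃ j ∈ F, I 1 j ×ˢ B 1 j)) := by gcongr
      _ = ENNReal.ofReal (l ^ (n + 1)) * volume (⋃ j ∈ F, I 1 j ×ˢ B 1 j) := by
          rw [← mul_assoc, ← ENNReal.ofReal_mul (pow_nonneg hl0 n), ← pow_succ]

lemma pow_one_add_le (δ : ℝ) (h0 : 0 ≤ δ) (h1 : δ ≤ 1) :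
    ∀ n : ℕ, (1 + δ) ^ n ≤ 1 + ((2:ℝ) ^ n - 1) * δ := by
  intro n
  induction n with
  | zero => simp
  | succ n ih =>
    rw [pow_succ, pow_succ]
    have h2 : (1:ℝ) ≤ 2 ^ n := one_le_pow₀ (by norm_num)
    have key := mul_le_mul_of_nonneg_right ih (by linarith : (0:ℝ) ≤ 1 + δ)
    nlinarith [mul_nonneg (mul_nonneg (by linarith : (0:ℝ) ≤ 2 ^ n - 1) h0) (by linarith : (0:ℝ) ≤ 1 - δ)]

/-- There is a dimensional constant C_n such that for any finite collection of axis-parallel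
cubes (closed balls in the sup metric on ℝⁿ) and any δ ∈ (0,1), the Lebesgue measure of
(⋃ (1+δ)Q_j) \ (⋃ Q_j) is at most C_n δ times the Lebesgue measure of ⋃ Q_j. -/
theorem enlargement_estimate_lebesgue (n : ℕ) :
    ∃ C : ℝ, 0 < C ∧
      ∀ (N : ℕ) (c : ℕ → (Fin n → ℝ)) (r : ℕ → ℝ), (∀ j ≤ N, 0 < r j) →
        ∀ δ : ℝ, 0 < δ → δ < 1 →
          volume ((⋃ j ∈ Finset.range (N + 1), closedBall (c j) ((1 + δ) * r j)) \
              ⋃ j ∈ Finset.range (N + 1), closedBall (c j) (r j)) ≤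
            ENNReal.ofReal (C * δ) *
              volume (⋃ j ∈ Finset.range (N + 1), closedBall (c j) (r j)) := by
  refine ⟨2 ^ n, by positivity, ?_⟩
  intro N c r hr δ hδ0 hδ1
  have hrpos : ∀ j ∈ Finset.range (N + 1), 0 < r j :=
    fun j hj => hr j (Finset.mem_range_succ_iff.mp hj)
  set U := ⋃ j ∈ Finset.range (N + 1), closedBall (c j) (r j) with hU
  set V := ⋃ j ∈ Finset.range (N + 1), closedBall (c j) ((1 + δ) * r j) with hV
  have hUeq : U = ⋃ j ∈ Finset.range (N + 1),
      Set.pi univ fun i : Fin n => Icc (c j i - r j) (c j i + r j) := by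
    refine Set.iUnion₂_congr fun j hj => ?_
    rw [closedBall_pi _ (hrpos j hj).le]
    simp only [Real.closedBall_eq_Icc]
  have hVeq : V = ⋃ j ∈ Finset.range (N + 1),
      Set.pi univ fun i : Fin n => Icc (c j i - (1 + δ) * r j) (c j i + (1 + δ) * r j) := by
    refine Set.iUnion₂_congr fun j hj => ?_
    rw [closedBall_pi _ (by nlinarith [(hrpos j hj)] : (0:ℝ) ≤ (1 + δ) * r j)]
    simp only [Real.closedBall_eq_Icc]
  have hbox : volume V ≤ ENNReal.ofReal ((1 + δ) ^ n) * volume U := by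
    rw [hUeq, hVeq]
    exact box_enlarge n (Finset.range (N + 1)) c (fun j _ => r j)
      (fun j hj i => (hrpos j hj).le) (1 + δ) (by linarith)
  have hUV : U ⊆ V := by
    refine Set.iUnion₂_mono fun j hj => ?_
    exact closedBall_subset_closedBall (by nlinarith [(hrpos j hj)])
  have hUmeas : MeasurableSet U :=
    (Finset.range (N + 1)).measurableSet_biUnion fun j _ => measurableSet_closedBall
  have hUfin : volume U ≠ ⊤ := by
    refine ne_of_lt (lt_of_le_of_lt (measure_biUnion_finset_le _ _) ?_)
    exact ENNReal.sum_lt_top.mpr fun j _ => (isCompact_closedBall _ _).measure_lt_top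
  rw [measure_diff hUV hUmeas.nullMeasurableSet hUfin, tsub_le_iff_right]
  calc volume V ≤ ENNReal.ofReal ((1 + δ) ^ n) * volume U := hbox
    _ ≤ (ENNReal.ofReal ((2:ℝ) ^ n * δ) + 1) * volume U := by
        gcongr
        have h1 : (1 + δ) ^ n ≤ 1 + ((2:ℝ) ^ n - 1) * δ := pow_one_add_le δ hδ0.le hδ1.le n
        have h2 : (1:ℝ) + ((2:ℝ) ^ n - 1) * δ ≤ (2:ℝ) ^ n * δ + 1 := by nlinarith
        calc ENNReal.ofReal ((1 + δ) ^ n) ≤ ENNReal.ofReal ((2:ℝ) ^ n * δ + 1) :=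
              ENNReal.ofReal_le_ofReal (le_trans h1 h2)
          _ = ENNReal.ofReal ((2:ℝ) ^ n * δ) + 1 := by
              rw [ENNReal.ofReal_add (by positivity) (by norm_num), ENNReal.ofReal_one]
    _ = ENNReal.ofReal ((2:ℝ) ^ n * δ) * volume U + volume U := by
        rw [add_mul, one_mul]
end

section
/- Let {Q_j}_{j=0}^N be a satellite configuration of cubes with center Q_0, i.e., each Q_j intersects Q_0 and has sidelength at most that of Q_0. Then for all δ ∈ (0,1), |(∪_j (1+δ)Q_j) \ (∪_j Q_j)| ≤ C_n δ |Q_0|, where C_n depends only on the dimension n. In particular ∪_j Q_j ⊆ 3Q_0 and |∪_j Q_j| ≤ 3^n |Q_0|. -/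
/-!
On the line, enlarging intervals `[a_j, b_j]` only creates gaps right after the right ends `v` of
the maximal stretches `[·, v]` of their union `U` (and, symmetrically, before the left ends). The
gap after `v` has length at most `δ/2` times the longest interval whose stretch ends at `v`, and
these longest intervals, prolonged up to their `v`, are disjoint subsets of `U`; hence the new part
has measure at most `δ |U|`. In `ℝⁿ⁺¹ = ℝ × ℝⁿ`, enlarge the first coordinate and then the
remaining ones; slicing with Fubini, the two steps cost `δ` and (by induction) `n δ` times the
measure of the union of the enlarged cubes. For a satellite configuration with `δ < 1` the enlarged
cubes lie in `4Q₀`, which gives `C_n = (n + 1) 4ⁿ`.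
-/

open MeasureTheory Metric Set
open scoped ENNReal Pointwise

noncomputable def rightReach (U : Set ℝ) (x : ℝ) : ℝ := sSup {t | Icc x t ⊆ U}

section rightReach

variable {U : Set ℝ} {x t : ℝ}

lemma bddAbove_setOf_Icc_subset (hU : BddAbove U) (x : ℝ) : BddAbove {t | Icc x t ⊆ U} := by
  obtain ⟨M, hM⟩ := hU
  refine ⟨max x M, fun t ht => ?_⟩
  rcases le_or_gt t x with h | h
  · exact le_max_of_le_left h
  · exact le_max_of_le_right (hM (ht ⟨h.le, le_rfl⟩))

lemma le_rightReach (hU : BddAbove U) (h : Icc x t ⊆ U) : t ≤ rightReach U x :=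
  le_csSup (bddAbove_setOf_Icc_subset hU x) h

lemma self_le_rightReach (hU : BddAbove U) (hx : x ∈ U) : x ≤ rightReach U x :=
  le_rightReach hU (by simpa using hx)

lemma Icc_rightReach_subset (hc : IsClosed U) (hb : BddAbove U) (hx : x ∈ U) :
    Icc x (rightReach U x) ⊆ U := by
  have hIco : Ico x (rightReach U x) ⊆ U := fun s hs => by
    obtain ⟨t, ht, hst⟩ := exists_lt_of_lt_csSup ⟨x, by simpa using hx⟩ hs.2
    exact ht ⟨hs.1, hst.le⟩
  rcases (self_le_rightReach hb hx).eq_or_lt with h | h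
  · simpa [← h] using hx
  · rw [← closure_Ico h.ne]
    exact hc.closure_subset_iff.2 hIco

variable {a b a' b' : ℝ}

lemma Icc_rightReach_subset_of_Icc_subset (hc : IsClosed U) (hb : BddAbove U) (hab : a ≤ b)
    (h : Icc a b ⊆ U) : Icc a (rightReach U b) ⊆ U := by
  intro s hs
  rcases le_total s b with hsb | hbs
  · exact h ⟨hs.1, hsb⟩
  · exact Icc_rightReach_subset hc hb (h ⟨hab, le_rfl⟩) ⟨hbs, hs.2⟩

lemma Icc_diff_subset_Ioc_rightReach (hc : IsClosed U) (hb : BddAbove U) (hb' : b ∈ U) (e : ℝ) :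
    Icc b (b + e) \ U ⊆ Ioc (rightReach U b) (b + e) := fun _ ⟨hs, hsU⟩ =>
  ⟨not_le.1 fun h => hsU (Icc_rightReach_subset hc hb hb' ⟨hs.1, h⟩), hs.2⟩

lemma disjoint_Icc_rightReach (hc : IsClosed U) (hb : BddAbove U) (hab : a ≤ b) (h : Icc a b ⊆ U)
    (hab' : a' ≤ b') (h' : Icc a' b' ⊆ U) (hlt : rightReach U b < rightReach U b') :
    Disjoint (Icc a (rightReach U b)) (Icc a' (rightReach U b')) := by
  refine Set.disjoint_left.2 fun x hx hx' => hlt.not_ge (le_rightReach hb fun s hs => ?_)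
  rcases le_total s (rightReach U b) with hs' | hs'
  · exact Icc_rightReach_subset hc hb (h ⟨hab, le_rfl⟩) ⟨hs.1, hs'⟩
  · exact Icc_rightReach_subset_of_Icc_subset hc hb hab' h' ⟨hx'.1.trans (hx.2.trans hs'), hs.2⟩

end rightReach

lemma Finset.exists_subset_injOn_maximal_in_fibers {ι β γ : Type*} [DecidableEq β] [LinearOrder γ]
    (F : Finset ι) (f : ι → β) (w : ι → γ) :
    ∃ G ⊆ F, InjOn f G ∧ ∀ j ∈ F, ∃ k ∈ G, f k = f j ∧ w j ≤ w k := by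
  classical
  have hfiber : ∀ v : F.image f, ∃ k ∈ F, f k = v ∧ ∀ j ∈ F, f j = v → w j ≤ w k := by
    rintro ⟨v, hv⟩
    obtain ⟨j, hj, rfl⟩ := Finset.mem_image.1 hv
    obtain ⟨k, hk, hmax⟩ := Finset.exists_max_image (F.filter (f · = f j)) w
      ⟨j, Finset.mem_filter.2 ⟨hj, rfl⟩⟩
    exact ⟨k, (Finset.mem_filter.1 hk).1, (Finset.mem_filter.1 hk).2,
      fun i hi hiv => hmax i (Finset.mem_filter.2 ⟨hi, hiv⟩)⟩
  choose g hgF hgf hgmax using hfiber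
  refine ⟨Finset.univ.image g, ?_, ?_, fun j hj => ?_⟩
  · intro k hk
    obtain ⟨v, -, rfl⟩ := Finset.mem_image.1 hk
    exact hgF v
  · rintro _ hk _ hk' heq
    obtain ⟨v, -, rfl⟩ := Finset.mem_image.1 hk
    obtain ⟨v', -, rfl⟩ := Finset.mem_image.1 hk'
    rw [hgf, hgf] at heq
    rw [Subtype.ext heq]
  · let v : F.image f := ⟨f j, Finset.mem_image_of_mem f hj⟩
    exact ⟨g v, Finset.mem_image_of_mem g (Finset.mem_univ v), hgf v, hgmax v j hj rfl⟩

section Intervals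

variable {ι : Type*} {U : Set ℝ} {a b : ι → ℝ}

lemma pairwiseDisjoint_Icc_rightReach (hc : IsClosed U) (hb : BddAbove U) {G : Set ι}
    (hab : ∀ j ∈ G, a j ≤ b j) (hU : ∀ j ∈ G, Icc (a j) (b j) ⊆ U)
    (hinj : InjOn (fun j => rightReach U (b j)) G) :
    G.PairwiseDisjoint fun j => Icc (a j) (rightReach U (b j)) := by
  intro j hj k hk hne
  rcases (hinj.ne hj hk hne).lt_or_gt with h | h
  · exact disjoint_Icc_rightReach hc hb (hab j hj) (hU j hj) (hab k hk) (hU k hk) h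
  · exact (disjoint_Icc_rightReach hc hb (hab k hk) (hU k hk) (hab j hj) (hU j hj) h).symm

theorem volume_biUnion_Icc_right_diff_le (hc : IsClosed U) (hb : BddAbove U) (F : Finset ι)
    (hab : ∀ j ∈ F, a j ≤ b j) (hU : ∀ j ∈ F, Icc (a j) (b j) ⊆ U) {ε : ℝ} (hε : 0 ≤ ε) :
    volume ((⋃ j ∈ F, Icc (b j) (b j + ε * (b j - a j))) \ U) ≤ ENNReal.ofReal ε * volume U := by
  classical
  set R : ι → ℝ := fun j => rightReach U (b j)
  -- among the intervals whose stretch in `U` ends at the same point `v`, the longest one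
  -- pays for the whole gap after `v`
  obtain ⟨G, hGF, hinj, hdom⟩ := F.exists_subset_injOn_maximal_in_fibers R (fun j => b j - a j)
  have hbR : ∀ j ∈ F, b j ≤ R j := fun j hj =>
    self_le_rightReach hb (hU j hj ⟨hab j hj, le_rfl⟩)
  have hcover : (⋃ j ∈ F, Icc (b j) (b j + ε * (b j - a j))) \ U ⊆
      ⋃ k ∈ G, Ioc (R k) (R k + ε * (b k - a k)) := by
    simp only [iUnion_sdiff, iUnion_subset_iff]
    intro j hj s hs
    obtain ⟨k, hk, hRk, hlen⟩ := hdom j hj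
    obtain ⟨hRs, hs⟩ := Icc_diff_subset_Ioc_rightReach hc hb (hU j hj ⟨hab j hj, le_rfl⟩) _ hs
    refine mem_biUnion hk ⟨hRk ▸ hRs, hs.trans ?_⟩
    have := mul_le_mul_of_nonneg_left hlen hε
    linarith [hbR j hj]
  have hpay : ∀ k ∈ G, volume (Ioc (R k) (R k + ε * (b k - a k))) ≤
      ENNReal.ofReal ε * volume (Icc (a k) (R k)) := by
    intro k hk
    rw [Real.volume_Ioc, Real.volume_Icc, ← ENNReal.ofReal_mul hε]
    refine ENNReal.ofReal_le_ofReal ?_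
    nlinarith [hbR k (hGF hk)]
  calc volume ((⋃ j ∈ F, Icc (b j) (b j + ε * (b j - a j))) \ U)
      ≤ ∑ k ∈ G, volume (Ioc (R k) (R k + ε * (b k - a k))) :=
        (measure_mono hcover).trans (measure_biUnion_finset_le _ _)
    _ ≤ ∑ k ∈ G, ENNReal.ofReal ε * volume (Icc (a k) (R k)) := Finset.sum_le_sum hpay
    _ = ENNReal.ofReal ε * volume (⋃ k ∈ G, Icc (a k) (R k)) := by
        rw [measure_biUnion_finset (pairwiseDisjoint_Icc_rightReach hc hb
          (fun k hk => hab k (hGF hk)) (fun k hk => hU k (hGF hk)) hinj)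
          fun _ _ => measurableSet_Icc, Finset.mul_sum]
    _ ≤ ENNReal.ofReal ε * volume U := by
        gcongr
        exact iUnion₂_subset fun k hk =>
          Icc_rightReach_subset_of_Icc_subset hc hb (hab k (hGF hk)) (hU k (hGF hk))

theorem volume_biUnion_Icc_left_diff_le (hc : IsClosed U) (hb : BddBelow U) (F : Finset ι)
    (hab : ∀ j ∈ F, a j ≤ b j) (hU : ∀ j ∈ F, Icc (a j) (b j) ⊆ U) {ε : ℝ} (hε : 0 ≤ ε) :
    volume ((⋃ j ∈ F, Icc (a j - ε * (b j - a j)) (a j)) \ U) ≤ ENNReal.ofReal ε * volume U := by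
  have h := volume_biUnion_Icc_right_diff_le (U := -U) (a := -b) (b := -a) hc.neg
    (bddAbove_neg.2 hb) F (fun j hj => neg_le_neg (hab j hj))
    (fun j hj => by simpa [← neg_Icc] using hU j hj) hε
  rw [Measure.measure_neg] at h
  convert h using 1
  rw [← Measure.measure_neg]
  congr 1
  ext x
  simp only [Pi.neg_apply, mem_neg, mem_sdiff, mem_iUnion, mem_Icc, exists_prop]
  refine and_congr_left' (exists_congr fun j => and_congr_right fun _ => ?_)
  constructor <;> rintro ⟨h₁, h₂⟩ <;> constructor <;> linarith

end Intervals

theorem Real.volume_biUnion_closedBall_enlarge_diff_le {ι : Type*} (F : Finset ι) (c r : ι → ℝ)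
    (hr : ∀ j ∈ F, 0 ≤ r j) {δ : ℝ} (hδ : 0 ≤ δ) :
    volume ((⋃ j ∈ F, closedBall (c j) ((1 + δ) * r j)) \ ⋃ j ∈ F, closedBall (c j) (r j)) ≤
      ENNReal.ofReal δ * volume (⋃ j ∈ F, closedBall (c j) (r j)) := by
  set U := ⋃ j ∈ F, Icc (c j - r j) (c j + r j)
  have hUeq : ⋃ j ∈ F, closedBall (c j) (r j) = U := by simp only [Real.closedBall_eq_Icc, U]
  have hab : ∀ j ∈ F, c j - r j ≤ c j + r j := fun j hj => by linarith [hr j hj]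
  have hsub : ∀ j ∈ F, Icc (c j - r j) (c j + r j) ⊆ U := fun j hj _ hx => mem_biUnion hj hx
  have hε : 0 ≤ δ / 2 := by positivity
  have hcover : (⋃ j ∈ F, closedBall (c j) ((1 + δ) * r j)) \ U ⊆
      ((⋃ j ∈ F, Icc (c j - r j - δ / 2 * ((c j + r j) - (c j - r j))) (c j - r j)) \ U) ∪
      ((⋃ j ∈ F, Icc (c j + r j) (c j + r j + δ / 2 * ((c j + r j) - (c j - r j)))) \ U) := by
    rintro x ⟨hx, hxU⟩
    obtain ⟨j, hj, hxj⟩ := mem_iUnion₂.1 hx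
    rw [Real.closedBall_eq_Icc, mem_Icc] at hxj
    rcases lt_or_ge x (c j - r j) with h | h
    · exact Or.inl ⟨mem_biUnion hj ⟨by linarith, h.le⟩, hxU⟩
    rcases le_or_gt x (c j + r j) with h' | h'
    · exact absurd (hsub j hj ⟨h, h'⟩) hxU
    · exact Or.inr ⟨mem_biUnion hj ⟨h'.le, by linarith⟩, hxU⟩
  rw [hUeq]
  calc _ ≤ _ := measure_mono hcover
    _ ≤ _ := measure_union_le _ _
    _ ≤ ENNReal.ofReal (δ / 2) * volume U + ENNReal.ofReal (δ / 2) * volume U := by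
        gcongr
        · exact volume_biUnion_Icc_left_diff_le (isClosed_biUnion_finset fun _ _ => isClosed_Icc)
            (F.finite_toSet.bddBelow_biUnion.2 fun _ _ => bddBelow_Icc) F hab hsub hε
        · exact volume_biUnion_Icc_right_diff_le (isClosed_biUnion_finset fun _ _ => isClosed_Icc)
            (F.finite_toSet.bddAbove_biUnion.2 fun _ _ => bddAbove_Icc) F hab hsub hε
    _ = ENNReal.ofReal δ * volume U := by
        rw [← add_mul, ← ENNReal.ofReal_add hε hε, add_halves]

namespace MeasureTheory.Measure

variable {X Y : Type*} [MeasurableSpace X] [MeasurableSpace Y] {μ : Measure X} {ν : Measure Y}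
  [SFinite ν] {s t : Set (X × Y)} {C : ℝ≥0∞}

lemma prod_apply_le_of_forall_mk_preimage_le (hs : MeasurableSet s) (ht : MeasurableSet t)
    (h : ∀ x, ν (Prod.mk x ⁻¹' s) ≤ C * ν (Prod.mk x ⁻¹' t)) :
    μ.prod ν s ≤ C * μ.prod ν t := by
  rw [prod_apply hs, prod_apply ht, ← lintegral_const_mul _ (measurable_measure_prodMk_left ht)]
  exact lintegral_mono h

lemma prod_apply_le_of_forall_mk_preimage_le' [SFinite μ] (hs : MeasurableSet s)
    (ht : MeasurableSet t)
    (h : ∀ y, μ ((·, y) ⁻¹' s) ≤ C * μ ((·, y) ⁻¹' t)) :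
    μ.prod ν s ≤ C * μ.prod ν t := by
  rw [prod_apply_symm hs, prod_apply_symm ht,
    ← lintegral_const_mul _ (measurable_measure_prodMk_right ht)]
  exact lintegral_mono h

theorem prod_biUnion_prod_diff_le {ι : Type*} [SFinite μ] (F : Finset ι) {I I' : ι → Set X}
    {B B' : ι → Set Y} (hI : ∀ j, MeasurableSet (I j)) (hI' : ∀ j, MeasurableSet (I' j))
    (hB : ∀ j, MeasurableSet (B j)) (hB' : ∀ j, MeasurableSet (B' j))
    (hBB' : ∀ j ∈ F, B j ⊆ B' j) {α β : ℝ≥0∞}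
    (hα : ∀ G ⊆ F, μ ((⋃ j ∈ G, I' j) \ ⋃ j ∈ G, I j) ≤ α * μ (⋃ j ∈ G, I' j))
    (hβ : ∀ G ⊆ F, ν ((⋃ j ∈ G, B' j) \ ⋃ j ∈ G, B j) ≤ β * ν (⋃ j ∈ G, B' j)) :
    μ.prod ν ((⋃ j ∈ F, I' j ×ˢ B' j) \ ⋃ j ∈ F, I j ×ˢ B j) ≤
      (α + β) * μ.prod ν (⋃ j ∈ F, I' j ×ˢ B' j) := by
  classical
  set M := ⋃ j ∈ F, I' j ×ˢ B j
  have hmeas : ∀ {P : ι → Set X} {Q : ι → Set Y}, (∀ j, MeasurableSet (P j)) →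
      (∀ j, MeasurableSet (Q j)) → MeasurableSet (⋃ j ∈ F, P j ×ˢ Q j) :=
    fun hP hQ => F.measurableSet_biUnion fun j _ => (hP j).prod (hQ j)
  have hleft : ∀ (P : ι → Set X) (Q : ι → Set Y) (x : X),
      Prod.mk x ⁻¹' (⋃ j ∈ F, P j ×ˢ Q j) = ⋃ j ∈ F.filter (x ∈ P ·), Q j := by
    intro P Q x; ext y
    simp only [mem_preimage, mem_iUnion, mem_prod, Finset.mem_filter, exists_prop]; tauto
  have hright : ∀ (P : ι → Set X) (Q : ι → Set Y) (y : Y),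
      (·, y) ⁻¹' (⋃ j ∈ F, P j ×ˢ Q j) = ⋃ j ∈ F.filter (y ∈ Q ·), P j := by
    intro P Q y; ext x
    simp only [mem_preimage, mem_iUnion, mem_prod, Finset.mem_filter, exists_prop]; tauto
  have hM : M ⊆ ⋃ j ∈ F, I' j ×ˢ B' j :=
    iUnion₂_mono fun j hj => Set.prod_mono le_rfl (hBB' j hj)
  calc _ ≤ μ.prod ν (((⋃ j ∈ F, I' j ×ˢ B' j) \ M) ∪ (M \ ⋃ j ∈ F, I j ×ˢ B j)) :=
        measure_mono (sdiff_triangle _ M _)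
    _ ≤ μ.prod ν ((⋃ j ∈ F, I' j ×ˢ B' j) \ M) + μ.prod ν (M \ ⋃ j ∈ F, I j ×ˢ B j) :=
        measure_union_le _ _
    _ ≤ β * μ.prod ν (⋃ j ∈ F, I' j ×ˢ B' j) + α * μ.prod ν M := by
        gcongr
        · refine prod_apply_le_of_forall_mk_preimage_le ((hmeas hI' hB').diff (hmeas hI' hB))
            (hmeas hI' hB') fun x => ?_
          rw [preimage_sdiff, hleft, hleft]
          exact hβ _ (Finset.filter_subset _ _)
        · refine prod_apply_le_of_forall_mk_preimage_le' ((hmeas hI' hB).diff (hmeas hI hB))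
            (hmeas hI' hB) fun y => ?_
          rw [preimage_sdiff, hright, hright]
          exact hα _ (Finset.filter_subset _ _)
    _ ≤ (α + β) * μ.prod ν (⋃ j ∈ F, I' j ×ˢ B' j) := by
        rw [add_comm α, add_mul]
        gcongr

end MeasureTheory.Measure

lemma closedBall_eq_preimage_piFinSuccAbove {n : ℕ} {α : Type*} [PseudoMetricSpace α]
    [MeasurableSpace α] (i : Fin (n + 1)) (x : Fin (n + 1) → α) {r : ℝ} (hr : 0 ≤ r) :
    closedBall x r = MeasurableEquiv.piFinSuccAbove (fun _ => α) i ⁻¹'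
      (closedBall (x i) r ×ˢ closedBall (i.removeNth x) r) := by
  ext y
  simp [mem_closedBall, dist_pi_le_iff hr, Fin.forall_iff_succAbove i, Fin.removeNth]

theorem volume_pi_biUnion_closedBall_enlarge_diff_le {ι : Type*} (n : ℕ) (F : Finset ι)
    (c : ι → Fin n → ℝ) (r : ι → ℝ) (hr : ∀ j ∈ F, 0 ≤ r j) {δ : ℝ} (hδ : 0 ≤ δ) :
    volume ((⋃ j ∈ F, closedBall (c j) ((1 + δ) * r j)) \ ⋃ j ∈ F, closedBall (c j) (r j)) ≤
      n * ENNReal.ofReal δ * volume (⋃ j ∈ F, closedBall (c j) ((1 + δ) * r j)) := by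
  have hr' : ∀ j ∈ F, r j ≤ (1 + δ) * r j := fun j hj =>
    le_mul_of_one_le_left (hr j hj) (by linarith)
  induction n generalizing F with
  | zero =>
    -- in `ℝ⁰` every nonempty cube is the whole space
    rw [sdiff_eq_empty.2, measure_empty]
    · exact zero_le
    refine iUnion₂_subset fun j hj x _ => mem_biUnion hj ?_
    rw [Subsingleton.elim x (c j)]
    exact mem_closedBall_self (hr j hj)
  | succ n ih =>
    set e := MeasurableEquiv.piFinSuccAbove (fun _ : Fin (n + 1) => ℝ) 0
    have he : MeasurePreserving e := volume_preserving_piFinSuccAbove _ 0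
    have hsplit : ∀ ρ : ι → ℝ, (∀ j ∈ F, 0 ≤ ρ j) → ⋃ j ∈ F, closedBall (c j) (ρ j) =
        e ⁻¹' ⋃ j ∈ F, closedBall (c j 0) (ρ j) ×ˢ closedBall (Fin.tail (c j)) (ρ j) := by
      intro ρ hρ
      simp only [preimage_iUnion₂]
      exact iUnion₂_congr fun j hj => closedBall_eq_preimage_piFinSuccAbove 0 (c j) (hρ j hj)
    have hmeas : ∀ ρ : ι → ℝ, MeasurableSet
        (⋃ j ∈ F, closedBall (c j 0) (ρ j) ×ˢ closedBall (Fin.tail (c j)) (ρ j)) := fun ρ =>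
      F.measurableSet_biUnion fun j _ => measurableSet_closedBall.prod measurableSet_closedBall
    have hfirst : ∀ G ⊆ F,
        volume ((⋃ j ∈ G, closedBall (c j 0) ((1 + δ) * r j)) \ ⋃ j ∈ G, closedBall (c j 0) (r j))
          ≤ ENNReal.ofReal δ * volume (⋃ j ∈ G, closedBall (c j 0) ((1 + δ) * r j)) :=
      fun G hG => (Real.volume_biUnion_closedBall_enlarge_diff_le G _ r
        (fun j hj => hr j (hG hj)) hδ).trans (by gcongr with j hj; exact hr' j (hG hj))
    have hrest := fun G (hG : G ⊆ F) =>
      ih G (fun j => Fin.tail (c j)) (fun j hj => hr j (hG hj)) fun j hj => hr' j (hG hj)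
    rw [hsplit _ hr, hsplit _ fun j hj => (hr j hj).trans (hr' j hj), ← preimage_sdiff,
      he.measure_preimage ((hmeas _).diff (hmeas _)).nullMeasurableSet,
      he.measure_preimage (hmeas _).nullMeasurableSet, Measure.volume_eq_prod]
    calc _ ≤ (ENNReal.ofReal δ + n * ENNReal.ofReal δ) * _ :=
          Measure.prod_biUnion_prod_diff_le F (fun _ => measurableSet_closedBall)
            (fun _ => measurableSet_closedBall) (fun _ => measurableSet_closedBall)
            (fun _ => measurableSet_closedBall)
            (fun j hj => closedBall_subset_closedBall (hr' j hj)) hfirst hrest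
      _ = _ := by push_cast; ring

lemma closedBall_subset_closedBall_of_inter_nonempty {X : Type*} [PseudoMetricSpace X] {x y : X}
    {r s t : ℝ} (h : (closedBall x r ∩ closedBall y s).Nonempty) (hrs : r ≤ s) (ht : 0 ≤ t) :
    closedBall x (t * r) ⊆ closedBall y ((t + 2) * s) := by
  obtain ⟨z, hzx, hzy⟩ := h
  rw [mem_closedBall'] at hzx
  rw [mem_closedBall] at hzy
  refine closedBall_subset_closedBall' ?_
  nlinarith [dist_triangle x z y, mul_le_mul_of_nonneg_left hrs ht]

lemma volume_pi_closedBall_mul {n : ℕ} (x : Fin n → ℝ) {k r : ℝ} (hk : 0 ≤ k) (hr : 0 ≤ r) :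
    volume (closedBall x (k * r)) = ENNReal.ofReal (k ^ n) * volume (closedBall x r) := by
  rw [Measure.addHaar_closedBall_mul volume x hk hr, Module.finrank_fin_fun,
    Measure.addHaar_closedBall_center volume x r]

/-- For a satellite configuration of cubes with center Q_0 (each cube meets Q_0 and has
sidelength at most that of Q_0), the Lebesgue measure of (⋃ (1+δ)Q_j) \ (⋃ Q_j) is at most
C_n δ |Q_0|; moreover ⋃ Q_j ⊆ 3Q_0 and |⋃ Q_j| ≤ 3ⁿ |Q_0|. Cubes are closed balls in the
sup metric on ℝⁿ. -/
theorem satellite_enlargement_estimate (n : ℕ) :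
    ∃ C : ℝ, 0 < C ∧
      ∀ (N : ℕ) (c : ℕ → (Fin n → ℝ)) (r : ℕ → ℝ),
        (∀ j ≤ N, 0 < r j) →
        (∀ j ≤ N, (closedBall (c j) (r j) ∩ closedBall (c 0) (r 0)).Nonempty ∧ r j ≤ r 0) →
        (∀ δ : ℝ, 0 < δ → δ < 1 →
          volume ((⋃ j ∈ Finset.range (N + 1), closedBall (c j) ((1 + δ) * r j)) \
              ⋃ j ∈ Finset.range (N + 1), closedBall (c j) (r j)) ≤
            ENNReal.ofReal (C * δ) * volume (closedBall (c 0) (r 0))) ∧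
        (⋃ j ∈ Finset.range (N + 1), closedBall (c j) (r j)) ⊆ closedBall (c 0) (3 * r 0) ∧
        volume (⋃ j ∈ Finset.range (N + 1), closedBall (c j) (r j)) ≤
          (3 : ℝ≥0∞) ^ n * volume (closedBall (c 0) (r 0)) := by
  refine ⟨(n + 1) * 4 ^ n, by positivity, fun N c r hr hsat => ?_⟩
  have hr0 : 0 ≤ r 0 := (hr 0 N.zero_le).le
  have hsub : ∀ t : ℝ, 0 ≤ t → ∀ j ∈ Finset.range (N + 1),
      closedBall (c j) (t * r j) ⊆ closedBall (c 0) ((t + 2) * r 0) := fun t ht j hj =>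
    have hj := hsat j (Finset.mem_range_succ_iff.1 hj)
    closedBall_subset_closedBall_of_inter_nonempty hj.1 hj.2 ht
  have hcube : ⋃ j ∈ Finset.range (N + 1), closedBall (c j) (r j) ⊆ closedBall (c 0) (3 * r 0) :=
    iUnion₂_subset fun j hj => by
      simpa [show (1 + 2 : ℝ) = 3 by norm_num] using hsub 1 zero_le_one j hj
  refine ⟨fun δ hδ hδ1 => ?_, hcube, ?_⟩
  · calc _ ≤ n * ENNReal.ofReal δ *
          volume (⋃ j ∈ Finset.range (N + 1), closedBall (c j) ((1 + δ) * r j)) :=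
          volume_pi_biUnion_closedBall_enlarge_diff_le n _ c r
            (fun j hj => (hr j (Finset.mem_range_succ_iff.1 hj)).le) hδ.le
      _ ≤ n * ENNReal.ofReal δ * volume (closedBall (c 0) (4 * r 0)) := by
          gcongr
          refine iUnion₂_subset fun j hj => (hsub _ (by linarith) j hj).trans ?_
          exact closedBall_subset_closedBall (by nlinarith)
      _ = ENNReal.ofReal (n * 4 ^ n * δ) * volume (closedBall (c 0) (r 0)) := by
          rw [volume_pi_closedBall_mul _ (by norm_num) hr0, ← ENNReal.ofReal_natCast,
            ← ENNReal.ofReal_mul (by positivity), ← mul_assoc,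
            ← ENNReal.ofReal_mul (by positivity)]
          ring_nf
      _ ≤ ENNReal.ofReal ((n + 1) * 4 ^ n * δ) * volume (closedBall (c 0) (r 0)) := by
          gcongr
          linarith
  · calc _ ≤ volume (closedBall (c 0) (3 * r 0)) := measure_mono hcube
      _ = 3 ^ n * volume (closedBall (c 0) (r 0)) := by
          rw [volume_pi_closedBall_mul _ (by norm_num) hr0, ENNReal.ofReal_pow (by norm_num),
            ENNReal.ofReal_ofNat]
end

section
/- Suppose w is a nonnegative locally integrable function on ℝ^n such that there exist constants c_1, c_2 > 1 with w(S)/w(Q) ≤ c_1 (|S|/|Q|)^{1/c_2} for every cube Q and every measurable S ⊆ Q (and w(Q) > 0). Then for every cube Q and measurable S ⊆ Q we have w(S)/w(Q) ≤ e (|S|/|Q|)^{1/(2 c_2 (1 + log c_1))}. -/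
/-!
Put `t := |S|/|Q|`, `L := 1 + log c₁` and `β := 1/(2 c₂ L)`. Where `e t^β ≥ 1` the trivial bound
`w(S) ≤ w(Q)` suffices. Otherwise `u := t^β < 1/e`, and since `t^{1/c₂} = u^{2L}` the hypothesis
gives `c₁ t^{1/c₂} = c₁ u^{2L-1} u ≤ c₁ e^{1-2L} u = u / (e c₁) ≤ e u`.
-/

open MeasureTheory Metric Set
open scoped ENNReal

/-- The measure `w dx` associated to a weight `w` on ℝⁿ. -/
noncomputable def weightMeasure (n : ℕ) (w : (Fin n → ℝ) → ℝ≥0∞) : Measure (Fin n → ℝ) :=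
  MeasureTheory.volume.withDensity w

namespace Real

theorem min_one_mul_rpow_two_mul_one_add_log_le {c u : ℝ} (hc : 1 ≤ c) (hu : 0 ≤ u) :
    min 1 (c * u ^ (2 * (1 + log c))) ≤ exp 1 * u := by
  have hlog : 0 ≤ log c := log_nonneg hc
  rcases le_or_gt (exp (-1)) u with hbig | hsmall
  · refine min_le_of_left_le ?_
    calc (1 : ℝ) = exp 1 * exp (-1) := by rw [← exp_add]; norm_num
      _ ≤ exp 1 * u := by gcongr
  · refine min_le_of_right_le ?_
    have hsplit : u ^ (2 * (1 + log c)) = u ^ (1 + 2 * log c) * u := by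
      rw [← rpow_add_one' hu (by positivity)]; ring_nf
    have hpow : u ^ (1 + 2 * log c) ≤ exp (-1) ^ (1 + 2 * log c) :=
      rpow_le_rpow hu hsmall.le (by positivity)
    have hconst : c * exp (-1) ^ (1 + 2 * log c) ≤ exp 1 := by
      rw [← exp_mul, ← exp_log (zero_lt_one.trans_le hc), ← exp_add, exp_log (by linarith)]
      exact exp_le_exp.mpr (by linarith)
    calc c * u ^ (2 * (1 + log c)) = c * u ^ (1 + 2 * log c) * u := by rw [hsplit, mul_assoc]
      _ ≤ c * exp (-1) ^ (1 + 2 * log c) * u := by gcongr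
      _ ≤ exp 1 * u := by gcongr

theorem min_one_mul_rpow_le_exp_one_mul_rpow {c₁ c₂ t : ℝ} (hc₁ : 1 ≤ c₁) (hc₂ : 0 < c₂)
    (ht : 0 ≤ t) :
    min 1 (c₁ * t ^ (1 / c₂)) ≤ exp 1 * t ^ (1 / (2 * c₂ * (1 + log c₁))) := by
  have hL : 0 < 1 + log c₁ := by linarith [log_nonneg hc₁]
  have hexp : t ^ (1 / c₂) = (t ^ (1 / (2 * c₂ * (1 + log c₁)))) ^ (2 * (1 + log c₁)) := by
    rw [← rpow_mul ht]; congr 1; field_simp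
  rw [hexp]
  exact min_one_mul_rpow_two_mul_one_add_log_le hc₁ (rpow_nonneg ht _)

end Real

theorem ENNReal.min_one_mul_rpow_le_exp_one_mul_rpow {c₁ c₂ : ℝ} {t : ℝ≥0∞} (hc₁ : 1 ≤ c₁)
    (hc₂ : 0 < c₂) (ht : t ≠ ⊤) :
    min 1 (ENNReal.ofReal c₁ * t ^ (1 / c₂)) ≤
      ENNReal.ofReal (Real.exp 1) * t ^ (1 / (2 * c₂ * (1 + Real.log c₁))) := by
  have hL : 0 < 1 + Real.log c₁ := by linarith [Real.log_nonneg hc₁]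
  rw [← ENNReal.ofReal_toReal ht, ENNReal.ofReal_rpow_of_nonneg ENNReal.toReal_nonneg
    (by positivity), ENNReal.ofReal_rpow_of_nonneg ENNReal.toReal_nonneg (by positivity),
    ← ENNReal.ofReal_mul (by linarith), ← ENNReal.ofReal_mul (Real.exp_pos 1).le,
    ← ENNReal.ofReal_one, ← ENNReal.ofReal_min]
  exact ENNReal.ofReal_le_ofReal
    (Real.min_one_mul_rpow_le_exp_one_mul_rpow hc₁ hc₂ ENNReal.toReal_nonneg)

theorem MeasureTheory.measure_le_min_one_mul_of_subset {α : Type*} [MeasurableSpace α]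
    {μ : Measure α} {S Q : Set α} {a : ℝ≥0∞} (hSQ : S ⊆ Q) (h : μ S ≤ a * μ Q) :
    μ S ≤ min 1 a * μ Q := by
  rw [← min_mul_mul_right, one_mul]
  exact le_min (measure_mono hSQ) h

theorem self_improving_growth_bound_general (n : ℕ) (w : (Fin n → ℝ) → ℝ≥0∞)
    (c₁ c₂ : ℝ) (hc₁ : 1 < c₁) (hc₂ : 1 < c₂)
    (hgrowth : ∀ (c : Fin n → ℝ) (r : ℝ), 0 < r → ∀ S ⊆ closedBall c r, MeasurableSet S →
      weightMeasure n w S ≤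
        ENNReal.ofReal c₁ * (volume S / volume (closedBall c r)) ^ (1 / c₂) *
          weightMeasure n w (closedBall c r)) :
    ∀ (c : Fin n → ℝ) (r : ℝ), 0 < r → ∀ S ⊆ closedBall c r, MeasurableSet S →
      weightMeasure n w S ≤
        ENNReal.ofReal (Real.exp 1) *
          (volume S / volume (closedBall c r)) ^ (1 / (2 * c₂ * (1 + Real.log c₁))) *
          weightMeasure n w (closedBall c r) := by
  intro c r hr S hS hSm
  have hratio : volume S / volume (closedBall c r) ≠ ⊤ :=
    ENNReal.div_ne_top (measure_ne_top_of_subset hS measure_closedBall_lt_top.ne)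
      (measure_closedBall_pos _ _ hr).ne'
  calc weightMeasure n w S
      ≤ min 1 (ENNReal.ofReal c₁ * (volume S / volume (closedBall c r)) ^ (1 / c₂)) *
          weightMeasure n w (closedBall c r) :=
        measure_le_min_one_mul_of_subset hS (hgrowth c r hr S hS hSm)
    _ ≤ _ := by
        gcongr
        exact ENNReal.min_one_mul_rpow_le_exp_one_mul_rpow hc₁.le (by linarith) hratio

/-- If a weight w satisfies w(S)/w(Q) ≤ c₁ (|S|/|Q|)^{1/c₂} for all cubes Q and measurable
S ⊆ Q, with c₁, c₂ > 1, then w(S)/w(Q) ≤ e (|S|/|Q|)^{1/(2c₂(1+log c₁))} for all cubes Q and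
measurable S ⊆ Q. Cubes are closed balls in the sup metric on ℝⁿ. -/
theorem self_improving_growth_bound (n : ℕ) (w : (Fin n → ℝ) → ℝ≥0∞) (hw : Measurable w)
    (c₁ c₂ : ℝ) (hc₁ : 1 < c₁) (hc₂ : 1 < c₂)
    (hfin : ∀ (c : Fin n → ℝ) (r : ℝ), 0 < r → weightMeasure n w (closedBall c r) < ⊤)
    (hpos : ∀ (c : Fin n → ℝ) (r : ℝ), 0 < r → 0 < weightMeasure n w (closedBall c r))
    (hgrowth : ∀ (c : Fin n → ℝ) (r : ℝ), 0 < r → ∀ S ⊆ closedBall c r, MeasurableSet S →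
      weightMeasure n w S ≤
        ENNReal.ofReal c₁ * (volume S / volume (closedBall c r)) ^ (1 / c₂) *
          weightMeasure n w (closedBall c r)) :
    ∀ (c : Fin n → ℝ) (r : ℝ), 0 < r → ∀ S ⊆ closedBall c r, MeasurableSet S →
      weightMeasure n w S ≤
        ENNReal.ofReal (Real.exp 1) *
          (volume S / volume (closedBall c r)) ^ (1 / (2 * c₂ * (1 + Real.log c₁))) *
          weightMeasure n w (closedBall c r) :=
  self_improving_growth_bound_general n w c₁ c₂ hc₁ hc₂ hgrowth
end

section
/- Suppose w is a nonnegative locally integrable function on ℝ^n, Q is a cube with (1/|Q|)∫_Q w = 1, and for every measurable S ⊆ Q we have w(S)/w(Q) ≤ e (|S|/|Q|)^{1/η} for some η > 2. Then for E_λ = {x ∈ Q : w(x) > λ} and λ ≥ 1 one has |E_λ|/|Q| ≤ e^{η'} λ^{-η'} where η' = η/(η−1), and consequently w(E_λ)/w(Q) ≤ e^{1 + η'/η} λ^{-η'/η}. -/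
/-! On the level set `E = E_λ` Chebyshev gives `λ|E| ≤ w(E)`, while the growth condition with
`w(Q) = |Q|` gives `w(E) ≤ e t^{1/η} |Q|` for `t = |E|/|Q|`. Hence `λ t ≤ e t^{1/η}`, i.e.
`t^{1/η'} ≤ e/λ`, so `t ≤ (e/λ)^{η'}`; feeding this back into the growth condition gives
`w(E)/w(Q) ≤ e (e/λ)^{η'/η}`. -/

open MeasureTheory Metric Set
open scoped ENNReal

namespace ENNReal

theorem le_div_rpow_of_mul_le_mul_rpow {a t K : ℝ≥0∞} {η : ℝ} (hη : 1 < η) (ha : a ≠ 0)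
    (ha' : a ≠ ∞) (ht : t ≠ ∞) (h : a * t ≤ K * t ^ (1 / η)) :
    t ≤ (K / a) ^ (η / (η - 1)) := by
  rcases eq_or_ne t 0 with rfl | ht0
  · exact zero_le
  have hsplit : t = t ^ (1 - 1 / η) * t ^ (1 / η) := by
    rw [← rpow_add _ _ ht0 ht, sub_add_cancel, rpow_one]
  have hpow : t ^ (1 - 1 / η) ≤ K / a := by
    rw [ENNReal.le_div_iff_mul_le (Or.inl ha) (Or.inl ha'), mul_comm,
      ← ENNReal.mul_le_mul_iff_left (rpow_pos (p := 1 / η) (pos_iff_ne_zero.2 ht0) ht).ne'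
        (rpow_ne_top_of_nonneg (by positivity) ht)]
    calc a * t ^ (1 - 1 / η) * t ^ (1 / η) = a * t := by rw [mul_assoc, ← hsplit]
      _ ≤ K * t ^ (1 / η) := h
  have hη' : 0 < η - 1 := sub_pos.2 hη
  calc t = (t ^ (1 - 1 / η)) ^ (η / (η - 1)) := by
        rw [← rpow_mul, show (1 - 1 / η) * (η / (η - 1)) = 1 by field_simp, rpow_one]
    _ ≤ (K / a) ^ (η / (η - 1)) := rpow_le_rpow hpow (by positivity)

theorem ofReal_div_ofReal_rpow {x y p : ℝ} (hx : 0 ≤ x) (hy : 0 < y) (hp : 0 ≤ p) :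
    (ENNReal.ofReal x / ENNReal.ofReal y) ^ p = ENNReal.ofReal (x ^ p * y ^ (-p)) := by
  rw [← ofReal_div_of_pos hy, ofReal_rpow_of_nonneg (div_nonneg hx hy.le) hp,
    Real.div_rpow hx hy.le, Real.rpow_neg hy.le, div_eq_mul_inv]

end ENNReal

section LevelSet

variable {α : Type*} [MeasurableSpace α] {μ : Measure α} {w : α → ℝ≥0∞} {Q : Set α}

theorem mul_measure_le_withDensity {E : Set α} (hE : MeasurableSet E) {a : ℝ≥0∞}
    (h : ∀ x ∈ E, a ≤ w x) : a * μ E ≤ μ.withDensity w E := by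
  rw [withDensity_apply _ hE, ← setLIntegral_const]
  exact setLIntegral_mono' hE h

theorem measure_levelSet_div_le_of_growth (hw : Measurable w) (hQ : MeasurableSet Q)
    (hQ0 : μ Q ≠ 0) (hQtop : μ Q ≠ ∞) {K a : ℝ≥0∞} {η : ℝ} (hη : 1 < η)
    (havg : μ.withDensity w Q = μ Q)
    (hgrowth : ∀ S ⊆ Q, MeasurableSet S →
      μ.withDensity w S ≤ K * (μ S / μ Q) ^ (1 / η) * μ.withDensity w Q)
    (ha : a ≠ 0) (ha' : a ≠ ∞) :
    μ {x | x ∈ Q ∧ a < w x} / μ Q ≤ (K / a) ^ (η / (η - 1)) := by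
  set E := {x | x ∈ Q ∧ a < w x}
  have hE : MeasurableSet E := hQ.inter (hw measurableSet_Ioi)
  have hEQ : E ⊆ Q := fun x hx => hx.1
  refine ENNReal.le_div_rpow_of_mul_le_mul_rpow hη ha ha'
    (ENNReal.div_lt_top (measure_ne_top_of_subset hEQ hQtop) hQ0).ne ?_
  rw [← ENNReal.mul_le_mul_iff_left hQ0 hQtop]
  calc a * (μ E / μ Q) * μ Q = a * μ E := by rw [mul_assoc, ENNReal.div_mul_cancel hQ0 hQtop]
    _ ≤ μ.withDensity w E := mul_measure_le_withDensity hE fun x hx => hx.2.le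
    _ ≤ K * (μ E / μ Q) ^ (1 / η) * μ Q := havg ▸ hgrowth E hEQ hE

end LevelSet

/-- Suppose w is a weight, Q a cube with average of w over Q equal to 1 (w(Q) = |Q|), and
w(S)/w(Q) ≤ e (|S|/|Q|)^{1/η} for all measurable S ⊆ Q, where η > 2.  Then for λ ≥ 1, the
level set E_λ = {x ∈ Q : w(x) > λ} satisfies |E_λ|/|Q| ≤ e^{η'} λ^{-η'} and
w(E_λ)/w(Q) ≤ e^{1+η'/η} λ^{-η'/η}, with η' = η/(η−1). -/
theorem level_set_estimates (n : ℕ) (w : (Fin n → ℝ) → ℝ≥0∞) (hw : Measurable w)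
    (c : Fin n → ℝ) (r : ℝ) (hr : 0 < r) (η : ℝ) (hη : 2 < η)
    (havg : weightMeasure n w (closedBall c r) = volume (closedBall c r))
    (hgrowth : ∀ S ⊆ closedBall c r, MeasurableSet S →
      weightMeasure n w S ≤
        ENNReal.ofReal (Real.exp 1) * (volume S / volume (closedBall c r)) ^ (1 / η) *
          weightMeasure n w (closedBall c r))
    (lam : ℝ) (hlam : 1 ≤ lam) :
    volume {x | x ∈ closedBall c r ∧ ENNReal.ofReal lam < w x} ≤
        ENNReal.ofReal (Real.exp (η / (η - 1)) * lam ^ (-(η / (η - 1)))) *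
          volume (closedBall c r) ∧
      weightMeasure n w {x | x ∈ closedBall c r ∧ ENNReal.ofReal lam < w x} ≤
        ENNReal.ofReal (Real.exp (1 + (η / (η - 1)) / η) * lam ^ (-((η / (η - 1)) / η))) *
          weightMeasure n w (closedBall c r) := by
  have hlam0 : 0 < lam := one_pos.trans_le hlam
  have hη1 : 0 < η - 1 := by linarith
  have hQ0 : volume (closedBall c r) ≠ 0 := (measure_closedBall_pos volume c hr).ne'
  have hQtop : volume (closedBall c r) ≠ ∞ := measure_closedBall_lt_top.ne
  have hratio := measure_levelSet_div_le_of_growth hw measurableSet_closedBall hQ0 hQtop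
    (by linarith) havg hgrowth (ENNReal.ofReal_pos.2 hlam0).ne' ENNReal.ofReal_ne_top
  have hE : MeasurableSet {x | x ∈ closedBall c r ∧ ENNReal.ofReal lam < w x} :=
    measurableSet_closedBall.inter (hw measurableSet_Ioi)
  refine ⟨?_, (hgrowth _ (fun x hx => hx.1) hE).trans ?_⟩
  · rw [← ENNReal.div_le_iff hQ0 hQtop, ← Real.exp_one_rpow]
    rwa [← ENNReal.ofReal_div_ofReal_rpow (Real.exp_pos 1).le hlam0 (by positivity)]
  · calc _ ≤ ENNReal.ofReal (Real.exp 1) *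
            ((ENNReal.ofReal (Real.exp 1) / ENNReal.ofReal lam) ^ (η / (η - 1))) ^ (1 / η) *
              weightMeasure n w (closedBall c r) := by gcongr
      _ = _ := by
        rw [← ENNReal.rpow_mul, mul_one_div,
          ENNReal.ofReal_div_ofReal_rpow (Real.exp_pos 1).le hlam0 (by positivity),
          ← ENNReal.ofReal_mul (Real.exp_pos 1).le, ← mul_assoc, Real.exp_one_rpow,
          ← Real.exp_add]
end

section
/- Suppose w is a nonnegative locally integrable function on ℝ^n, Q a cube with w(Q) > 0, η > 2, and for all λ ≥ 1, w({x ∈ Q : w(x) > λ})/w(Q) ≤ C λ^{-η'/η} where η' = η/(η−1). Then for every ε with 0 < ε < η'/η one has ∫_Q w^{1+ε} ≤ C' w(Q) (1 + ε/(η'/η − ε)) · sup(1, (w(Q)/|Q|)^{ε}) for a constant C' depending only on C; in particular, if (1/|Q|)∫_Q w = 1 and ε ≤ η'/(2η), then (1/|Q|)∫_Q w^{1+ε} ≤ C''(C) for a constant depending only on C. -/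
/-!
With `μ = w dx`, the layer cake formula gives
`∫_Q w^{1+ε} dx = ∫_Q w^ε dμ = ∫_0^∞ μ{x ∈ Q : w x > t} ε t^{ε-1} dt`.
On `(0, 1]` the distribution function is at most `w(Q)`; on `(1, ∞)` the hypothesis bounds it by
`C t^{-δ} w(Q)` with `δ = η'/η`, and `∫_1^∞ ε t^{ε-1-δ} dt = ε/(δ-ε)`. Hence
`∫_Q w^{1+ε} ≤ w(Q) (1 + C ε/(δ-ε))`, which gives both bounds with `C' = C'' = 1 + C`,
since `ε ≤ δ/2` forces `ε/(δ-ε) ≤ 1`.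
-/

open MeasureTheory Metric Set
open scoped ENNReal

section LayerCake

variable {α : Type*} [MeasurableSpace α] {ν : Measure α} {f : α → ℝ} {C δ ε : ℝ}

theorem intervalIntegral_mul_rpow_sub_one (hε : 0 < ε) (s : ℝ) :
    ∫ t in (0 : ℝ)..s, ε * t ^ (ε - 1) = s ^ ε := by
  rw [intervalIntegral.integral_const_mul, integral_rpow (Or.inl (by linarith)),
    sub_add_cancel, Real.zero_rpow hε.ne', sub_zero, mul_div_cancel₀ _ hε.ne']

theorem lintegral_ofReal_rpow_eq_lintegral_meas_lt_mul (hε : 0 < ε) (f_nn : 0 ≤ᵐ[ν] f)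
    (f_mble : AEMeasurable f ν) :
    ∫⁻ x, ENNReal.ofReal (f x ^ ε) ∂ν =
      ∫⁻ t in Ioi 0, ν {x | t < f x} * ENNReal.ofReal (ε * t ^ (ε - 1)) := by
  have g_intble : ∀ t > 0, IntervalIntegrable (fun t ↦ ε * t ^ (ε - 1)) volume 0 t :=
    fun _ _ ↦ (intervalIntegral.intervalIntegrable_rpow' (by linarith)).const_mul ε
  have g_nn : ∀ᵐ t ∂volume.restrict (Ioi (0 : ℝ)), 0 ≤ ε * t ^ (ε - 1) := by
    filter_upwards [ae_restrict_mem measurableSet_Ioi] with t (ht : 0 < t)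
    positivity
  rw [← lintegral_comp_eq_lintegral_meas_lt_mul ν f_nn f_mble g_intble g_nn]
  refine lintegral_congr fun x ↦ ?_
  rw [intervalIntegral_mul_rpow_sub_one hε]

theorem lintegral_Ioc_zero_one_ofReal_mul_rpow_sub_one (hε : 0 < ε) :
    ∫⁻ t in Ioc (0 : ℝ) 1, ENNReal.ofReal (ε * t ^ (ε - 1)) = 1 := by
  have hint : IntegrableOn (fun t ↦ ε * t ^ (ε - 1)) (Ioc (0 : ℝ) 1) :=
    (intervalIntegrable_iff_integrableOn_Ioc_of_le zero_le_one).mp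
      ((intervalIntegral.intervalIntegrable_rpow' (by linarith)).const_mul ε)
  have hnn : ∀ᵐ t ∂volume.restrict (Ioc (0 : ℝ) 1), 0 ≤ ε * t ^ (ε - 1) := by
    filter_upwards [ae_restrict_mem measurableSet_Ioc] with t ht
    have : 0 < t := ht.1
    positivity
  rw [← ofReal_integral_eq_lintegral_ofReal hint hnn, ← intervalIntegral.integral_of_le zero_le_one,
    intervalIntegral_mul_rpow_sub_one hε, Real.one_rpow, ENNReal.ofReal_one]

theorem lintegral_Ioi_one_ofReal_mul_rpow_sub_one_sub (hε : 0 < ε) (hεδ : ε < δ) :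
    ∫⁻ t in Ioi (1 : ℝ), ENNReal.ofReal (ε * t ^ (ε - 1 - δ)) = ENNReal.ofReal (ε / (δ - ε)) := by
  have hlt : ε - 1 - δ < -1 := by linarith
  have hint : IntegrableOn (fun t ↦ ε * t ^ (ε - 1 - δ)) (Ioi (1 : ℝ)) :=
    (integrableOn_Ioi_rpow_of_lt hlt one_pos).const_mul ε
  have hnn : ∀ᵐ t ∂volume.restrict (Ioi (1 : ℝ)), 0 ≤ ε * t ^ (ε - 1 - δ) := by
    filter_upwards [ae_restrict_mem measurableSet_Ioi] with t ht
    have : 0 < t := one_pos.trans ht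
    positivity
  rw [← ofReal_integral_eq_lintegral_ofReal hint hnn, integral_const_mul,
    integral_Ioi_rpow_of_lt hlt one_pos, Real.one_rpow, show ε - 1 - δ + 1 = -(δ - ε) by ring,
    neg_div_neg_eq, mul_one_div]

theorem lintegral_ofReal_rpow_le_of_meas_lt_le (hε : 0 < ε) (hεδ : ε < δ) (f_nn : 0 ≤ᵐ[ν] f)
    (f_mble : AEMeasurable f ν)
    (htail : ∀ t : ℝ, 1 < t → ν {x | t < f x} ≤ ENNReal.ofReal (C * t ^ (-δ)) * ν univ) :
    ∫⁻ x, ENNReal.ofReal (f x ^ ε) ∂ν ≤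
      ν univ * (1 + ENNReal.ofReal C * ENNReal.ofReal (ε / (δ - ε))) := by
  set g : ℝ → ℝ≥0∞ := fun t ↦ ν {x | t < f x} * ENNReal.ofReal (ε * t ^ (ε - 1))
  have hsmall : ∫⁻ t in Ioc (0 : ℝ) 1, g t ≤ ν univ :=
    calc ∫⁻ t in Ioc (0 : ℝ) 1, g t
        ≤ ∫⁻ t in Ioc (0 : ℝ) 1, ν univ * ENNReal.ofReal (ε * t ^ (ε - 1)) :=
          lintegral_mono fun t ↦ mul_le_mul_left (measure_mono (subset_univ _)) _
      _ = ν univ := by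
          rw [lintegral_const_mul'' _ (by fun_prop),
            lintegral_Ioc_zero_one_ofReal_mul_rpow_sub_one hε, mul_one]
  have hlarge : ∫⁻ t in Ioi (1 : ℝ), g t ≤
      ν univ * (ENNReal.ofReal C * ENNReal.ofReal (ε / (δ - ε))) :=
    calc ∫⁻ t in Ioi (1 : ℝ), g t
        ≤ ∫⁻ t in Ioi (1 : ℝ), ν univ * ENNReal.ofReal C * ENNReal.ofReal (ε * t ^ (ε - 1 - δ)) := by
          refine setLIntegral_mono' measurableSet_Ioi fun t (ht : 1 < t) ↦ ?_
          have ht0 : 0 < t := one_pos.trans ht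
          calc g t ≤ ENNReal.ofReal (C * t ^ (-δ)) * ν univ * ENNReal.ofReal (ε * t ^ (ε - 1)) :=
                mul_le_mul_left (htail t ht) _
            _ = ν univ * ENNReal.ofReal C * ENNReal.ofReal (ε * t ^ (ε - 1 - δ)) := by
                rw [ENNReal.ofReal_mul' (by positivity), mul_comm _ (ν univ), mul_assoc, mul_assoc,
                  ← ENNReal.ofReal_mul (by positivity),
                  show ε - 1 - δ = -δ + (ε - 1) by ring, Real.rpow_add ht0, mul_left_comm (t ^ (-δ)) ε]
                ring
      _ = ν univ * (ENNReal.ofReal C * ENNReal.ofReal (ε / (δ - ε))) := by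
          rw [lintegral_const_mul'' _ (by fun_prop),
            lintegral_Ioi_one_ofReal_mul_rpow_sub_one_sub hε hεδ, mul_assoc]
  calc ∫⁻ x, ENNReal.ofReal (f x ^ ε) ∂ν
      = (∫⁻ t in Ioc (0 : ℝ) 1, g t) + ∫⁻ t in Ioi (1 : ℝ), g t := by
        rw [lintegral_ofReal_rpow_eq_lintegral_meas_lt_mul hε f_nn f_mble,
          ← Ioc_union_Ioi_eq_Ioi zero_le_one,
          lintegral_union measurableSet_Ioi (Ioc_disjoint_Ioi le_rfl)]
    _ ≤ ν univ * (1 + ENNReal.ofReal C * ENNReal.ofReal (ε / (δ - ε))) := by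
        rw [mul_add, mul_one]
        exact add_le_add hsmall hlarge

end LayerCake

section Weight

variable {α : Type*} [MeasurableSpace α] {μ : Measure α} {w : α → ℝ≥0∞} {C δ ε : ℝ}

theorem lintegral_rpow_one_add_eq_lintegral_rpow_withDensity (hw : Measurable w) (hε : 0 ≤ ε) :
    ∫⁻ x, w x ^ (1 + ε) ∂μ = ∫⁻ x, w x ^ ε ∂μ.withDensity w := by
  rw [lintegral_withDensity_eq_lintegral_mul _ hw (hw.pow_const ε)]
  refine lintegral_congr fun x ↦ ?_
  rw [ENNReal.rpow_add_of_nonneg 1 ε zero_le_one hε, ENNReal.rpow_one]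
  rfl

theorem lintegral_rpow_one_add_le_of_withDensity_meas_lt_le (hw : Measurable w)
    (hfin : ∫⁻ x, w x ∂μ ≠ ∞) (hε : 0 < ε) (hεδ : ε < δ)
    (htail : ∀ t : ℝ, 1 < t → μ.withDensity w {x | ENNReal.ofReal t < w x} ≤
      ENNReal.ofReal (C * t ^ (-δ)) * μ.withDensity w univ) :
    ∫⁻ x, w x ^ (1 + ε) ∂μ ≤
      μ.withDensity w univ * (1 + ENNReal.ofReal C * ENNReal.ofReal (ε / (δ - ε))) := by
  have hw_fin : ∀ᵐ x ∂μ.withDensity w, w x ≠ ∞ :=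
    (withDensity_absolutelyContinuous μ w).ae_le ((ae_lt_top hw hfin).mono fun _ ↦ LT.lt.ne)
  have htail' : ∀ t : ℝ, 1 < t → μ.withDensity w {x | t < (w x).toReal} ≤
      ENNReal.ofReal (C * t ^ (-δ)) * μ.withDensity w univ := fun t ht ↦
    (measure_mono fun x (hx : t < (w x).toReal) ↦
      ((ENNReal.ofReal_lt_ofReal_iff_of_nonneg (by linarith)).2 hx).trans_le
        ENNReal.ofReal_toReal_le).trans (htail t ht)
  calc ∫⁻ x, w x ^ (1 + ε) ∂μ = ∫⁻ x, ENNReal.ofReal ((w x).toReal ^ ε) ∂μ.withDensity w := by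
        rw [lintegral_rpow_one_add_eq_lintegral_rpow_withDensity hw hε.le]
        refine lintegral_congr_ae ?_
        filter_upwards [hw_fin] with x hx
        rw [← ENNReal.ofReal_rpow_of_nonneg ENNReal.toReal_nonneg hε.le, ENNReal.ofReal_toReal hx]
    _ ≤ _ := lintegral_ofReal_rpow_le_of_meas_lt_le hε hεδ
        (ae_of_all _ fun _ ↦ ENNReal.toReal_nonneg) hw.ennreal_toReal.aemeasurable htail'

end Weight

/-- Suppose w is a weight, Q a cube with 0 < w(Q) < ∞, η > 2, and for λ ≥ 1 we have
w({x ∈ Q : w > λ})/w(Q) ≤ C λ^{-η'/η}, where η' = η/(η−1).  Then for 0 < ε < η'/η,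
∫_Q w^{1+ε} ≤ C' w(Q) (1 + ε/(η'/η − ε)) max(1, (w(Q)/|Q|)^ε) for a constant C' depending
only on C; in particular if the average of w over Q is 1 and ε ≤ η'/(2η) then
(1/|Q|)∫_Q w^{1+ε} ≤ C'' for a constant C'' depending only on C (a reverse Hölder bound). -/
theorem reverse_holder_from_distribution (C : ℝ) (hC : 0 < C) :
    ∃ C' C'' : ℝ, 0 < C' ∧ 0 < C'' ∧
      ∀ (n : ℕ) (w : (Fin n → ℝ) → ℝ≥0∞), Measurable w →
      ∀ (c : Fin n → ℝ) (r : ℝ), 0 < r →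
      ∀ η : ℝ, 2 < η →
      0 < weightMeasure n w (closedBall c r) →
      weightMeasure n w (closedBall c r) < ⊤ →
      (∀ lam : ℝ, 1 ≤ lam →
        weightMeasure n w {x | x ∈ closedBall c r ∧ ENNReal.ofReal lam < w x} ≤
          ENNReal.ofReal (C * lam ^ (-((η / (η - 1)) / η))) *
            weightMeasure n w (closedBall c r)) →
      ∀ ε : ℝ, 0 < ε → ε < (η / (η - 1)) / η →
        (∫⁻ x in closedBall c r, w x ^ ((1 : ℝ) + ε)) ≤
          ENNReal.ofReal C' * weightMeasure n w (closedBall c r) *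
            (1 + ENNReal.ofReal (ε / ((η / (η - 1)) / η - ε))) *
            max 1 ((weightMeasure n w (closedBall c r) / volume (closedBall c r)) ^ ε) ∧
        (weightMeasure n w (closedBall c r) = volume (closedBall c r) →
          ε ≤ (η / (η - 1)) / (2 * η) →
          (∫⁻ x in closedBall c r, w x ^ ((1 : ℝ) + ε)) ≤
            ENNReal.ofReal C'' * volume (closedBall c r)) := by
  refine ⟨1 + C, 1 + C, by linarith, by linarith, ?_⟩
  intro n w hw c r _ η _ _ hfin htail ε hε hεδ
  set Q := closedBall c r
  set δ := (η / (η - 1)) / η with hδ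
  have hQ : MeasurableSet Q := measurableSet_closedBall
  have hbound : ∫⁻ x in Q, w x ^ (1 + ε) ≤
      weightMeasure n w Q * (1 + ENNReal.ofReal C * ENNReal.ofReal (ε / (δ - ε))) := by
    have := lintegral_rpow_one_add_le_of_withDensity_meas_lt_le (μ := volume.restrict Q) hw
      (by rw [← withDensity_apply _ hQ]; exact hfin.ne) hε hεδ fun t ht ↦ by
        rw [← restrict_withDensity hQ, Measure.restrict_apply' hQ, Measure.restrict_apply_univ,
          inter_comm]
        exact htail t ht.le
    rwa [← restrict_withDensity hQ, Measure.restrict_apply_univ] at this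
  refine ⟨?_, fun hQ_eq hε_half ↦ ?_⟩
  · calc _ ≤ _ := hbound
      _ ≤ weightMeasure n w Q * (ENNReal.ofReal (1 + C) * (1 + ENNReal.ofReal (ε / (δ - ε)))) := by
          gcongr _ * ?_
          rw [mul_add, mul_one]
          exact add_le_add (ENNReal.one_le_ofReal.2 (by linarith))
            (mul_le_mul_left (ENNReal.ofReal_le_ofReal (by linarith)) _)
      _ ≤ _ := by
          rw [← mul_assoc, mul_comm (weightMeasure n w Q)]
          exact le_mul_of_one_le_right' (le_max_left _ _)
  · have hratio : ε / (δ - ε) ≤ 1 := by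
      rw [div_le_one (by linarith)]
      rw [mul_comm, ← div_div, ← hδ] at hε_half
      linarith
    calc _ ≤ _ := hbound
      _ ≤ weightMeasure n w Q * (1 + ENNReal.ofReal C * 1) := by
          gcongr
          exact ENNReal.ofReal_le_one.2 hratio
      _ = _ := by
          rw [mul_one, ENNReal.ofReal_add zero_le_one hC.le, ENNReal.ofReal_one, hQ_eq, mul_comm]
end

section
/- Let w be a weight on ℝ^n satisfying the growth condition w(S)/w(Q) ≤ 2 (|S|/|Q|)^{1/β} for all cubes Q and measurable S ⊆ Q, where β > 1, and suppose w has doubling constant Δ_w. If {Q_j}_{j=0}^N is a satellite configuration of cubes with center Q_0, then for all δ ∈ (0,1), w((∪_j (1+δ)Q_j) \ (∪_j Q_j)) ≤ C_n Δ_w^2 δ^{1/β} w(Q_0), with C_n depending only on n. -/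
/-!
Slicing a finite union of boxes along one coordinate gives finite unions of intervals. Merging
overlapping intervals into disjoint ones, each interval lies in one of the merged intervals, whose
enlargement contains that of the interval; so enlarging every interval by the factor `1 + δ` adds
at most `δ` times the length of the union. Dilating the cubes `Q_j` (closed balls of the sup
metric on `Fin n → ℝ`) one coordinate at a time and integrating over slices, the Lebesgue measure
of `⋃ (1 + δ) Q_j \ ⋃ Q_j` is at most `n δ |4 Q₀|`, as all the dilated cubes of a satellite
configuration lie in `4 Q₀`. The growth condition on `4 Q₀` and doubling twice from `Q₀` to
`4 Q₀` give the weighted bound with `C_n = 2 (n + 1)`.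
-/

open MeasureTheory Metric Set
open scoped ENNReal

theorem measure_biUnion_diff_biUnion_le_of_pairwiseDisjoint {α ι : Type*} [MeasurableSpace α]
    {μ : Measure α} {s : Finset ι} {A B : ι → Set α} {k : ℝ≥0∞}
    (hA : (s : Set ι).PairwiseDisjoint A) (hAm : ∀ i ∈ s, MeasurableSet (A i))
    (hAB : ∀ i ∈ s, μ (B i \ A i) ≤ k * μ (A i)) :
    μ ((⋃ i ∈ s, B i) \ ⋃ i ∈ s, A i) ≤ k * μ (⋃ i ∈ s, A i) :=
  calc μ ((⋃ i ∈ s, B i) \ ⋃ i ∈ s, A i)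
      ≤ μ (⋃ i ∈ s, B i \ A i) := by
        refine measure_mono fun x ⟨hB, hA⟩ => ?_
        obtain ⟨i, hi, hx⟩ := mem_iUnion₂.mp hB
        exact mem_iUnion₂.mpr ⟨i, hi, hx, fun h => hA (mem_biUnion hi h)⟩
    _ ≤ ∑ i ∈ s, μ (B i \ A i) := measure_biUnion_finset_le s _
    _ ≤ ∑ i ∈ s, k * μ (A i) := Finset.sum_le_sum hAB
    _ = k * μ (⋃ i ∈ s, A i) := by rw [← Finset.mul_sum, measure_biUnion_finset hA hAm]

theorem Real.volume_Icc_enlarge_diff_le {κ : ℝ} (hκ : 0 ≤ κ) (a b : ℝ) :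
    volume (Icc (a - κ * (b - a)) (b + κ * (b - a)) \ Icc a b) ≤
      ENNReal.ofReal (2 * κ) * volume (Icc a b) :=
  calc volume (Icc (a - κ * (b - a)) (b + κ * (b - a)) \ Icc a b)
      ≤ volume (Icc (a - κ * (b - a)) a ∪ Icc b (b + κ * (b - a))) := by
        refine measure_mono fun x ⟨⟨h₁, h₂⟩, hx⟩ => ?_
        rw [mem_Icc, not_and_or, not_le, not_le] at hx
        rcases hx with hx | hx
        exacts [Or.inl ⟨h₁, hx.le⟩, Or.inr ⟨hx.le, h₂⟩]
    _ ≤ volume (Icc (a - κ * (b - a)) a) + volume (Icc b (b + κ * (b - a))) :=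
        measure_union_le _ _
    _ = ENNReal.ofReal (2 * κ) * volume (Icc a b) := by
        simp only [Real.volume_Icc, sub_sub_cancel, add_sub_cancel_left]
        rw [ENNReal.ofReal_mul hκ, ENNReal.ofReal_mul zero_le_two, ENNReal.ofReal_ofNat, two_mul,
          add_mul]

/-- Containment is recorded on endpoints rather than on the intervals, so that it also holds for
enlargements of empty intervals. -/
theorem Real.exists_pairwiseDisjoint_Icc_refinement (P : Finset (ℝ × ℝ)) :
    ∃ Q : Finset (ℝ × ℝ), (Q : Set (ℝ × ℝ)).PairwiseDisjoint (fun q => Icc q.1 q.2) ∧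
      ⋃ q ∈ Q, Icc q.1 q.2 = ⋃ p ∈ P, Icc p.1 p.2 ∧
      ∀ p ∈ P, ∃ q ∈ Q, q.1 ≤ p.1 ∧ p.2 ≤ q.2 := by
  classical
  induction hP : P.card using Nat.strong_induction_on generalizing P with
  | _ k ih =>
  by_cases hdisj : (P : Set (ℝ × ℝ)).PairwiseDisjoint (fun p => Icc p.1 p.2)
  · exact ⟨P, hdisj, rfl, fun p hp => ⟨p, hp, le_rfl, le_rfl⟩⟩
  obtain ⟨p, hp, q, hq, hpq, hover⟩ : ∃ p ∈ P, ∃ q ∈ P, p ≠ q ∧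
      (Icc p.1 p.2 ∩ Icc q.1 q.2).Nonempty := by
    simpa [Set.PairwiseDisjoint, Set.Pairwise, Function.onFun, not_disjoint_iff_nonempty_inter]
      using hdisj
  obtain ⟨z, ⟨hpz, hzp⟩, hqz, hzq⟩ := hover
  set R := (P.erase p).erase q
  have hqR : q ∈ P.erase p := Finset.mem_erase.mpr ⟨hpq.symm, hq⟩
  have hPR : P = insert p (insert q R) := by
    rw [Finset.insert_erase hqR, Finset.insert_erase hp]
  set m : ℝ × ℝ := (min p.1 q.1, max p.2 q.2)
  have hRk : R.card + 1 < k := by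
    have := Finset.card_pos.mpr ⟨q, hqR⟩
    rw [Finset.card_erase_of_mem hp] at this
    simp only [R, Finset.card_erase_of_mem hqR, Finset.card_erase_of_mem hp]
    omega
  obtain ⟨Q, hQ, hQU, hQP⟩ :=
    ih _ ((Finset.card_insert_le m R).trans_lt hRk) (insert m R) rfl
  refine ⟨Q, hQ, ?_, ?_⟩
  · rw [hQU, hPR]
    simp only [Finset.set_biUnion_insert, ← union_assoc,
      Icc_union_Icc' (hqz.trans hzp) (hpz.trans hzq), m]
  · intro u hu
    obtain ⟨v, hv, hvu⟩ : ∃ v ∈ insert m R, v.1 ≤ u.1 ∧ u.2 ≤ v.2 := by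
      rw [hPR, Finset.mem_insert, Finset.mem_insert] at hu
      rcases hu with rfl | rfl | hu
      · exact ⟨m, Finset.mem_insert_self _ _, min_le_left _ _, le_max_left _ _⟩
      · exact ⟨m, Finset.mem_insert_self _ _, min_le_right _ _, le_max_right _ _⟩
      · exact ⟨u, Finset.mem_insert_of_mem hu, le_rfl, le_rfl⟩
    obtain ⟨w, hw, hwv⟩ := hQP v hv
    exact ⟨w, hw, hwv.1.trans hvu.1, hvu.2.trans hwv.2⟩

theorem Real.volume_biUnion_Icc_dilate_diff_le {ι : Type*} (s : Finset ι) (c ρ : ι → ℝ) {δ : ℝ}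
    (hδ : 0 ≤ δ) :
    volume ((⋃ j ∈ s, Icc (c j - (1 + δ) * ρ j) (c j + (1 + δ) * ρ j)) \
        ⋃ j ∈ s, Icc (c j - ρ j) (c j + ρ j)) ≤
      ENNReal.ofReal δ * volume (⋃ j ∈ s, Icc (c j - ρ j) (c j + ρ j)) := by
  classical
  obtain ⟨Q, hQ, hQU, hQP⟩ :=
    Real.exists_pairwiseDisjoint_Icc_refinement (s.image fun j => (c j - ρ j, c j + ρ j))
  rw [Finset.set_biUnion_finset_image] at hQU
  have hsub : ⋃ j ∈ s, Icc (c j - (1 + δ) * ρ j) (c j + (1 + δ) * ρ j) ⊆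
      ⋃ q ∈ Q, Icc (q.1 - δ / 2 * (q.2 - q.1)) (q.2 + δ / 2 * (q.2 - q.1)) := by
    refine iUnion₂_subset fun j hj => ?_
    obtain ⟨q, hq, h₁, h₂⟩ := hQP _ (Finset.mem_image_of_mem _ hj)
    dsimp only at h₁ h₂
    have : δ * ρ j ≤ δ / 2 * (q.2 - q.1) := by nlinarith
    refine Subset.trans ?_ (subset_biUnion_of_mem
      (u := fun q : ℝ × ℝ => Icc (q.1 - δ / 2 * (q.2 - q.1)) (q.2 + δ / 2 * (q.2 - q.1))) hq)
    exact Icc_subset_Icc (by linarith) (by linarith)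
  calc _ ≤ volume ((⋃ q ∈ Q, Icc (q.1 - δ / 2 * (q.2 - q.1)) (q.2 + δ / 2 * (q.2 - q.1))) \
          ⋃ q ∈ Q, Icc q.1 q.2) := by
        rw [hQU]
        exact measure_mono (sdiff_subset_sdiff_left hsub)
    _ ≤ ENNReal.ofReal (2 * (δ / 2)) * volume (⋃ q ∈ Q, Icc q.1 q.2) :=
        measure_biUnion_diff_biUnion_le_of_pairwiseDisjoint hQ (fun _ _ => measurableSet_Icc)
          fun q _ => Real.volume_Icc_enlarge_diff_le (by positivity) q.1 q.2
    _ = _ := by rw [hQU, mul_div_cancel₀ _ two_ne_zero]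

open Classical in
theorem preimage_insertNth_biUnion_Icc {ι : Type*} {m : ℕ} (s : Finset ι)
    (a b : ι → Fin (m + 1) → ℝ) (i : Fin (m + 1)) (y : Fin m → ℝ) :
    (i.insertNth · y) ⁻¹' ⋃ j ∈ s, Icc (a j) (b j) =
      ⋃ j ∈ s.filter fun j =>
          y ∈ Icc (fun l => a j (i.succAbove l)) (fun l => b j (i.succAbove l)),
        Icc (a j i) (b j i) := by
  ext t
  simp only [mem_preimage, mem_iUnion₂, Fin.insertNth_mem_Icc, Finset.mem_filter, exists_prop]
  tauto

theorem volume_eq_lintegral_volume_preimage_insertNth {m : ℕ} (i : Fin (m + 1))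
    {S : Set (Fin (m + 1) → ℝ)} (hS : MeasurableSet S) :
    volume S = ∫⁻ y : Fin m → ℝ, volume ((i.insertNth · y) ⁻¹' S) := by
  have hvp := volume_preserving_piFinSuccAbove (fun _ : Fin (m + 1) => ℝ) i
  set e := MeasurableEquiv.piFinSuccAbove (fun _ : Fin (m + 1) => ℝ) i
  rw [← (hvp.symm e).measure_preimage_equiv S, Measure.volume_eq_prod,
    Measure.prod_apply_symm (e.symm.measurable hS)]
  rfl

theorem volume_biUnion_Icc_update_diff_le {ι : Type*} {n : ℕ} (s : Finset ι)
    (c ρ : ι → Fin n → ℝ) (i : Fin n) {δ : ℝ} (hδ : 0 ≤ δ) :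
    volume ((⋃ j ∈ s, Icc (c j - Function.update (ρ j) i ((1 + δ) * ρ j i))
          (c j + Function.update (ρ j) i ((1 + δ) * ρ j i))) \
        ⋃ j ∈ s, Icc (c j - ρ j) (c j + ρ j)) ≤
      ENNReal.ofReal δ * volume (⋃ j ∈ s, Icc (c j - ρ j) (c j + ρ j)) := by
  obtain ⟨m, rfl⟩ := Nat.exists_eq_add_one_of_ne_zero i.pos.ne'
  have hm : ∀ a b : ι → Fin (m + 1) → ℝ, MeasurableSet (⋃ j ∈ s, Icc (a j) (b j)) :=
    fun _ _ => s.measurableSet_biUnion fun _ _ => measurableSet_Icc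
  rw [volume_eq_lintegral_volume_preimage_insertNth i ((hm _ _).diff (hm _ _)),
    volume_eq_lintegral_volume_preimage_insertNth i (hm _ _),
    ← lintegral_const_mul' _ _ ENNReal.ofReal_ne_top]
  refine lintegral_mono fun y => ?_
  rw [preimage_sdiff, preimage_insertNth_biUnion_Icc, preimage_insertNth_biUnion_Icc]
  have hupd : ∀ j l,
      Function.update (ρ j) i ((1 + δ) * ρ j i) (i.succAbove l) = ρ j (i.succAbove l) :=
    fun j l => Function.update_of_ne (Fin.succAbove_ne i l) _ _
  -- with classical instances `simp` can rewrite inside the `Finset.filter` predicates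
  classical
  simp only [Pi.sub_apply, Pi.add_apply, Function.update_self, hupd]
  exact Real.volume_biUnion_Icc_dilate_diff_le _ _ _ hδ

theorem volume_biUnion_Icc_piecewise_diff_le {ι : Type*} {n : ℕ} (s : Finset ι)
    (c ρ : ι → Fin n → ℝ) (hρ : ∀ j ∈ s, ∀ l, 0 ≤ ρ j l) {δ : ℝ} (hδ : 0 ≤ δ)
    (T : Finset (Fin n)) :
    volume ((⋃ j ∈ s, Icc (c j - T.piecewise ((1 + δ) • ρ j) (ρ j))
          (c j + T.piecewise ((1 + δ) • ρ j) (ρ j))) \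
        ⋃ j ∈ s, Icc (c j - ρ j) (c j + ρ j)) ≤
      T.card * ENNReal.ofReal δ *
        volume (⋃ j ∈ s, Icc (c j - (1 + δ) • ρ j) (c j + (1 + δ) • ρ j)) := by
  classical
  induction T using Finset.induction_on with
  | empty => simp
  | insert i T hi ih =>
    set U : Finset (Fin n) → Set (Fin n → ℝ) := fun T =>
      ⋃ j ∈ s, Icc (c j - T.piecewise ((1 + δ) • ρ j) (ρ j))
        (c j + T.piecewise ((1 + δ) • ρ j) (ρ j))
    have hle : ∀ j ∈ s, T.piecewise ((1 + δ) • ρ j) (ρ j) ≤ (1 + δ) • ρ j := fun j hj l => by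
      by_cases hl : l ∈ T
      · simp [hl]
      · simp only [Finset.piecewise_eq_of_notMem _ _ _ hl, Pi.smul_apply, smul_eq_mul]
        nlinarith [hρ j hj l]
    have hUT : U T ⊆ ⋃ j ∈ s, Icc (c j - (1 + δ) • ρ j) (c j + (1 + δ) • ρ j) :=
      biUnion_mono subset_rfl fun j hj =>
        Icc_subset_Icc (sub_le_sub_left (hle j hj) _) (add_le_add_right (hle j hj) _)
    have hstep : U (insert i T) = ⋃ j ∈ s, Icc
        (c j - Function.update (T.piecewise ((1 + δ) • ρ j) (ρ j)) i
          ((1 + δ) * T.piecewise ((1 + δ) • ρ j) (ρ j) i))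
        (c j + Function.update (T.piecewise ((1 + δ) • ρ j) (ρ j)) i
          ((1 + δ) * T.piecewise ((1 + δ) • ρ j) (ρ j) i)) := by
      simp only [U, Finset.piecewise_insert, Finset.piecewise_eq_of_notMem _ _ _ hi, Pi.smul_apply,
        smul_eq_mul]
    have hU₀ : U ∅ = ⋃ j ∈ s, Icc (c j - ρ j) (c j + ρ j) := by simp [U]
    calc volume (U (insert i T) \ U ∅)
        ≤ volume (U (insert i T) \ U T) + volume (U T \ U ∅) :=
          (measure_mono (sdiff_triangle _ _ _)).trans (measure_union_le _ _)
      _ ≤ ENNReal.ofReal δ * volume (U T) + T.card * ENNReal.ofReal δ *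
            volume (⋃ j ∈ s, Icc (c j - (1 + δ) • ρ j) (c j + (1 + δ) • ρ j)) := by
          gcongr
          · rw [hstep]
            exact volume_biUnion_Icc_update_diff_le s c _ i hδ
          · rw [hU₀]; exact ih
      _ ≤ _ := by
          rw [Finset.card_insert_of_notMem hi, Nat.cast_add, Nat.cast_one, add_mul, one_mul,
            add_mul, add_comm]
          gcongr

theorem closedBall_pi_eq_Icc {ι : Type*} [Fintype ι] (c : ι → ℝ) {r : ℝ} (hr : 0 ≤ r) :
    closedBall c r = Icc (c - fun _ => r) (c + fun _ => r) := by
  rw [closedBall_pi _ hr, ← pi_univ_Icc]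
  simp only [Real.closedBall_eq_Icc, Pi.sub_apply, Pi.add_apply]

theorem volume_biUnion_closedBall_mul_diff_le {ι : Type*} {n : ℕ} (s : Finset ι)
    (c : ι → Fin n → ℝ) (r : ι → ℝ) (hr : ∀ j ∈ s, 0 ≤ r j) {δ : ℝ} (hδ : 0 ≤ δ) :
    volume ((⋃ j ∈ s, closedBall (c j) ((1 + δ) * r j)) \ ⋃ j ∈ s, closedBall (c j) (r j)) ≤
      n * ENNReal.ofReal δ * volume (⋃ j ∈ s, closedBall (c j) ((1 + δ) * r j)) := by
  have key := volume_biUnion_Icc_piecewise_diff_le s c (fun j _ => r j) (fun j hj _ => hr j hj) hδ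
    Finset.univ
  have hball : ∀ ρ : ι → ℝ, (∀ j ∈ s, 0 ≤ ρ j) → ⋃ j ∈ s, closedBall (c j) (ρ j) =
      ⋃ j ∈ s, Icc (c j - fun _ => ρ j) (c j + fun _ => ρ j) :=
    fun ρ hρ => iUnion₂_congr fun j hj => closedBall_pi_eq_Icc _ (hρ j hj)
  rw [hball _ hr, hball _ fun j hj => by nlinarith [hr j hj]]
  simpa only [Finset.piecewise_univ, Finset.card_univ, Fintype.card_fin, Pi.smul_def, smul_eq_mul]
    using key

theorem closedBall_mul_subset_closedBall_four_mul {X : Type*} [PseudoMetricSpace X] {x y : X}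
    {r s δ : ℝ} (h : (closedBall x r ∩ closedBall y s).Nonempty) (hr : 0 ≤ r) (hrs : r ≤ s)
    (hδ : δ ≤ 1) : closedBall x ((1 + δ) * r) ⊆ closedBall y (4 * s) := by
  obtain ⟨z, hzx, hzy⟩ := h
  have hxy : dist x y ≤ r + s :=
    (dist_triangle_left x y z).trans (add_le_add (mem_closedBall.mp hzx) (mem_closedBall.mp hzy))
  exact closedBall_subset_closedBall' (by nlinarith)

theorem biUnion_closedBall_mul_subset_of_satellite {X : Type*} [PseudoMetricSpace X] {N : ℕ}
    {c : ℕ → X} {r : ℕ → ℝ} (hr : ∀ j ≤ N, 0 ≤ r j)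
    (hsat : ∀ j ≤ N, (closedBall (c j) (r j) ∩ closedBall (c 0) (r 0)).Nonempty ∧ r j ≤ r 0)
    {δ : ℝ} (hδ : δ ≤ 1) :
    ⋃ j ∈ Finset.range (N + 1), closedBall (c j) ((1 + δ) * r j) ⊆ closedBall (c 0) (4 * r 0) :=
  iUnion₂_subset fun j hj =>
    have hjN := Finset.mem_range_succ_iff.mp hj
    closedBall_mul_subset_closedBall_four_mul (hsat j hjN).1 (hr j hjN) (hsat j hjN).2 hδ

theorem volume_satellite_dilate_diff_le {n N : ℕ} {c : ℕ → Fin n → ℝ} {r : ℕ → ℝ}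
    (hr : ∀ j ≤ N, 0 ≤ r j)
    (hsat : ∀ j ≤ N, (closedBall (c j) (r j) ∩ closedBall (c 0) (r 0)).Nonempty ∧ r j ≤ r 0)
    {δ : ℝ} (hδ₀ : 0 ≤ δ) (hδ₁ : δ ≤ 1) :
    volume ((⋃ j ∈ Finset.range (N + 1), closedBall (c j) ((1 + δ) * r j)) \
        ⋃ j ∈ Finset.range (N + 1), closedBall (c j) (r j)) ≤
      n * ENNReal.ofReal δ * volume (closedBall (c 0) (4 * r 0)) :=
  (volume_biUnion_closedBall_mul_diff_le _ c r
    (fun j hj => hr j (Finset.mem_range_succ_iff.mp hj)) hδ₀).trans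
    (by gcongr; exact biUnion_closedBall_mul_subset_of_satellite hr hsat hδ₁)

theorem measure_closedBall_four_mul_le {X : Type*} [PseudoMetricSpace X] [MeasurableSpace X]
    {μ : Measure X} {D : ℝ≥0∞}
    (hD : ∀ (x : X) (r : ℝ), 0 < r → μ (closedBall x (2 * r)) ≤ D * μ (closedBall x r))
    (x : X) {r : ℝ} (hr : 0 < r) : μ (closedBall x (4 * r)) ≤ D ^ 2 * μ (closedBall x r) :=
  calc μ (closedBall x (4 * r)) = μ (closedBall x (2 * (2 * r))) := by ring_nf
    _ ≤ D * (D * μ (closedBall x r)) := (hD x _ (by positivity)).trans (by gcongr; exact hD x r hr)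
    _ = D ^ 2 * μ (closedBall x r) := by ring

theorem ENNReal.mul_rpow_le_mul_rpow_of_one_le {a : ℝ≥0∞} (ha : 1 ≤ a) {p : ℝ} (hp₀ : 0 ≤ p)
    (hp₁ : p ≤ 1) (x : ℝ≥0∞) : (a * x) ^ p ≤ a * x ^ p := by
  rw [ENNReal.mul_rpow_of_nonneg _ _ hp₀]
  gcongr
  simpa using ENNReal.rpow_le_rpow_of_exponent_le ha hp₁

/-- Let w be a weight on ℝⁿ satisfying the A_∞-type growth bound
w(S)/w(Q) ≤ 2 (|S|/|Q|)^{1/β} (β > 1) and having doubling constant Δ.  If {Q_j} is a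
satellite configuration of cubes with center Q₀ then for all δ ∈ (0,1),
w((⋃ (1+δ)Q_j) \ (⋃ Q_j)) ≤ C_n Δ² δ^{1/β} w(Q₀), with C_n depending only on n. -/
theorem weighted_satellite_enlargement (n : ℕ) :
    ∃ C : ℝ, 0 < C ∧
      ∀ (w : (Fin n → ℝ) → ℝ≥0∞), Measurable w →
      ∀ β : ℝ, 1 < β →
      ∀ Δ : ℝ, 0 < Δ →
      (∀ (c : Fin n → ℝ) (r : ℝ), 0 < r →
        weightMeasure n w (closedBall c (2 * r)) ≤
          ENNReal.ofReal Δ * weightMeasure n w (closedBall c r)) →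
      (∀ (c : Fin n → ℝ) (r : ℝ), 0 < r → ∀ S ⊆ closedBall c r, MeasurableSet S →
        weightMeasure n w S ≤
          2 * (volume S / volume (closedBall c r)) ^ (1 / β) *
            weightMeasure n w (closedBall c r)) →
      ∀ (N : ℕ) (c : ℕ → (Fin n → ℝ)) (r : ℕ → ℝ),
        (∀ j ≤ N, 0 < r j) →
        (∀ j ≤ N, (closedBall (c j) (r j) ∩ closedBall (c 0) (r 0)).Nonempty ∧ r j ≤ r 0) →
        ∀ δ : ℝ, 0 < δ → δ < 1 →
          weightMeasure n w
              ((⋃ j ∈ Finset.range (N + 1), closedBall (c j) ((1 + δ) * r j)) \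
                ⋃ j ∈ Finset.range (N + 1), closedBall (c j) (r j)) ≤
            ENNReal.ofReal (C * Δ ^ 2 * δ ^ (1 / β)) *
              weightMeasure n w (closedBall (c 0) (r 0)) := by
  refine ⟨2 * (n + 1), by positivity, ?_⟩
  intro w _ β hβ Δ hΔ hdouble hgrowth N c r hr hsat δ hδ₀ hδ₁
  have hr' : ∀ j ≤ N, 0 ≤ r j := fun j hj => (hr j hj).le
  set E := (⋃ j ∈ Finset.range (N + 1), closedBall (c j) ((1 + δ) * r j)) \
    ⋃ j ∈ Finset.range (N + 1), closedBall (c j) (r j)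
  have hE : MeasurableSet E :=
    (Finset.measurableSet_biUnion _ fun _ _ => measurableSet_closedBall).diff
      (Finset.measurableSet_biUnion _ fun _ _ => measurableSet_closedBall)
  have hratio : volume E / volume (closedBall (c 0) (4 * r 0)) ≤ (n + 1) * ENNReal.ofReal δ :=
    ENNReal.div_le_of_le_mul ((volume_satellite_dilate_diff_le hr' hsat hδ₀.le hδ₁.le).trans
      (by gcongr; exact le_self_add))
  have hβ₀ : 0 ≤ 1 / β := by positivity
  calc weightMeasure n w E
      ≤ 2 * ((n + 1) * ENNReal.ofReal δ) ^ (1 / β) *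
          (ENNReal.ofReal Δ ^ 2 * weightMeasure n w (closedBall (c 0) (r 0))) := by
        refine (hgrowth _ _ (by linarith [hr 0 N.zero_le]) E (sdiff_subset.trans
          (biUnion_closedBall_mul_subset_of_satellite hr' hsat hδ₁.le)) hE).trans ?_
        gcongr
        exact measure_closedBall_four_mul_le hdouble _ (hr 0 N.zero_le)
    _ ≤ 2 * ((n + 1) * ENNReal.ofReal δ ^ (1 / β)) *
          (ENNReal.ofReal Δ ^ 2 * weightMeasure n w (closedBall (c 0) (r 0))) := by
        gcongr
        exact ENNReal.mul_rpow_le_mul_rpow_of_one_le le_add_self hβ₀ (by bound) _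
    _ = ENNReal.ofReal (2 * (n + 1) * Δ ^ 2 * δ ^ (1 / β)) *
          weightMeasure n w (closedBall (c 0) (r 0)) := by
        rw [ENNReal.ofReal_rpow_of_nonneg hδ₀.le hβ₀, ENNReal.ofReal_mul (by positivity),
          ENNReal.ofReal_mul (by positivity), ENNReal.ofReal_pow hΔ.le,
          ENNReal.ofReal_mul zero_le_two, ENNReal.ofReal_add n.cast_nonneg zero_le_one]
        simp only [ENNReal.ofReal_ofNat, ENNReal.ofReal_natCast, ENNReal.ofReal_one]
        ring
end

section
/- Let w be a weight on ℝ^n with doubling constant Δ_w satisfying w(S)/w(Q) ≤ 2 (|S|/|Q|)^{1/β} for all cubes Q and measurable S ⊆ Q, where β > 1. Then for any finite collection of cubes {Q_j}_{j=0}^N and any δ ∈ (0,1), w((∪_j (1+δ)Q_j) \ (∪_j Q_j)) ≤ C(n, Δ_w) δ^{1/β} w(∪_j Q_j). -/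
open MeasureTheory Metric Set
open scoped ENNReal

section OneDim

variable {ι : Type*} [Nonempty ι]

/-- The right-fringe estimate: if `e j` marks the right end of the "component" of `U`
containing the interval `[a j - ρ j, a j + ρ j]`, then the union of fringes
`(e j, e j + δ ρ j]` has measure at most `(δ/2) |U|`. -/
lemma fringe_bound (F : Finset ι) (a ρ : ι → ℝ) (δ : ℝ) (hδ : 0 < δ)
    (hρ : ∀ j ∈ F, 0 < ρ j) (U : Set ℝ) (e : ι → ℝ)
    (h1 : ∀ j ∈ F, a j + ρ j ≤ e j)
    (h2 : ∀ j ∈ F, Icc (a j - ρ j) (e j) ⊆ U)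
    (h3 : ∀ j ∈ F, ∀ y, e j < y → ¬ (Icc (a j - ρ j) y ⊆ U)) :
    volume (⋃ j ∈ F, Ioc (e j) (e j + δ * ρ j)) ≤ ENNReal.ofReal (δ / 2) * volume U := by
  classical
  set E := F.image e with hE
  have hrep : ∀ ε ∈ E, ∃ j, (j ∈ F ∧ e j = ε) ∧ ∀ j' ∈ F, e j' = ε → ρ j' ≤ ρ j := by
    intro ε hε
    obtain ⟨j0, hj0F, hj0⟩ := Finset.mem_image.mp hε
    obtain ⟨b, hb, hbmax⟩ :=
      (F.filter fun j => e j = ε).exists_max_image ρ ⟨j0, Finset.mem_filter.mpr ⟨hj0F, hj0⟩⟩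
    rw [Finset.mem_filter] at hb
    exact ⟨b, hb, fun j' hj' hj'e => hbmax j' (Finset.mem_filter.mpr ⟨hj', hj'e⟩)⟩
  choose! jm hjm hjmax using hrep
  have hjmF : ∀ ε ∈ E, jm ε ∈ F := fun ε hε => (hjm ε hε).1
  have hjme : ∀ ε ∈ E, e (jm ε) = ε := fun ε hε => (hjm ε hε).2
  -- the W intervals
  have hWU : ∀ ε ∈ E, Icc (ε - 2 * ρ (jm ε)) ε ⊆ U := by
    intro ε hε z hz
    have hF := hjmF ε hε
    have hge : a (jm ε) + ρ (jm ε) ≤ ε := by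
      have := h1 _ hF; rwa [hjme ε hε] at this
    apply h2 _ hF
    constructor
    · have := hz.1; linarith
    · rw [hjme ε hε]; exact hz.2
  have key2 : ∀ ε ∈ E, ∀ ε' ∈ E, ε < ε' →
      Disjoint (Icc (ε - 2 * ρ (jm ε)) ε) (Icc (ε' - 2 * ρ (jm ε')) ε') := by
    intro ε hε ε' hε' hlt
    rw [Set.disjoint_left]
    rintro z ⟨hz1, hz2⟩ ⟨hz1', hz2'⟩
    have hF := hjmF ε hε
    have hje := hjme ε hε
    have hsub : Icc (a (jm ε) - ρ (jm ε)) ε' ⊆ U := by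
      intro y hy
      rcases le_or_gt y ε with h | h
      · exact h2 _ hF ⟨hy.1, by rw [hje]; exact h⟩
      · exact hWU ε' hε' ⟨by linarith, hy.2⟩
    exact h3 _ hF ε' (by rw [hje]; exact hlt) hsub
  have hWdisj : (↑E : Set ℝ).PairwiseDisjoint (fun ε => Icc (ε - 2 * ρ (jm ε)) ε) := by
    intro ε hε ε' hε' hne
    rcases lt_or_gt_of_ne hne with h | h
    · exact key2 ε (Finset.mem_coe.mp hε) ε' (Finset.mem_coe.mp hε') h
    · exact (key2 ε' (Finset.mem_coe.mp hε') ε (Finset.mem_coe.mp hε) h).symm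
  have hsum : ∑ ε ∈ E, ENNReal.ofReal (2 * ρ (jm ε)) ≤ volume U := by
    calc ∑ ε ∈ E, ENNReal.ofReal (2 * ρ (jm ε))
        = ∑ ε ∈ E, volume (Icc (ε - 2 * ρ (jm ε)) ε) := by
          refine Finset.sum_congr rfl fun ε hε => ?_
          rw [Real.volume_Icc]; congr 1; ring
      _ = volume (⋃ ε ∈ E, Icc (ε - 2 * ρ (jm ε)) ε) :=
          (measure_biUnion_finset hWdisj fun ε _ => measurableSet_Icc).symm
      _ ≤ volume U := measure_mono (iUnion₂_subset hWU)
  have cover : (⋃ j ∈ F, Ioc (e j) (e j + δ * ρ j)) ⊆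
      ⋃ ε ∈ E, Ioc ε (ε + δ * ρ (jm ε)) := by
    intro x hx
    simp only [mem_iUnion, exists_prop] at hx ⊢
    obtain ⟨j, hj, hx1, hx2⟩ := hx
    have hεE : e j ∈ E := Finset.mem_image_of_mem e hj
    refine ⟨e j, hεE, hx1, hx2.trans ?_⟩
    have hρle := hjmax (e j) hεE j hj rfl
    nlinarith
  calc volume (⋃ j ∈ F, Ioc (e j) (e j + δ * ρ j))
      ≤ volume (⋃ ε ∈ E, Ioc ε (ε + δ * ρ (jm ε))) := measure_mono cover
    _ ≤ ∑ ε ∈ E, volume (Ioc ε (ε + δ * ρ (jm ε))) := measure_biUnion_finset_le E _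
    _ = ∑ ε ∈ E, ENNReal.ofReal (δ / 2) * ENNReal.ofReal (2 * ρ (jm ε)) := by
        refine Finset.sum_congr rfl fun ε hε => ?_
        rw [Real.volume_Ioc, ← ENNReal.ofReal_mul (by positivity)]
        congr 1; ring
    _ = ENNReal.ofReal (δ / 2) * ∑ ε ∈ E, ENNReal.ofReal (2 * ρ (jm ε)) := by
        rw [Finset.mul_sum]
    _ ≤ ENNReal.ofReal (δ / 2) * volume U := by gcongr

/-- Construction of the component-right-end function `e`. -/
lemma exists_e (F : Finset ι) (a ρ : ι → ℝ) (hρ : ∀ j ∈ F, 0 < ρ j) (U : Set ℝ)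
    (hUc : IsClosed U) (hUb : BddAbove U)
    (hbase : ∀ j ∈ F, Icc (a j - ρ j) (a j + ρ j) ⊆ U) :
    ∃ e : ι → ℝ, (∀ j ∈ F, a j + ρ j ≤ e j) ∧ (∀ j ∈ F, Icc (a j - ρ j) (e j) ⊆ U) ∧
      (∀ j ∈ F, ∀ y, e j < y → ¬ (Icc (a j - ρ j) y ⊆ U)) := by
  classical
  have key : ∀ j ∈ F,
      (a j + ρ j ≤ sSup {t | a j + ρ j ≤ t ∧ Icc (a j - ρ j) t ⊆ U}) ∧
      (Icc (a j - ρ j) (sSup {t | a j + ρ j ≤ t ∧ Icc (a j - ρ j) t ⊆ U}) ⊆ U) ∧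
      (∀ y, sSup {t | a j + ρ j ≤ t ∧ Icc (a j - ρ j) t ⊆ U} < y →
        ¬ (Icc (a j - ρ j) y ⊆ U)) := by
    intro j hj
    set S : Set ℝ := {t | a j + ρ j ≤ t ∧ Icc (a j - ρ j) t ⊆ U} with hS
    have hmem : a j + ρ j ∈ S := ⟨le_refl _, hbase j hj⟩
    have hne : S.Nonempty := ⟨_, hmem⟩
    have hSU : S ⊆ U := by
      intro t ht
      exact ht.2 ⟨by linarith [hρ j hj, ht.1], le_refl t⟩
    have hbdd : BddAbove S := hUb.mono hSU
    have hle : a j + ρ j ≤ sSup S := le_csSup hbdd hmem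
    refine ⟨hle, ?_, ?_⟩
    · rintro z ⟨hz1, hz2⟩
      rcases lt_or_eq_of_le hz2 with hlt | heq
      · obtain ⟨t, htS, hzt⟩ := exists_lt_of_lt_csSup hne hlt
        exact htS.2 ⟨hz1, hzt.le⟩
      · rw [heq]
        exact hUc.closure_subset ((closure_mono hSU) (csSup_mem_closure hne hbdd))
    · intro y hy hsub
      have : y ∈ S := ⟨by linarith, hsub⟩
      exact absurd (le_csSup hbdd this) (not_le.mpr hy)
  exact ⟨_, fun j hj => (key j hj).1, fun j hj => (key j hj).2.1, fun j hj => (key j hj).2.2⟩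

/-- The 1-dimensional dilation lemma: dilating each interval of a finite family by `1+δ`
about its center increases the measure of the union by a factor of at most `1+δ`. -/
lemma oneD (F : Finset ι) (a ρ : ι → ℝ) (hρ : ∀ j ∈ F, 0 < ρ j) (δ : ℝ) (hδ : 0 < δ) :
    volume (⋃ j ∈ F, Icc (a j - (1 + δ) * ρ j) (a j + (1 + δ) * ρ j)) ≤
      ENNReal.ofReal (1 + δ) * volume (⋃ j ∈ F, Icc (a j - ρ j) (a j + ρ j)) := by
  classical
  set U := ⋃ j ∈ F, Icc (a j - ρ j) (a j + ρ j) with hU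
  have hUclosed : IsClosed U :=
    Set.Finite.isClosed_biUnion F.finite_toSet fun j _ => isClosed_Icc
  have hUbdd : Bornology.IsBounded U :=
    (Bornology.isBounded_biUnion_finset F).mpr fun j _ => Metric.isBounded_Icc _ _
  have hbase : ∀ j ∈ F, Icc (a j - ρ j) (a j + ρ j) ⊆ U := by
    intro j hj x hx
    exact mem_biUnion hj hx
  obtain ⟨e, he1, he2, he3⟩ := exists_e F a ρ hρ U hUclosed hUbdd.bddAbove hbase
  -- reflected family
  have hUnc : IsClosed (-U) := hUclosed.neg
  have hUnb : BddAbove (-U) := by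
    rw [bddAbove_neg]; exact hUbdd.bddBelow
  have hbase' : ∀ j ∈ F, Icc (-a j - ρ j) (-a j + ρ j) ⊆ -U := by
    intro j hj z hz
    rw [Set.mem_neg]
    apply hbase j hj
    constructor <;> [skip; skip] <;> [linarith [hz.2]; linarith [hz.1]]
  obtain ⟨e', hf1, hf2, hf3⟩ := exists_e F (fun j => -a j) ρ hρ (-U) hUnc hUnb hbase'
  have cover : (⋃ j ∈ F, Icc (a j - (1 + δ) * ρ j) (a j + (1 + δ) * ρ j)) ⊆
      U ∪ ((⋃ j ∈ F, Ioc (e j) (e j + δ * ρ j)) ∪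
        (-(⋃ j ∈ F, Ioc (e' j) (e' j + δ * ρ j)))) := by
    intro x hx
    by_cases hxU : x ∈ U
    · exact Or.inl hxU
    right
    simp only [mem_iUnion, exists_prop, mem_Icc] at hx
    obtain ⟨j, hj, hx1, hx2⟩ := hx
    have hρj := hρ j hj
    rcases lt_or_ge (a j + ρ j) x with hgt | hle
    · left
      refine mem_biUnion hj ?_
      have hex : e j < x := by
        by_contra h
        push_neg at h
        exact hxU (he2 j hj ⟨by linarith, h⟩)
      exact ⟨hex, by nlinarith [he1 j hj]⟩
    rcases lt_or_ge x (a j - ρ j) with hlt | hge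
    · right
      rw [Set.mem_neg, mem_iUnion]
      simp only [mem_iUnion, exists_prop]
      refine ⟨j, hj, ?_⟩
      have hnx : -x ∉ -U := by rw [Set.mem_neg, neg_neg]; exact hxU
      have hex : e' j < -x := by
        by_contra h
        push_neg at h
        exact hnx (hf2 j hj ⟨by linarith, h⟩)
      exact ⟨hex, by nlinarith [hf1 j hj]⟩
    · exact absurd (hbase j hj ⟨hge, hle⟩) hxU
  have hR : volume (⋃ j ∈ F, Ioc (e j) (e j + δ * ρ j)) ≤ ENNReal.ofReal (δ / 2) * volume U :=
    fringe_bound F a ρ δ hδ hρ U e he1 he2 he3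
  have hL : volume (-(⋃ j ∈ F, Ioc (e' j) (e' j + δ * ρ j))) ≤
      ENNReal.ofReal (δ / 2) * volume U := by
    rw [Measure.measure_neg]
    have := fringe_bound F (fun j => -a j) ρ δ hδ hρ (-U) e' hf1 hf2 hf3
    rwa [Measure.measure_neg] at this
  calc volume (⋃ j ∈ F, Icc (a j - (1 + δ) * ρ j) (a j + (1 + δ) * ρ j))
      ≤ volume (U ∪ ((⋃ j ∈ F, Ioc (e j) (e j + δ * ρ j)) ∪
          (-(⋃ j ∈ F, Ioc (e' j) (e' j + δ * ρ j))))) := measure_mono cover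
    _ ≤ volume U + ((ENNReal.ofReal (δ / 2) * volume U) + (ENNReal.ofReal (δ / 2) * volume U)) := by
        refine (measure_union_le _ _).trans ?_
        gcongr
        exact (measure_union_le _ _).trans (by gcongr)
    _ = ENNReal.ofReal (1 + δ) * volume U := by
        rw [← add_mul, ← ENNReal.ofReal_add (by positivity) (by positivity)]
        rw [ENNReal.ofReal_add (by norm_num) hδ.le, ENNReal.ofReal_one]
        rw [add_mul, one_mul]
        congr 2
        norm_num

end OneDim

section Boxes

variable {n : ℕ} {ι : Type*} [Nonempty ι]

/-- The box with center `c j`, radius `r j`, dilated by `1+δ` in the coordinates of `s`. -/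
def dbox (c : ι → Fin n → ℝ) (r : ι → ℝ) (δ : ℝ) (s : Finset (Fin n)) (j : ι) :
    Set (Fin n → ℝ) :=
  Set.pi Set.univ fun i => Icc (c j i - (if i ∈ s then 1 + δ else 1) * r j)
    (c j i + (if i ∈ s then 1 + δ else 1) * r j)

lemma dbox_measurable (c : ι → Fin n → ℝ) (r : ι → ℝ) (δ : ℝ) (s : Finset (Fin n)) (j : ι) :
    MeasurableSet (dbox c r δ s j) :=
  MeasurableSet.univ_pi fun _ => measurableSet_Icc

lemma dbox_union_measurable (F : Finset ι) (c : ι → Fin n → ℝ) (r : ι → ℝ) (δ : ℝ)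
    (s : Finset (Fin n)) : MeasurableSet (⋃ j ∈ F, dbox c r δ s j) :=
  MeasurableSet.biUnion F.finite_toSet.countable fun j _ => dbox_measurable c r δ s j

lemma box_step (F : Finset ι) (c : ι → Fin n → ℝ) (r : ι → ℝ) (hr : ∀ j ∈ F, 0 < r j)
    (δ : ℝ) (hδ : 0 < δ) (s : Finset (Fin n)) (i₀ : Fin n) (hi₀ : i₀ ∉ s) :
    volume (⋃ j ∈ F, dbox c r δ (insert i₀ s) j) ≤
      ENNReal.ofReal (1 + δ) * volume (⋃ j ∈ F, dbox c r δ s j) := by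
  classical
  set μ : Fin n → Measure ℝ := fun _ => volume with hμ
  have hmV : MeasurableSet (⋃ j ∈ F, dbox c r δ (insert i₀ s) j) :=
    dbox_union_measurable F c r δ _
  have hmU : MeasurableSet (⋃ j ∈ F, dbox c r δ s j) := dbox_union_measurable F c r δ _
  set f : (Fin n → ℝ) → ℝ≥0∞ := (⋃ j ∈ F, dbox c r δ (insert i₀ s) j).indicator 1 with hf
  set g : (Fin n → ℝ) → ℝ≥0∞ := (⋃ j ∈ F, dbox c r δ s j).indicator 1 with hg
  have hfm : Measurable f := measurable_one.indicator hmV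
  have hgm : Measurable g := measurable_one.indicator hmU
  -- pointwise one dimensional estimate
  have pointwise : (∫⋯∫⁻_{i₀}, f ∂μ) ≤ fun x => ENNReal.ofReal (1 + δ) *
      (∫⋯∫⁻_{i₀}, g ∂μ) x := by
    rw [lmarginal_singleton, lmarginal_singleton]
    intro x
    set P : ι → Prop := fun j => ∀ i, i ≠ i₀ →
      x i ∈ Icc (c j i - (if i ∈ s then 1 + δ else 1) * r j)
        (c j i + (if i ∈ s then 1 + δ else 1) * r j) with hP
    set F' := F.filter P with hF'
    have hifs : ∀ (i : Fin n), i ≠ i₀ →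
        (if i ∈ insert i₀ s then (1:ℝ) + δ else 1) = (if i ∈ s then 1 + δ else 1) := by
      intro i hi; simp [Finset.mem_insert, hi]
    have hTV : ∀ y : ℝ, (Function.update x i₀ y ∈ ⋃ j ∈ F, dbox c r δ (insert i₀ s) j) ↔
        y ∈ ⋃ j ∈ F', Icc (c j i₀ - (1 + δ) * r j) (c j i₀ + (1 + δ) * r j) := by
      intro y
      simp only [mem_iUnion, exists_prop]
      constructor
      · rintro ⟨j, hj, hmem⟩
        rw [dbox, Set.mem_univ_pi] at hmem
        refine ⟨j, Finset.mem_filter.mpr ⟨hj, fun i hi => ?_⟩, ?_⟩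
        · have h := hmem i
          rwa [Function.update_of_ne hi, hifs i hi] at h
        · have h := hmem i₀
          rwa [Function.update_self, if_pos (Finset.mem_insert_self i₀ s)] at h
      · rintro ⟨j, hjf, hy⟩
        obtain ⟨hj, hPj⟩ := Finset.mem_filter.mp hjf
        refine ⟨j, hj, ?_⟩
        rw [dbox, Set.mem_univ_pi]
        intro i
        by_cases h : i = i₀
        · subst h
          rwa [Function.update_self, if_pos (Finset.mem_insert_self i s)]
        · rw [Function.update_of_ne h, hifs i h]
          exact hPj i h
    have hTU : ∀ y : ℝ, (Function.update x i₀ y ∈ ⋃ j ∈ F, dbox c r δ s j) ↔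
        y ∈ ⋃ j ∈ F', Icc (c j i₀ - r j) (c j i₀ + r j) := by
      intro y
      simp only [mem_iUnion, exists_prop]
      constructor
      · rintro ⟨j, hj, hmem⟩
        rw [dbox, Set.mem_univ_pi] at hmem
        refine ⟨j, Finset.mem_filter.mpr ⟨hj, fun i hi => ?_⟩, ?_⟩
        · have h := hmem i
          rwa [Function.update_of_ne hi] at h
        · have h := hmem i₀
          rwa [Function.update_self, if_neg hi₀, one_mul] at h
      · rintro ⟨j, hjf, hy⟩
        obtain ⟨hj, hPj⟩ := Finset.mem_filter.mp hjf
        refine ⟨j, hj, ?_⟩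
        rw [dbox, Set.mem_univ_pi]
        intro i
        by_cases h : i = i₀
        · subst h
          rw [Function.update_self, if_neg hi₀, one_mul]
          exact hy
        · rw [Function.update_of_ne h]
          exact hPj i h
    have e1 : (fun y => f (Function.update x i₀ y)) =
        (⋃ j ∈ F', Icc (c j i₀ - (1 + δ) * r j) (c j i₀ + (1 + δ) * r j)).indicator 1 := by
      funext y
      simp only [hf, Set.indicator_apply]
      exact if_congr (hTV y) rfl rfl
    have e2 : (fun y => g (Function.update x i₀ y)) =
        (⋃ j ∈ F', Icc (c j i₀ - r j) (c j i₀ + r j)).indicator 1 := by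
      funext y
      simp only [hg, Set.indicator_apply]
      exact if_congr (hTU y) rfl rfl
    have hm1 : MeasurableSet (⋃ j ∈ F', Icc (c j i₀ - (1 + δ) * r j) (c j i₀ + (1 + δ) * r j)) :=
      MeasurableSet.biUnion F'.finite_toSet.countable fun j _ => measurableSet_Icc
    have hm2 : MeasurableSet (⋃ j ∈ F', Icc (c j i₀ - r j) (c j i₀ + r j)) :=
      MeasurableSet.biUnion F'.finite_toSet.countable fun j _ => measurableSet_Icc
    calc ∫⁻ y, f (Function.update x i₀ y) ∂μ i₀
        = volume (⋃ j ∈ F', Icc (c j i₀ - (1 + δ) * r j) (c j i₀ + (1 + δ) * r j)) := by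
          rw [show (μ i₀) = volume from rfl]
          conv_lhs => rw [show (fun y => f (Function.update x i₀ y)) = _ from e1]
          exact lintegral_indicator_one hm1
      _ ≤ ENNReal.ofReal (1 + δ) * volume (⋃ j ∈ F', Icc (c j i₀ - r j) (c j i₀ + r j)) :=
          oneD F' (fun j => c j i₀) r (fun j hj => hr j (Finset.mem_of_mem_filter j hj)) δ hδ
      _ = ENNReal.ofReal (1 + δ) * ∫⁻ y, g (Function.update x i₀ y) ∂μ i₀ := by
          rw [show (μ i₀) = volume from rfl]
          conv_rhs => rw [show (fun y => g (Function.update x i₀ y)) = _ from e2]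
          rw [lintegral_indicator_one hm2]
  -- glue with Fubini
  have hdisj : Disjoint (Finset.univ.erase i₀) ({i₀} : Finset (Fin n)) := by simp
  have huniv : (Finset.univ : Finset (Fin n)) = (Finset.univ.erase i₀) ∪ {i₀} := by
    rw [Finset.union_comm, ← Finset.insert_eq, Finset.insert_erase (Finset.mem_univ i₀)]
  set x₀ : Fin n → ℝ := fun _ => 0 with hx₀
  have hGm : Measurable (∫⋯∫⁻_{i₀}, g ∂μ) := Measurable.lmarginal μ hgm
  calc volume (⋃ j ∈ F, dbox c r δ (insert i₀ s) j)
      = ∫⁻ z, f z ∂(Measure.pi μ) := by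
        rw [show Measure.pi μ = volume from (volume_pi).symm]
        exact (lintegral_indicator_one hmV).symm
    _ = (∫⋯∫⁻_Finset.univ, f ∂μ) x₀ := lintegral_eq_lmarginal_univ x₀
    _ = (∫⋯∫⁻_(Finset.univ.erase i₀), (∫⋯∫⁻_{i₀}, f ∂μ) ∂μ) x₀ := by
        conv_lhs => rw [huniv]
        rw [lmarginal_union μ f hfm hdisj]
    _ ≤ (∫⋯∫⁻_(Finset.univ.erase i₀),
          (fun x => ENNReal.ofReal (1 + δ) * (∫⋯∫⁻_{i₀}, g ∂μ) x) ∂μ) x₀ :=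
        lmarginal_mono pointwise x₀
    _ = ENNReal.ofReal (1 + δ) * (∫⋯∫⁻_(Finset.univ.erase i₀), (∫⋯∫⁻_{i₀}, g ∂μ) ∂μ) x₀ := by
        have hpull : ∀ (t : Finset (Fin n)) (cst : ℝ≥0∞) (G : (Fin n → ℝ) → ℝ≥0∞),
            Measurable G → ∀ x : Fin n → ℝ,
            (∫⋯∫⁻_t, (fun z => cst * G z) ∂μ) x = cst * (∫⋯∫⁻_t, G ∂μ) x := by
          intro t cst G hG x
          show ∫⁻ y, ((fun z => cst * G z) ∘ Function.updateFinset x t) y ∂_ = _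
          simp only [Function.comp_apply]
          exact lintegral_const_mul cst (hG.comp measurable_updateFinset)
        exact hpull _ _ _ hGm x₀
    _ = ENNReal.ofReal (1 + δ) * volume (⋃ j ∈ F, dbox c r δ s j) := by
        have hfin : (∫⋯∫⁻_(Finset.univ.erase i₀), (∫⋯∫⁻_{i₀}, g ∂μ) ∂μ) x₀ =
            volume (⋃ j ∈ F, dbox c r δ s j) := by
          rw [← lmarginal_union μ g hgm hdisj, ← huniv, ← lintegral_eq_lmarginal_univ x₀,
            show Measure.pi μ = volume from (volume_pi).symm, lintegral_indicator_one hmU]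
        rw [hfin]

lemma box_all (F : Finset ι) (c : ι → Fin n → ℝ) (r : ι → ℝ) (hr : ∀ j ∈ F, 0 < r j)
    (δ : ℝ) (hδ : 0 < δ) (s : Finset (Fin n)) :
    volume (⋃ j ∈ F, dbox c r δ s j) ≤
      ENNReal.ofReal ((1 + δ) ^ s.card) * volume (⋃ j ∈ F, dbox c r δ ∅ j) := by
  classical
  induction s using Finset.induction_on with
  | empty => simp
  | @insert i₀ s hi₀ ih =>
      calc volume (⋃ j ∈ F, dbox c r δ (insert i₀ s) j)
          ≤ ENNReal.ofReal (1 + δ) * volume (⋃ j ∈ F, dbox c r δ s j) :=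
            box_step F c r hr δ hδ s i₀ hi₀
        _ ≤ ENNReal.ofReal (1 + δ) *
            (ENNReal.ofReal ((1 + δ) ^ s.card) * volume (⋃ j ∈ F, dbox c r δ ∅ j)) := by
            gcongr
        _ = ENNReal.ofReal ((1 + δ) ^ (insert i₀ s).card) *
            volume (⋃ j ∈ F, dbox c r δ ∅ j) := by
            rw [← mul_assoc, ← ENNReal.ofReal_mul (by positivity : (0:ℝ) ≤ 1 + δ),
              Finset.card_insert_of_notMem hi₀, pow_succ]
            ring_nf

lemma volume_dilated_union (F : Finset ι) (c : ι → Fin n → ℝ) (r : ι → ℝ)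
    (hr : ∀ j ∈ F, 0 < r j) (δ : ℝ) (hδ : 0 < δ) :
    volume (⋃ j ∈ F, closedBall (c j) ((1 + δ) * r j)) ≤
      ENNReal.ofReal ((1 + δ) ^ n) * volume (⋃ j ∈ F, closedBall (c j) (r j)) := by
  have hV : (⋃ j ∈ F, closedBall (c j) ((1 + δ) * r j)) =
      ⋃ j ∈ F, dbox c r δ Finset.univ j := by
    refine iUnion₂_congr fun j hj => ?_
    rw [closedBall_pi _ (mul_nonneg (by linarith : (0:ℝ) ≤ 1 + δ) (hr j hj).le)]
    refine Set.pi_congr rfl fun i _ => ?_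
    rw [Real.closedBall_eq_Icc, if_pos (Finset.mem_univ i)]
  have hU : (⋃ j ∈ F, closedBall (c j) (r j)) = ⋃ j ∈ F, dbox c r δ ∅ j := by
    refine iUnion₂_congr fun j hj => ?_
    rw [closedBall_pi _ (hr j hj).le]
    refine Set.pi_congr rfl fun i _ => ?_
    rw [Real.closedBall_eq_Icc, if_neg (Finset.notMem_empty i), one_mul]
  rw [hV, hU]
  simpa [Finset.card_univ] using box_all F c r hr δ hδ Finset.univ

end Boxes

lemma pow_one_add_le_aux (δ : ℝ) (hδ0 : 0 ≤ δ) (hδ1 : δ ≤ 1) :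
    ∀ m : ℕ, (1 + δ) ^ m ≤ 1 + (2 ^ m - 1) * δ := by
  intro m
  induction m with
  | zero => norm_num
  | succ m ih =>
      have h2 : (1:ℝ) ≤ 2 ^ m := one_le_pow₀ (by norm_num)
      have hp : (0:ℝ) ≤ (1 + δ) ^ m := by positivity
      calc (1 + δ) ^ (m + 1) = (1 + δ) ^ m * (1 + δ) := pow_succ _ _
        _ ≤ (1 + (2 ^ m - 1) * δ) * (1 + δ) := by nlinarith
        _ ≤ 1 + (2 ^ (m + 1) - 1) * δ := by
            rw [pow_succ]
            nlinarith [mul_nonneg (mul_nonneg (by linarith : (0:ℝ) ≤ 2 ^ m - 1) hδ0)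
              (by linarith : (0:ℝ) ≤ 1 - δ)]

lemma volume_dilated_diff {n : ℕ} {ι : Type*} [Nonempty ι] (F : Finset ι)
    (c : ι → Fin n → ℝ) (r : ι → ℝ) (hr : ∀ j ∈ F, 0 < r j) (δ : ℝ)
    (hδ : 0 < δ) (hδ1 : δ ≤ 1) :
    volume ((⋃ j ∈ F, closedBall (c j) ((1 + δ) * r j)) \ (⋃ j ∈ F, closedBall (c j) (r j))) ≤
      ENNReal.ofReal (2 ^ n * δ) * volume (⋃ j ∈ F, closedBall (c j) (r j)) := by
  classical
  set U := ⋃ j ∈ F, closedBall (c j) (r j) with hU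
  set V := ⋃ j ∈ F, closedBall (c j) ((1 + δ) * r j) with hV
  have hUm : MeasurableSet U :=
    MeasurableSet.biUnion F.finite_toSet.countable fun j _ => measurableSet_closedBall
  have hUfin : volume U ≠ ⊤ := by
    refine ne_top_of_le_ne_top ?_ (measure_biUnion_finset_le F _)
    exact (ENNReal.sum_lt_top.mpr fun j _ => measure_closedBall_lt_top).ne
  have hUV : U ⊆ V := by
    refine iUnion₂_mono fun j hj => closedBall_subset_closedBall ?_
    nlinarith [hr j hj]
  have hdiff : volume (V \ U) = volume V - volume U :=
    measure_diff hUV hUm.nullMeasurableSet hUfin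
  rw [hdiff]
  rw [tsub_le_iff_right]
  calc volume V ≤ ENNReal.ofReal ((1 + δ) ^ n) * volume U := volume_dilated_union F c r hr δ hδ
    _ ≤ ENNReal.ofReal (1 + 2 ^ n * δ) * volume U := by
        gcongr
        have := pow_one_add_le_aux δ hδ.le hδ1 n
        have h2 : (1:ℝ) ≤ 2 ^ n := one_le_pow₀ (by norm_num)
        nlinarith
    _ = ENNReal.ofReal (2 ^ n * δ) * volume U + volume U := by
        rw [ENNReal.ofReal_add (by norm_num) (by positivity), add_mul, ENNReal.ofReal_one,
          one_mul, add_comm]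

/-- Let w be a weight on ℝⁿ with doubling constant at most Δ satisfying the growth bound
w(S)/w(Q) ≤ 2 (|S|/|Q|)^{1/β} (β > 1) for all cubes Q and measurable S ⊆ Q.  Then for any
finite collection of cubes {Q_j} and any δ ∈ (0,1),
w((⋃ (1+δ)Q_j) \ (⋃ Q_j)) ≤ C(n,Δ) δ^{1/β} w(⋃ Q_j). -/
theorem weighted_enlargement_estimate (n : ℕ) (Δ : ℝ) (hΔ : 0 < Δ) :
    ∃ C : ℝ, 0 < C ∧
      ∀ (w : (Fin n → ℝ) → ℝ≥0∞), Measurable w →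
      ∀ β : ℝ, 1 < β →
      (∀ (c : Fin n → ℝ) (r : ℝ), 0 < r →
        weightMeasure n w (closedBall c (2 * r)) ≤
          ENNReal.ofReal Δ * weightMeasure n w (closedBall c r)) →
      (∀ (c : Fin n → ℝ) (r : ℝ), 0 < r → ∀ S ⊆ closedBall c r, MeasurableSet S →
        weightMeasure n w S ≤
          2 * (volume S / volume (closedBall c r)) ^ (1 / β) *
            weightMeasure n w (closedBall c r)) →
      ∀ (N : ℕ) (c : ℕ → (Fin n → ℝ)) (r : ℕ → ℝ), (∀ j ≤ N, 0 < r j) →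
        ∀ δ : ℝ, 0 < δ → δ < 1 →
          weightMeasure n w
              ((⋃ j ∈ Finset.range (N + 1), closedBall (c j) ((1 + δ) * r j)) \
                ⋃ j ∈ Finset.range (N + 1), closedBall (c j) (r j)) ≤
            ENNReal.ofReal (C * δ ^ (1 / β)) *
              weightMeasure n w (⋃ j ∈ Finset.range (N + 1), closedBall (c j) (r j)) := by
  classical
  refine ⟨2 ^ (n + 1) * Δ ^ 5, by positivity, ?_⟩
  intro w hw β hβ hdbl hgrow N c r hr δ hδ0 hδ1
  set μ := weightMeasure n w with hμdef
  have hrpos : ∀ j ∈ Finset.range (N + 1), 0 < r j := fun j hj =>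
    hr j (Nat.lt_succ_iff.mp (Finset.mem_range.mp hj))
  set U := ⋃ j ∈ Finset.range (N + 1), closedBall (c j) (r j) with hUdef
  -- degenerate dimension
  rcases Nat.eq_zero_or_pos n with hn0 | hn
  · subst hn0
    have hVU : (⋃ j ∈ Finset.range (N + 1), closedBall (c j) ((1 + δ) * r j)) ⊆ U := by
      intro x hx
      simp only [mem_iUnion, exists_prop] at hx
      obtain ⟨j, hj, _⟩ := hx
      refine mem_biUnion hj ?_
      simp only [mem_closedBall]
      rw [show x = c j from Subsingleton.elim _ _, dist_self]
      exact (hrpos j hj).le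
    rw [Set.diff_eq_empty.mpr hVU]
    simp
  have i₀ : Fin n := ⟨0, hn⟩
  -- Vitali covering
  set t : Set ℕ := ↑(Finset.range (N + 1)) with ht
  obtain ⟨u, hut, hdisjoint, hcover⟩ :=
    Vitali.exists_disjoint_subfamily_covering_enlargement_closedBall t c r
      ((Finset.range (N + 1)).sup' ⟨0, Finset.mem_range.mpr (Nat.succ_pos N)⟩ r)
      (fun a ha => Finset.le_sup' r (Finset.mem_coe.mp ha)) 4 (by norm_num)
  have hufin : u.Finite := (Finset.range (N + 1)).finite_toSet.subset hut
  set K := hufin.toFinset with hK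
  have hKmem : ∀ k, k ∈ K ↔ k ∈ u := fun k => hufin.mem_toFinset
  have hKt : ∀ k ∈ K, k ∈ Finset.range (N + 1) := fun k hk =>
    Finset.mem_coe.mp (hut ((hKmem k).mp hk))
  -- assignment of each cube to a Vitali cube
  have hassign : ∀ j ∈ Finset.range (N + 1), ∃ k, k ∈ u ∧
      closedBall (c j) (r j) ⊆ closedBall (c k) (4 * r k) := by
    intro j hj
    obtain ⟨b, hb, hsub⟩ := hcover j (Finset.mem_coe.mpr hj)
    exact ⟨b, hb, hsub⟩
  choose! σ hσu hσsub using hassign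
  -- key geometric inclusion
  have hkey : ∀ j ∈ Finset.range (N + 1),
      closedBall (c j) ((1 + δ) * r j) ⊆ closedBall (c (σ j)) (32 * r (σ j)) := by
    intro j hj
    set k := σ j with hkdef
    have hrj := hrpos j hj
    have hrk : 0 < r k := hrpos k (Finset.mem_coe.mp (hut (hσu j hj)))
    have hcj : c j ∈ closedBall (c k) (4 * r k) :=
      hσsub j hj (mem_closedBall_self hrj.le)
    have hcjk : dist (c j) (c k) ≤ 4 * r k := mem_closedBall.mp hcj
    set y : Fin n → ℝ := fun i => c j i + r j with hy
    have hymem : y ∈ closedBall (c j) (r j) := by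
      rw [mem_closedBall, dist_pi_le_iff hrj.le]
      intro i
      simp [hy, Real.dist_eq, abs_of_nonneg hrj.le]
    have hy4 : dist y (c k) ≤ 4 * r k := mem_closedBall.mp (hσsub j hj hymem)
    have hrj8 : r j ≤ 8 * r k := by
      have h1 : dist (y i₀) (c k i₀) ≤ 4 * r k := (dist_le_pi_dist y (c k) i₀).trans hy4
      have h2 : dist (c j i₀) (c k i₀) ≤ 4 * r k := (dist_le_pi_dist (c j) (c k) i₀).trans hcjk
      have h3 : dist (y i₀) (c j i₀) = r j := by
        simp [hy, Real.dist_eq, abs_of_nonneg hrj.le]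
      have h4 := dist_triangle (y i₀) (c k i₀) (c j i₀)
      rw [dist_comm (c k i₀) (c j i₀)] at h4
      rw [h3] at h4
      linarith
    intro x hx
    rw [mem_closedBall] at hx ⊢
    have h5 := dist_triangle x (c j) (c k)
    nlinarith
  -- satellite families
  set A : ℕ → Finset ℕ := fun k => (Finset.range (N + 1)).filter fun j => σ j = k with hA
  set S : ℕ → Set (Fin n → ℝ) :=
    fun k => (⋃ j ∈ A k, closedBall (c j) ((1 + δ) * r j)) \ U with hS
  have hcoverE : (⋃ j ∈ Finset.range (N + 1), closedBall (c j) ((1 + δ) * r j)) \ U ⊆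
      ⋃ k ∈ K, S k := by
    rintro x ⟨hxV, hxU⟩
    simp only [mem_iUnion, exists_prop] at hxV
    obtain ⟨j, hj, hxj⟩ := hxV
    have hσj : σ j ∈ K := (hKmem (σ j)).mpr (hσu j hj)
    refine mem_biUnion hσj ⟨?_, hxU⟩
    exact mem_biUnion (Finset.mem_filter.mpr ⟨hj, rfl⟩) hxj
  -- the per-cube estimate
  have hstep : ∀ k ∈ K, μ (S k) ≤
      ENNReal.ofReal (2 ^ (n + 1) * Δ ^ 5 * δ ^ (1 / β)) * μ (closedBall (c k) (r k)) := by
    intro k hk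
    have hrk : 0 < r k := hrpos k (hKt k hk)
    have hBpos : (0:ℝ) < 32 * r k := by linarith
    have hSm : MeasurableSet (S k) := by
      refine MeasurableSet.diff ?_ ?_
      · exact MeasurableSet.biUnion (A k).finite_toSet.countable
          fun j _ => measurableSet_closedBall
      · exact MeasurableSet.biUnion (Finset.range (N + 1)).finite_toSet.countable
          fun j _ => measurableSet_closedBall
    have hAk : ∀ j ∈ A k, j ∈ Finset.range (N + 1) ∧ σ j = k := fun j hj =>
      ⟨Finset.mem_of_mem_filter j hj, (Finset.mem_filter.mp hj).2⟩
    have hSsub : S k ⊆ closedBall (c k) (32 * r k) := by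
      rintro x ⟨hxV, -⟩
      simp only [mem_iUnion, exists_prop] at hxV
      obtain ⟨j, hjA, hxj⟩ := hxV
      obtain ⟨hjrange, hjσ⟩ := hAk j hjA
      have := hkey j hjrange hxj
      rwa [hjσ] at this
    -- volume estimate
    have hvol1 : volume (S k) ≤
        ENNReal.ofReal (2 ^ n * δ) * volume (closedBall (c k) (32 * r k)) := by
      have hsubB : (⋃ j ∈ A k, closedBall (c j) (r j)) ⊆ U := by
        refine iUnion₂_subset fun j hjA => ?_
        intro x hx
        exact mem_biUnion (hAk j hjA).1 hx
      have h1 : S k ⊆ (⋃ j ∈ A k, closedBall (c j) ((1 + δ) * r j)) \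
          (⋃ j ∈ A k, closedBall (c j) (r j)) := diff_subset_diff_right hsubB
      have h2 := volume_dilated_diff (A k) c r (fun j hj => hrpos j (hAk j hj).1) δ hδ0 hδ1.le
      have h3 : (⋃ j ∈ A k, closedBall (c j) (r j)) ⊆ closedBall (c k) (32 * r k) := by
        refine iUnion₂_subset fun j hjA x hx => ?_
        obtain ⟨hjrange, hjσ⟩ := hAk j hjA
        have hxd : x ∈ closedBall (c j) ((1 + δ) * r j) := by
          refine closedBall_subset_closedBall ?_ hx
          nlinarith [hrpos j hjrange]
        have := hkey j hjrange hxd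
        rwa [hjσ] at this
      calc volume (S k) ≤ _ := measure_mono h1
        _ ≤ ENNReal.ofReal (2 ^ n * δ) * volume (⋃ j ∈ A k, closedBall (c j) (r j)) := h2
        _ ≤ ENNReal.ofReal (2 ^ n * δ) * volume (closedBall (c k) (32 * r k)) := by
            gcongr
    have hratio : volume (S k) / volume (closedBall (c k) (32 * r k)) ≤
        ENNReal.ofReal (2 ^ n * δ) := ENNReal.div_le_of_le_mul hvol1
    have hβpos : (0:ℝ) < 1 / β := by positivity
    have hrpow : (volume (S k) / volume (closedBall (c k) (32 * r k))) ^ (1 / β) ≤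
        ENNReal.ofReal (2 ^ n * δ ^ (1 / β)) := by
      calc (volume (S k) / volume (closedBall (c k) (32 * r k))) ^ (1 / β)
          ≤ (ENNReal.ofReal (2 ^ n * δ)) ^ (1 / β) :=
            ENNReal.rpow_le_rpow hratio hβpos.le
        _ = ENNReal.ofReal ((2 ^ n * δ) ^ (1 / β)) :=
            ENNReal.ofReal_rpow_of_pos (by positivity)
        _ ≤ ENNReal.ofReal (2 ^ n * δ ^ (1 / β)) := by
            apply ENNReal.ofReal_le_ofReal
            rw [Real.mul_rpow (by positivity) hδ0.le]
            have h2n : ((2:ℝ) ^ n) ^ (1 / β) ≤ 2 ^ n := by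
              have hle : (1:ℝ) ≤ 2 ^ n := one_le_pow₀ (by norm_num)
              have := Real.rpow_le_rpow_of_exponent_le hle
                (show 1 / β ≤ 1 by rw [div_le_one (by linarith)]; linarith)
              rwa [Real.rpow_one] at this
            have hδp : (0:ℝ) ≤ δ ^ (1 / β) := Real.rpow_nonneg hδ0.le _
            nlinarith
    -- doubling chain
    have hdouble : μ (closedBall (c k) (32 * r k)) ≤
        (ENNReal.ofReal Δ) ^ 5 * μ (closedBall (c k) (r k)) := by
      have s1 : μ (closedBall (c k) (32 * r k)) ≤
          ENNReal.ofReal Δ * μ (closedBall (c k) (16 * r k)) := by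
        rw [show (32:ℝ) * r k = 2 * (16 * r k) by ring]
        exact hdbl _ _ (by linarith)
      have s2 : μ (closedBall (c k) (16 * r k)) ≤
          ENNReal.ofReal Δ * μ (closedBall (c k) (8 * r k)) := by
        rw [show (16:ℝ) * r k = 2 * (8 * r k) by ring]
        exact hdbl _ _ (by linarith)
      have s3 : μ (closedBall (c k) (8 * r k)) ≤
          ENNReal.ofReal Δ * μ (closedBall (c k) (4 * r k)) := by
        rw [show (8:ℝ) * r k = 2 * (4 * r k) by ring]
        exact hdbl _ _ (by linarith)
      have s4 : μ (closedBall (c k) (4 * r k)) ≤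
          ENNReal.ofReal Δ * μ (closedBall (c k) (2 * r k)) := by
        rw [show (4:ℝ) * r k = 2 * (2 * r k) by ring]
        exact hdbl _ _ (by linarith)
      have s5 : μ (closedBall (c k) (2 * r k)) ≤
          ENNReal.ofReal Δ * μ (closedBall (c k) (r k)) := hdbl _ _ hrk
      calc μ (closedBall (c k) (32 * r k))
          ≤ ENNReal.ofReal Δ * μ (closedBall (c k) (16 * r k)) := s1
        _ ≤ ENNReal.ofReal Δ * (ENNReal.ofReal Δ * μ (closedBall (c k) (8 * r k))) := by
            gcongr
        _ ≤ ENNReal.ofReal Δ * (ENNReal.ofReal Δ *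
            (ENNReal.ofReal Δ * μ (closedBall (c k) (4 * r k)))) := by gcongr
        _ ≤ ENNReal.ofReal Δ * (ENNReal.ofReal Δ * (ENNReal.ofReal Δ *
            (ENNReal.ofReal Δ * μ (closedBall (c k) (2 * r k))))) := by gcongr
        _ ≤ ENNReal.ofReal Δ * (ENNReal.ofReal Δ * (ENNReal.ofReal Δ *
            (ENNReal.ofReal Δ * (ENNReal.ofReal Δ * μ (closedBall (c k) (r k)))))) := by gcongr
        _ = (ENNReal.ofReal Δ) ^ 5 * μ (closedBall (c k) (r k)) := by ring
    have hgb := hgrow (c k) (32 * r k) hBpos (S k) hSsub hSm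
    calc μ (S k)
        ≤ 2 * (volume (S k) / volume (closedBall (c k) (32 * r k))) ^ (1 / β) *
          μ (closedBall (c k) (32 * r k)) := hgb
      _ ≤ 2 * ENNReal.ofReal (2 ^ n * δ ^ (1 / β)) *
          ((ENNReal.ofReal Δ) ^ 5 * μ (closedBall (c k) (r k))) := by
          gcongr
      _ = ENNReal.ofReal (2 ^ (n + 1) * Δ ^ 5 * δ ^ (1 / β)) * μ (closedBall (c k) (r k)) := by
          rw [← mul_assoc]
          congr 1
          rw [← ENNReal.ofReal_pow hΔ.le,
            show (2:ℝ≥0∞) = ENNReal.ofReal 2 by norm_num,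
            ← ENNReal.ofReal_mul (by norm_num), ← ENNReal.ofReal_mul (by positivity)]
          congr 1
          ring
  -- sum up
  have hdisjK : (↑K : Set ℕ).PairwiseDisjoint fun k => closedBall (c k) (r k) := by
    rw [hK, hufin.coe_toFinset]
    exact hdisjoint
  have hsumK : ∑ k ∈ K, μ (closedBall (c k) (r k)) =
      μ (⋃ k ∈ K, closedBall (c k) (r k)) :=
    (measure_biUnion_finset hdisjK fun k _ => measurableSet_closedBall).symm
  have hUK : (⋃ k ∈ K, closedBall (c k) (r k)) ⊆ U := by
    refine iUnion₂_subset fun k hk x hx => ?_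
    exact mem_biUnion (hKt k hk) hx
  calc μ ((⋃ j ∈ Finset.range (N + 1), closedBall (c j) ((1 + δ) * r j)) \ U)
      ≤ μ (⋃ k ∈ K, S k) := measure_mono hcoverE
    _ ≤ ∑ k ∈ K, μ (S k) := measure_biUnion_finset_le K S
    _ ≤ ∑ k ∈ K, ENNReal.ofReal (2 ^ (n + 1) * Δ ^ 5 * δ ^ (1 / β)) *
        μ (closedBall (c k) (r k)) := Finset.sum_le_sum hstep
    _ = ENNReal.ofReal (2 ^ (n + 1) * Δ ^ 5 * δ ^ (1 / β)) *
        ∑ k ∈ K, μ (closedBall (c k) (r k)) := by rw [Finset.mul_sum]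
    _ = ENNReal.ofReal (2 ^ (n + 1) * Δ ^ 5 * δ ^ (1 / β)) *
        μ (⋃ k ∈ K, closedBall (c k) (r k)) := by rw [hsumK]
    _ ≤ ENNReal.ofReal (2 ^ (n + 1) * Δ ^ 5 * δ ^ (1 / β)) * μ U := by
        gcongr
end

section
/- Let w be a weight on ℝ^n such that w does not charge boundaries of cubes and satisfies the growth bound of Corollary on cube ratios: there exist C, γ > 0 with w(Q_1)/w(Q_2) ≥ C (r_1/r_2)^γ for all cubes Q_1 ⊆ Q_2. Then for every finite collection of cubes {Q_j}_{j=1}^N and ξ ∈ (0,1) there is a subcollection {Q̃_k}_{k=1}^M such that: (i) w(∪_{j=1}^N Q_j) ≤ (1 + C' ξ^{c'}) w(∪_{k=1}^M Q̃_k) for constants C', c' depending only on n, w; and (ii) for every k ≥ 2, w(Q̃_k \ ∪_{l<k} Q̃_l) > ξ w(Q̃_k). -/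
open MeasureTheory Metric Set
open scoped ENNReal

/-!
Process the cubes by decreasing sidelength and keep a cube when more than a ξ-fraction of its
weighted measure lies outside the cubes kept before it; (ii) then holds by construction.
Let `δ = 2 (2ξ/C)^{1/γ}`. If a discarded cube `Q` of radius `r` contains a point `y` outside the
`(1+δ)`-enlargements of the kept cubes, then the cube of radius `δr/2` inside `Q` next to `y`
misses all kept cubes before `Q` (they are larger than `Q`), and by the ratio bound it carries
measure at least `C (δ/2)^γ w(Q) = 2ξ w(Q)`, so `Q` would have been kept. Hence the union lies in
the `(1+δ)`-enlargement of the kept cubes and the enlargement estimate gives (i) with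
`c' = a/γ`. When `δ ≥ 1`, a discarded cube still meets a larger kept cube, hence lies in its
threefold enlargement, which two `7/4`-enlargements cover.
-/

theorem exists_closedBall_subset_closedBall_inter_closedBall {E : Type*}
    [NormedAddCommGroup E] [NormedSpace ℝ E] {c x : E} {r δ : ℝ} (hδ₀ : 0 ≤ δ) (hδ₁ : δ ≤ 1)
    (hx : x ∈ closedBall c r) :
    ∃ z, closedBall z (δ * r / 2) ⊆ closedBall c r ∩ closedBall x (δ * r) := by
  have hxc : dist x c ≤ r := hx
  refine ⟨AffineMap.lineMap x c (δ / 2), subset_inter ?_ ?_⟩ <;>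
    refine closedBall_subset_closedBall' ?_
  · rw [dist_lineMap_right, Real.norm_of_nonneg (by linarith)]
    nlinarith
  · rw [dist_lineMap_left, Real.norm_of_nonneg (by linarith)]
    nlinarith [dist_nonneg (x := x) (y := c)]

theorem exists_mem_closedBall_add_of_measure_diff_lt {X ι : Type*} [PseudoMetricSpace X]
    [MeasurableSpace X] {μ : Measure X} {c : ι → X} {r : ι → ℝ} {T : Set ι} {Q B : Set X}
    {y : X} {ρ : ℝ} (hBQ : B ⊆ Q) (hBy : B ⊆ closedBall y ρ)
    (hlt : μ (Q \ ⋃ m ∈ T, closedBall (c m) (r m)) < μ B) :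
    ∃ m ∈ T, y ∈ closedBall (c m) (r m + ρ) := by
  by_contra! hfar
  refine hlt.not_ge (measure_mono fun p hp => ⟨hBQ hp, ?_⟩)
  simp only [mem_iUnion₂, not_exists]
  intro m hm hpm
  refine hfar m hm ?_
  calc dist y (c m) ≤ dist p y + dist p (c m) := dist_triangle_left _ _ _
    _ ≤ ρ + r m := add_le_add (hBy hp) hpm
    _ = r m + ρ := add_comm _ _

section Greedy
variable {ι : Type*} [Preorder ι] [WellFoundedLT ι]

def IsGreedySelected (good : ι → Set ι → Prop) : ι → Prop :=
  wellFounded_lt.fix fun i selectedBelow => good i {m | ∃ h : m < i, selectedBelow m h}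

theorem isGreedySelected_iff (good : ι → Set ι → Prop) (i : ι) :
    IsGreedySelected good i ↔ good i {m | m < i ∧ IsGreedySelected good m} := by
  rw [IsGreedySelected, WellFounded.fix_eq]
  simp only [exists_prop]

theorem IsGreedySelected.good_image_Iio {good : ι → Set ι → Prop} {M : ℕ} (σ : Fin M ↪o ι)
    (hσ : range σ = {i | IsGreedySelected good i}) (k : Fin M) : good (σ k) (σ '' Iio k) := by
  have hsel : ∀ l, IsGreedySelected good (σ l) := fun l => hσ.subset (mem_range_self l)
  convert (isGreedySelected_iff good (σ k)).1 (hsel k) using 2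
  ext m
  constructor
  · rintro ⟨l, hl, rfl⟩
    exact ⟨σ.lt_iff_lt.2 hl, hsel l⟩
  · rintro ⟨hm, hm'⟩
    obtain ⟨l, rfl⟩ : m ∈ range σ := hσ.symm.subset hm'
    exact ⟨l, σ.lt_iff_lt.1 hm, rfl⟩
end Greedy

def LargelyUncovered {X ι : Type*} [MeasurableSpace X] (μ : Measure X) (ξ : ℝ)
    (Q : ι → Set X) (i : ι) (T : Set ι) : Prop :=
  ENNReal.ofReal ξ * μ (Q i) < μ (Q i \ ⋃ m ∈ T, Q m)

theorem closedBall_subset_biUnion_greedySelected {X ι : Type*} [PseudoMetricSpace X]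
    [MeasurableSpace X] [Preorder ι] [WellFoundedLT ι] {μ : Measure X} {ξ t : ℝ}
    {c : ι → X} {r : ι → ℝ} (hanti : Antitone r) (ht : 0 ≤ t) {i : ι}
    (hfree : ∀ y ∈ closedBall (c i) (r i), ∃ B ⊆ closedBall (c i) (r i),
      B ⊆ closedBall y (t * r i) ∧ ENNReal.ofReal ξ * μ (closedBall (c i) (r i)) < μ B) :
    closedBall (c i) (r i) ⊆
      ⋃ m ∈ {m | IsGreedySelected (LargelyUncovered μ ξ fun j => closedBall (c j) (r j)) m},
        closedBall (c m) ((1 + t) * r m) := by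
  intro y hy
  have hri : 0 ≤ r i := dist_nonneg.trans hy
  by_cases hsel : IsGreedySelected (LargelyUncovered μ ξ fun j => closedBall (c j) (r j)) i
  · exact mem_biUnion hsel (closedBall_subset_closedBall (by nlinarith) hy)
  obtain ⟨B, hBQ, hBy, hB⟩ := hfree y hy
  rw [isGreedySelected_iff, LargelyUncovered, not_lt] at hsel
  obtain ⟨m, ⟨hmi, hm⟩, hym⟩ :=
    exists_mem_closedBall_add_of_measure_diff_lt hBQ hBy (hsel.trans_lt hB)
  refine mem_biUnion hm (closedBall_subset_closedBall ?_ hym)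
  nlinarith [hanti hmi.le]

def ClosedBallRatioBound {X : Type*} [PseudoMetricSpace X] [MeasurableSpace X]
    (μ : Measure X) (C γ : ℝ) : Prop :=
  ∀ (x₁ x₂ : X) (r₁ r₂ : ℝ), 0 < r₁ → 0 < r₂ → closedBall x₁ r₁ ⊆ closedBall x₂ r₂ →
    ENNReal.ofReal (C * (r₁ / r₂) ^ γ) * μ (closedBall x₂ r₂) ≤ μ (closedBall x₁ r₁)

theorem ClosedBallRatioBound.exists_subset_closedBall_measure_gt {E : Type*}
    [NormedAddCommGroup E] [NormedSpace ℝ E] [MeasurableSpace E] {μ : Measure E} {C γ : ℝ}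
    (hratio : ClosedBallRatioBound μ C γ) {c y : E} {r δ ξ : ℝ} (hr : 0 < r) (hδ₀ : 0 < δ)
    (hδ₁ : δ ≤ 1) (hξ₀ : 0 ≤ ξ) (hξ : ξ < C * (δ / 2) ^ γ) (hpos : 0 < μ (closedBall c r))
    (hfin : μ (closedBall c r) < ⊤) (hy : y ∈ closedBall c r) :
    ∃ B ⊆ closedBall c r, B ⊆ closedBall y (δ * r) ∧
      ENNReal.ofReal ξ * μ (closedBall c r) < μ B := by
  obtain ⟨z, hz⟩ := exists_closedBall_subset_closedBall_inter_closedBall hδ₀.le hδ₁ hy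
  refine ⟨closedBall z (δ * r / 2), fun p hp => (hz hp).1, fun p hp => (hz hp).2, ?_⟩
  have hratio_z := hratio z c (δ * r / 2) r (by positivity) hr fun p hp => (hz hp).1
  rw [show δ * r / 2 / r = δ / 2 by field_simp] at hratio_z
  refine lt_of_lt_of_le ?_ hratio_z
  exact ENNReal.mul_lt_mul_left hpos.ne' hfin.ne
    ((ENNReal.ofReal_lt_ofReal_iff_of_nonneg hξ₀).2 hξ)

def ClosedBallEnlargementBound {X : Type*} [PseudoMetricSpace X] [MeasurableSpace X]
    (μ : Measure X) (A a : ℝ) : Prop :=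
  ∀ (K : ℕ) (c : ℕ → X) (r : ℕ → ℝ), (∀ j ≤ K, 0 < r j) → ∀ δ : ℝ, 0 < δ → δ < 1 →
    μ ((⋃ j ∈ Finset.range (K + 1), closedBall (c j) ((1 + δ) * r j)) \
        ⋃ j ∈ Finset.range (K + 1), closedBall (c j) (r j)) ≤
      ENNReal.ofReal (A * δ ^ a) * μ (⋃ j ∈ Finset.range (K + 1), closedBall (c j) (r j))

theorem biUnion_range_ofNat_eq_iUnion {α : Type*} {K : ℕ} (f : Fin (K + 1) → Set α) :
    ⋃ j ∈ Finset.range (K + 1), f (Fin.ofNat (K + 1) j) = ⋃ k, f k := by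
  ext x
  simp only [mem_iUnion, Finset.mem_range, exists_prop]
  constructor
  · rintro ⟨j, -, hx⟩
    exact ⟨_, hx⟩
  · rintro ⟨k, hx⟩
    exact ⟨k, k.isLt, by rwa [Fin.ofNat_eq_cast, Fin.cast_val_eq_self]⟩

namespace ClosedBallEnlargementBound

variable {X : Type*} [PseudoMetricSpace X] [MeasurableSpace X] {μ : Measure X} {A a : ℝ}
  {M : ℕ} {c : Fin M → X} {r : Fin M → ℝ}

theorem measure_iUnion_mul_le (henl : ClosedBallEnlargementBound μ A a) (hr : ∀ k, 0 < r k)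
    {δ : ℝ} (hδ₀ : 0 < δ) (hδ₁ : δ < 1) :
    μ (⋃ k, closedBall (c k) ((1 + δ) * r k)) ≤
      (1 + ENNReal.ofReal (A * δ ^ a)) * μ (⋃ k, closedBall (c k) (r k)) := by
  obtain _ | K := M
  · simp
  have henl' := henl K (fun j => c (Fin.ofNat _ j)) (fun j => r (Fin.ofNat _ j))
    (fun j _ => hr _) δ hδ₀ hδ₁
  simp only [biUnion_range_ofNat_eq_iUnion fun k => closedBall (c k) ((1 + δ) * r k),
    biUnion_range_ofNat_eq_iUnion fun k => closedBall (c k) (r k)] at henl'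
  calc μ (⋃ k, closedBall (c k) ((1 + δ) * r k))
      ≤ μ ((⋃ k, closedBall (c k) (r k)) ∪
          ((⋃ k, closedBall (c k) ((1 + δ) * r k)) \ ⋃ k, closedBall (c k) (r k))) :=
        measure_mono (by rw [union_sdiff_self]; exact subset_union_right)
    _ ≤ μ (⋃ k, closedBall (c k) (r k)) +
          ENNReal.ofReal (A * δ ^ a) * μ (⋃ k, closedBall (c k) (r k)) :=
        (measure_union_le _ _).trans (add_le_add_right henl' _)
    _ = _ := by rw [one_add_mul]

theorem measure_iUnion_pow_mul_le (henl : ClosedBallEnlargementBound μ A a)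
    (hr : ∀ k, 0 < r k) {δ : ℝ} (hδ₀ : 0 < δ) (hδ₁ : δ < 1) (p : ℕ) :
    μ (⋃ k, closedBall (c k) ((1 + δ) ^ p * r k)) ≤
      (1 + ENNReal.ofReal (A * δ ^ a)) ^ p * μ (⋃ k, closedBall (c k) (r k)) := by
  induction p with
  | zero => simp
  | succ p ih =>
    calc μ (⋃ k, closedBall (c k) ((1 + δ) ^ (p + 1) * r k))
        = μ (⋃ k, closedBall (c k) ((1 + δ) * ((1 + δ) ^ p * r k))) := by
          simp only [pow_succ', mul_assoc]
      _ ≤ (1 + ENNReal.ofReal (A * δ ^ a)) * μ (⋃ k, closedBall (c k) ((1 + δ) ^ p * r k)) :=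
          henl.measure_iUnion_mul_le (fun k => by have := hr k; positivity) hδ₀ hδ₁
      _ ≤ _ := by rw [pow_succ', mul_assoc]; gcongr

theorem measure_iUnion_three_mul_le (henl : ClosedBallEnlargementBound μ A a) (hA : 0 ≤ A)
    (hr : ∀ k, 0 < r k) :
    μ (⋃ k, closedBall (c k) (3 * r k)) ≤
      ENNReal.ofReal ((1 + A * (3 / 4) ^ a) ^ 2) * μ (⋃ k, closedBall (c k) (r k)) := by
  have h34 := henl.measure_iUnion_pow_mul_le (c := c) hr (δ := 3 / 4) (by norm_num)
    (by norm_num) 2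
  rw [ENNReal.ofReal_pow (by positivity), ENNReal.ofReal_add zero_le_one (by positivity),
    ENNReal.ofReal_one]
  refine le_trans (measure_mono (iUnion_mono fun k => closedBall_subset_closedBall ?_)) h34
  nlinarith [hr k]

theorem measure_le_of_subset_iUnion_enlarged (henl : ClosedBallEnlargementBound μ A a)
    (hA : 0 ≤ A) (ha : 0 ≤ a) (hr : ∀ k, 0 < r k) {U : Set X} {δ : ℝ} (hδ : 0 < δ)
    (hsmall : δ < 1 → U ⊆ ⋃ k, closedBall (c k) ((1 + δ) * r k))
    (hlarge : U ⊆ ⋃ k, closedBall (c k) (3 * r k)) :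
    μ U ≤ (1 + ENNReal.ofReal (max A ((1 + A * (3 / 4) ^ a) ^ 2) * δ ^ a)) *
      μ (⋃ k, closedBall (c k) (r k)) := by
  by_cases hδ₁ : δ < 1
  · calc μ U ≤ μ (⋃ k, closedBall (c k) ((1 + δ) * r k)) := measure_mono (hsmall hδ₁)
      _ ≤ (1 + ENNReal.ofReal (A * δ ^ a)) * μ (⋃ k, closedBall (c k) (r k)) :=
        henl.measure_iUnion_mul_le hr hδ hδ₁
      _ ≤ _ := by gcongr; exact le_max_left _ _
  · have hδa : 1 ≤ δ ^ a := Real.one_le_rpow (not_lt.1 hδ₁) ha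
    calc μ U ≤ μ (⋃ k, closedBall (c k) (3 * r k)) := measure_mono hlarge
      _ ≤ ENNReal.ofReal ((1 + A * (3 / 4) ^ a) ^ 2) * μ (⋃ k, closedBall (c k) (r k)) :=
        henl.measure_iUnion_three_mul_le hA hr
      _ ≤ _ := by
        gcongr
        refine le_add_left (ENNReal.ofReal_le_ofReal ?_)
        calc (1 + A * (3 / 4) ^ a) ^ 2 ≤ max A ((1 + A * (3 / 4) ^ a) ^ 2) := le_max_right _ _
          _ ≤ _ := le_mul_of_one_le_right (by positivity) hδa

end ClosedBallEnlargementBound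

theorem exists_greedy_subfamily {E : Type*} [NormedAddCommGroup E] [NormedSpace ℝ E]
    [MeasurableSpace E] {μ : Measure E} {C γ A a : ℝ}
    (hfin : ∀ (c : E) (r : ℝ), 0 < r → μ (closedBall c r) < ⊤)
    (hpos : ∀ (c : E) (r : ℝ), 0 < r → 0 < μ (closedBall c r))
    (hratio : ClosedBallRatioBound μ C γ) (henl : ClosedBallEnlargementBound μ A a)
    (hA : 0 ≤ A) (ha : 0 ≤ a) {ι : Type*} [LinearOrder ι] [Fintype ι] {c : ι → E} {r : ι → ℝ}
    (hr : ∀ i, 0 < r i) (hanti : Antitone r) {ξ : ℝ} (hξ₀ : 0 ≤ ξ) (hξ₁ : ξ < 1) :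
    ∃ (M : ℕ) (σ : Fin M ↪o ι),
      (∀ δ, 0 < δ → ξ < C * (δ / 2) ^ γ →
        μ (⋃ i, closedBall (c i) (r i)) ≤
          (1 + ENNReal.ofReal (max A ((1 + A * (3 / 4) ^ a) ^ 2) * δ ^ a)) *
            μ (⋃ k, closedBall (c (σ k)) (r (σ k)))) ∧
      ∀ k, ENNReal.ofReal ξ * μ (closedBall (c (σ k)) (r (σ k))) <
        μ (closedBall (c (σ k)) (r (σ k)) \
          ⋃ (l : Fin M) (_ : l < k), closedBall (c (σ l)) (r (σ l))) := by
  classical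
  set Q : ι → Set E := fun i => closedBall (c i) (r i)
  set S : Finset ι := {i | IsGreedySelected (LargelyUncovered μ ξ Q) i}
  set σ := S.orderEmbOfFin rfl
  have hσ : range σ = {i | IsGreedySelected (LargelyUncovered μ ξ Q) i} := by
    rw [Finset.range_orderEmbOfFin, Finset.coe_filter]; simp
  have hcover : ∀ t, 0 ≤ t → (∀ i, ∀ y ∈ Q i, ∃ B ⊆ Q i, B ⊆ closedBall y (t * r i) ∧
      ENNReal.ofReal ξ * μ (Q i) < μ B) →
      ⋃ i, Q i ⊆ ⋃ k, closedBall (c (σ k)) ((1 + t) * r (σ k)) := by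
    intro t ht hfree
    rw [← biUnion_range (g := fun m => closedBall (c m) ((1 + t) * r m)), hσ]
    exact iUnion_subset fun i => closedBall_subset_biUnion_greedySelected hanti ht (hfree i)
  refine ⟨S.card, σ, fun δ hδ hξδ => ?_, fun k => ?_⟩
  · refine henl.measure_le_of_subset_iUnion_enlarged hA ha (fun k => hr _) hδ
      (fun hδ₁ => hcover δ hδ.le fun i y hy => ?_) ?_
    · exact hratio.exists_subset_closedBall_measure_gt (hr i) hδ hδ₁.le hξ₀ hξδ
        (hpos _ _ (hr i)) (hfin _ _ (hr i)) hy
    · refine (hcover 2 zero_le_two fun i y hy => ⟨Q i, subset_rfl, ?_, ?_⟩).trans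
        (by norm_num)
      · exact closedBall_subset_closedBall' (by linarith [mem_closedBall'.1 hy])
      · simpa using ENNReal.mul_lt_mul_left (hpos _ _ (hr i)).ne' (hfin _ _ (hr i)).ne
          (ENNReal.ofReal_lt_one.2 hξ₁)
  · have := IsGreedySelected.good_image_Iio σ hσ k
    rwa [LargelyUncovered, biUnion_image] at this

theorem weighted_cordoba_fefferman_selection_general (n : ℕ) (w : (Fin n → ℝ) → ℝ≥0∞)
    (hfin : ∀ (c : Fin n → ℝ) (r : ℝ), 0 < r → weightMeasure n w (closedBall c r) < ⊤)
    (hpos : ∀ (c : Fin n → ℝ) (r : ℝ), 0 < r → 0 < weightMeasure n w (closedBall c r))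
    (C γ : ℝ) (hC : 0 < C) (hγ : 0 < γ)
    (hratio : ∀ (x₁ x₂ : Fin n → ℝ) (r₁ r₂ : ℝ), 0 < r₁ → 0 < r₂ →
      closedBall x₁ r₁ ⊆ closedBall x₂ r₂ →
      ENNReal.ofReal (C * (r₁ / r₂) ^ γ) * weightMeasure n w (closedBall x₂ r₂) ≤
        weightMeasure n w (closedBall x₁ r₁))
    (A a : ℝ) (hA : 0 < A) (ha : 0 < a)
    (henl : ∀ (K : ℕ) (c : ℕ → (Fin n → ℝ)) (r : ℕ → ℝ), (∀ j ≤ K, 0 < r j) →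
      ∀ δ : ℝ, 0 < δ → δ < 1 →
        weightMeasure n w
            ((⋃ j ∈ Finset.range (K + 1), closedBall (c j) ((1 + δ) * r j)) \
              ⋃ j ∈ Finset.range (K + 1), closedBall (c j) (r j)) ≤
          ENNReal.ofReal (A * δ ^ a) *
            weightMeasure n w (⋃ j ∈ Finset.range (K + 1), closedBall (c j) (r j))) :
    ∃ C' c' : ℝ, 0 < C' ∧ 0 < c' ∧
      ∀ ξ : ℝ, 0 < ξ → ξ < 1 →
      ∀ (N : ℕ) (c : Fin N → (Fin n → ℝ)) (r : Fin N → ℝ), (∀ j, 0 < r j) →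
        ∃ (M : ℕ) (σ : Fin M → Fin N), Function.Injective σ ∧
          weightMeasure n w (⋃ j, closedBall (c j) (r j)) ≤
            (1 + ENNReal.ofReal (C' * ξ ^ c')) *
              weightMeasure n w (⋃ k, closedBall (c (σ k)) (r (σ k))) ∧
          ∀ k : Fin M, 0 < (k : ℕ) →
            ENNReal.ofReal ξ * weightMeasure n w (closedBall (c (σ k)) (r (σ k))) <
              weightMeasure n w (closedBall (c (σ k)) (r (σ k)) \
                ⋃ (l : Fin M) (_ : l < k), closedBall (c (σ l)) (r (σ l))) := by
  set K := max A ((1 + A * (3 / 4) ^ a) ^ 2)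
  have hK : 0 < K := lt_max_of_lt_left hA
  refine ⟨K * 2 ^ a * (2 / C) ^ (a / γ), a / γ, by positivity, by positivity,
    fun ξ hξ hξ₁ N c r hr => ?_⟩
  set π := Tuple.sort fun j => OrderDual.toDual (r j)
  obtain ⟨M, σ, hbound, hfresh⟩ := exists_greedy_subfamily hfin hpos hratio henl hA.le ha.le
    (c := c ∘ π) (fun _ => hr _) (monotone_toDual_comp_iff.1 (Tuple.monotone_sort _)) hξ.le hξ₁
  refine ⟨M, π ∘ σ, π.injective.comp σ.injective, ?_, fun k _ => hfresh k⟩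
  have hbase : 0 ≤ 2 * ξ / C := by positivity
  set δ := 2 * (2 * ξ / C) ^ γ⁻¹
  have hξδ : ξ < C * (δ / 2) ^ γ := by
    rw [show δ / 2 = (2 * ξ / C) ^ γ⁻¹ by ring, Real.rpow_inv_rpow hbase hγ.ne',
      mul_div_cancel₀ _ hC.ne']
    linarith
  have hδa : K * δ ^ a = K * 2 ^ a * (2 / C) ^ (a / γ) * ξ ^ (a / γ) := by
    rw [Real.mul_rpow zero_le_two (by positivity), ← Real.rpow_mul hbase, inv_mul_eq_div,
      show 2 * ξ / C = 2 / C * ξ by ring, Real.mul_rpow (by positivity) hξ.le]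
    ring
  rw [← π.surjective.iUnion_comp (fun j => closedBall (c j) (r j)), ← hδa]
  exact hbound δ (by positivity) hξδ

/-- Weighted Córdoba–Fefferman selection lemma.  Let w be a weight on ℝⁿ not charging
boundaries of cubes, satisfying the cube-ratio growth bound w(Q₁)/w(Q₂) ≥ C (r₁/r₂)^γ for
nested cubes (a consequence of A_∞), and the weighted enlargement estimate
w(⋃(1+δ)Q_j \ ⋃Q_j) ≤ A δ^a w(⋃Q_j) (available since w ∈ A_∞).  Then for every ξ ∈ (0,1)
and finite collection of cubes {Q_j} there is a subcollection {Q̃_k} with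
(i) w(⋃ Q_j) ≤ (1 + C' ξ^{c'}) w(⋃ Q̃_k) for constants C', c' depending only on n and w, and
(ii) w(Q̃_k \ ⋃_{l<k} Q̃_l) > ξ w(Q̃_k) for every k ≥ 2. -/
theorem weighted_cordoba_fefferman_selection (n : ℕ) (w : (Fin n → ℝ) → ℝ≥0∞)
    (hw : Measurable w)
    (hfin : ∀ (c : Fin n → ℝ) (r : ℝ), 0 < r → weightMeasure n w (closedBall c r) < ⊤)
    (hpos : ∀ (c : Fin n → ℝ) (r : ℝ), 0 < r → 0 < weightMeasure n w (closedBall c r))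
    (hboundary : ∀ (c : Fin n → ℝ) (r : ℝ), 0 < r →
      weightMeasure n w (closedBall c r \ ball c r) = 0)
    (C γ : ℝ) (hC : 0 < C) (hγ : 0 < γ)
    (hratio : ∀ (x₁ x₂ : Fin n → ℝ) (r₁ r₂ : ℝ), 0 < r₁ → 0 < r₂ →
      closedBall x₁ r₁ ⊆ closedBall x₂ r₂ →
      ENNReal.ofReal (C * (r₁ / r₂) ^ γ) * weightMeasure n w (closedBall x₂ r₂) ≤
        weightMeasure n w (closedBall x₁ r₁))
    (A a : ℝ) (hA : 0 < A) (ha : 0 < a)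
    (henl : ∀ (K : ℕ) (c : ℕ → (Fin n → ℝ)) (r : ℕ → ℝ), (∀ j ≤ K, 0 < r j) →
      ∀ δ : ℝ, 0 < δ → δ < 1 →
        weightMeasure n w
            ((⋃ j ∈ Finset.range (K + 1), closedBall (c j) ((1 + δ) * r j)) \
              ⋃ j ∈ Finset.range (K + 1), closedBall (c j) (r j)) ≤
          ENNReal.ofReal (A * δ ^ a) *
            weightMeasure n w (⋃ j ∈ Finset.range (K + 1), closedBall (c j) (r j))) :
    ∃ C' c' : ℝ, 0 < C' ∧ 0 < c' ∧
      ∀ ξ : ℝ, 0 < ξ → ξ < 1 →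
      ∀ (N : ℕ) (c : Fin N → (Fin n → ℝ)) (r : Fin N → ℝ), (∀ j, 0 < r j) →
        ∃ (M : ℕ) (σ : Fin M → Fin N), Function.Injective σ ∧
          weightMeasure n w (⋃ j, closedBall (c j) (r j)) ≤
            (1 + ENNReal.ofReal (C' * ξ ^ c')) *
              weightMeasure n w (⋃ k, closedBall (c (σ k)) (r (σ k))) ∧
          ∀ k : Fin M, 0 < (k : ℕ) →
            ENNReal.ofReal ξ * weightMeasure n w (closedBall (c (σ k)) (r (σ k))) <
              weightMeasure n w (closedBall (c (σ k)) (r (σ k)) \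
                ⋃ (l : Fin M) (_ : l < k), closedBall (c (σ l)) (r (σ l))) :=
  weighted_cordoba_fefferman_selection_general n w hfin hpos C γ hC hγ hratio A a hA ha henl
end

section
/- Suppose w is a nonnegative locally integrable function on ℝ^n such that C_w(α) − 1 ≤ B (1−α)^{1/β} whenever α > 1 − e^{−β}, for some constants B, β ≥ 1, where C_w(α) = sup_{E : 0<|E|<∞} w({M χ_E > α})/w(E) and M is the Lebesgue Hardy–Littlewood maximal operator over cubes. Then for every cube Q and every measurable S ⊆ Q with |S|/|Q| < e^{−β}, one has w(S)/w(Q) ≤ B (|S|/|Q|)^{1/β}. -/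
open MeasureTheory Metric Set
open scoped ENNReal

/-- The superlevel set {M χ_E > α} of the uncentered Lebesgue Hardy–Littlewood maximal
operator over cubes (closed balls in the sup metric) applied to the indicator of E. -/
def maxLevelSet (n : ℕ) (E : Set (Fin n → ℝ)) (α : ℝ) : Set (Fin n → ℝ) :=
  {x | ∃ (c : Fin n → ℝ) (r : ℝ), 0 < r ∧ x ∈ closedBall c r ∧
    ENNReal.ofReal α * volume (closedBall c r) < volume (closedBall c r ∩ E)}

/-!
Fix a cube `Q`, a set `S ⊆ Q` and `u` with `|S|/|Q| < u < e^{-β}`, and put `α = 1 - u`.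
Then `E = Q \ S` fills more than the fraction `α` of `Q`, so `Q ⊆ {M χ_E > α}` and the
Tauberian estimate gives `w(Q) ≤ (1 + B u^{1/β}) w(E)`. Since `w(Q) = w(S) + w(E)` is
finite, this means `w(S) ≤ B u^{1/β} w(E) ≤ B u^{1/β} w(Q)`; letting `u ↓ |S|/|Q|` gives
the claim.
-/

theorem mul_measure_lt_measure_sdiff {X : Type*} [MeasurableSpace X] {μ : Measure X}
    {S Q : Set X} {a b : ℝ≥0∞} (hab : a + b = 1) (hQ : μ Q ≠ ⊤) (hS : μ S < b * μ Q) :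
    a * μ Q < μ (Q \ S) := by
  refine lt_of_lt_of_le ?_ le_measure_sdiff
  rw [lt_tsub_iff_left]
  have ha : a ≠ ⊤ := ne_top_of_le_ne_top ENNReal.one_ne_top (hab ▸ le_self_add)
  calc μ S + a * μ Q < b * μ Q + a * μ Q :=
        ENNReal.add_lt_add_right (ENNReal.mul_ne_top ha hQ) hS
    _ = μ Q := by rw [← add_mul, add_comm, hab, one_mul]

theorem measure_le_mul_of_le_one_add_mul_sdiff {X : Type*} [MeasurableSpace X]
    {μ : Measure X} {S Q : Set X} {K : ℝ≥0∞} (hSQ : S ⊆ Q) (hS : NullMeasurableSet S μ)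
    (hQ : μ Q ≠ ⊤) (h : μ Q ≤ (1 + K) * μ (Q \ S)) : μ S ≤ K * μ Q := by
  have hsplit : μ S + μ (Q \ S) = μ Q := by
    rw [measure_add_sdiff hS, union_eq_self_of_subset_left hSQ]
  have hE : μ (Q \ S) ≠ ⊤ := ne_top_of_le_ne_top hQ (measure_mono sdiff_subset)
  have : μ (Q \ S) + μ S ≤ μ (Q \ S) + K * μ (Q \ S) := by
    rw [add_comm, hsplit, ← one_add_mul]
    exact h
  exact ((ENNReal.add_le_add_iff_left hE).1 this).trans (by gcongr; exact sdiff_subset)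

theorem closedBall_subset_maxLevelSet {n : ℕ} {E : Set (Fin n → ℝ)} {α : ℝ}
    {c : Fin n → ℝ} {r : ℝ} (hr : 0 < r)
    (h : ENNReal.ofReal α * volume (closedBall c r) < volume (closedBall c r ∩ E)) :
    closedBall c r ⊆ maxLevelSet n E α :=
  fun _ hx ↦ ⟨c, r, hr, hx, h⟩

/-- `hlevel` says `C_ν(α) ≤ 1 + K`. -/
theorem measure_le_mul_of_maxLevelSet_le {n : ℕ} {ν : Measure (Fin n → ℝ)}
    {S : Set (Fin n → ℝ)} {c : Fin n → ℝ} {r α : ℝ} {K : ℝ≥0∞} (hr : 0 < r)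
    (hSQ : S ⊆ closedBall c r) (hS : MeasurableSet S) (hνQ : ν (closedBall c r) ≠ ⊤)
    (hα₀ : 0 ≤ α) (hα₁ : α ≤ 1)
    (hSα : volume S < ENNReal.ofReal (1 - α) * volume (closedBall c r))
    (hlevel : ∀ E : Set (Fin n → ℝ), MeasurableSet E → 0 < volume E → volume E < ⊤ →
      ν (maxLevelSet n E α) ≤ (1 + K) * ν E) :
    ν S ≤ K * ν (closedBall c r) := by
  set Q := closedBall c r
  have hdense : ENNReal.ofReal α * volume Q < volume (Q \ S) :=
    mul_measure_lt_measure_sdiff (by rw [← ENNReal.ofReal_add hα₀ (by linarith)]; simp)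
      measure_closedBall_lt_top.ne hSα
  have hQE : Q ∩ (Q \ S) = Q \ S := inter_eq_self_of_subset_right sdiff_subset
  refine measure_le_mul_of_le_one_add_mul_sdiff hSQ hS.nullMeasurableSet hνQ ?_
  calc ν Q ≤ ν (maxLevelSet n (Q \ S) α) :=
        measure_mono (closedBall_subset_maxLevelSet hr (by rwa [hQE]))
    _ ≤ (1 + K) * ν (Q \ S) :=
        hlevel _ (measurableSet_closedBall.diff hS) (pos_of_gt hdense)
          ((measure_mono sdiff_subset).trans_lt measure_closedBall_lt_top)

theorem measure_le_mul_rpow_of_tauberian {n : ℕ} {ν : Measure (Fin n → ℝ)} {B β : ℝ}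
    (hβ : 0 ≤ β)
    (htaub : ∀ α : ℝ, 1 - Real.exp (-β) < α → α < 1 →
      ∀ E : Set (Fin n → ℝ), MeasurableSet E → 0 < volume E → volume E < ⊤ →
        ν (maxLevelSet n E α) ≤ (1 + ENNReal.ofReal (B * (1 - α) ^ (1 / β))) * ν E)
    {S : Set (Fin n → ℝ)} {c : Fin n → ℝ} {r : ℝ} (hr : 0 < r)
    (hSQ : S ⊆ closedBall c r) (hS : MeasurableSet S) (hνQ : ν (closedBall c r) ≠ ⊤)
    {v : ℝ≥0∞} (hSv : volume S / volume (closedBall c r) < v)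
    (hvβ : v < ENNReal.ofReal (Real.exp (-β))) :
    ν S ≤ ENNReal.ofReal B * v ^ (1 / β) * ν (closedBall c r) := by
  have hv : v ≠ ⊤ := ne_top_of_lt hvβ
  have hvβ' : v.toReal < Real.exp (-β) := ENNReal.toReal_lt_of_lt_ofReal hvβ
  have hv₀ : 0 < v.toReal := ENNReal.toReal_pos (pos_of_gt hSv).ne' hv
  have hv₁ : v.toReal ≤ 1 := hvβ'.le.trans (Real.exp_le_one_iff.2 (by linarith))
  have hK : ENNReal.ofReal (B * v.toReal ^ (1 / β)) = ENNReal.ofReal B * v ^ (1 / β) := by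
    rw [ENNReal.ofReal_mul' (by positivity), ENNReal.toReal_rpow,
      ENNReal.ofReal_toReal (ENNReal.rpow_ne_top_of_nonneg (by positivity) hv)]
  have hSα : volume S < ENNReal.ofReal (1 - (1 - v.toReal)) * volume (closedBall c r) := by
    rwa [sub_sub_cancel, ENNReal.ofReal_toReal hv, ← ENNReal.div_lt_iff
      (.inl (measure_closedBall_pos _ _ hr).ne') (.inl measure_closedBall_lt_top.ne)]
  have := measure_le_mul_of_maxLevelSet_le hr hSQ hS hνQ (by linarith) (by linarith) hSα
    (htaub _ (by linarith) (by linarith))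
  rwa [sub_sub_cancel, hK] at this

theorem tauberian_implies_growth_general (n : ℕ) (w : (Fin n → ℝ) → ℝ≥0∞)
    (hfin : ∀ (c : Fin n → ℝ) (r : ℝ), 0 < r → weightMeasure n w (closedBall c r) < ⊤)
    (B β : ℝ) (hβ : 1 ≤ β)
    (htaub : ∀ α : ℝ, 1 - Real.exp (-β) < α → α < 1 →
      ∀ E : Set (Fin n → ℝ), MeasurableSet E → 0 < volume E → volume E < ⊤ →
        weightMeasure n w (maxLevelSet n E α) ≤
          (1 + ENNReal.ofReal (B * (1 - α) ^ (1 / β))) * weightMeasure n w E) :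
    ∀ (c : Fin n → ℝ) (r : ℝ), 0 < r → ∀ S ⊆ closedBall c r, MeasurableSet S →
      volume S / volume (closedBall c r) < ENNReal.ofReal (Real.exp (-β)) →
      weightMeasure n w S ≤
        ENNReal.ofReal B * (volume S / volume (closedBall c r)) ^ (1 / β) *
          weightMeasure n w (closedBall c r) := by
  intro c r hr S hSQ hS hSsmall
  have hνQ := (hfin c r hr).ne
  have hcont : Continuous fun v : ℝ≥0∞ ↦
      ENNReal.ofReal B * v ^ (1 / β) * weightMeasure n w (closedBall c r) :=
    (ENNReal.continuous_mul_const hνQ).comp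
      ((ENNReal.continuous_const_mul ENNReal.ofReal_ne_top).comp ENNReal.continuous_rpow_const)
  have hmem : volume S / volume (closedBall c r) ∈
      closure (Ioo (volume S / volume (closedBall c r)) (ENNReal.ofReal (Real.exp (-β)))) := by
    rw [closure_Ioo hSsmall.ne]
    exact left_mem_Icc.2 hSsmall.le
  exact ContinuousWithinAt.closure_le hmem continuousWithinAt_const hcont.continuousWithinAt
    fun v hv ↦ measure_le_mul_rpow_of_tauberian (by linarith) htaub hr hSQ hS hνQ hv.1 hv.2

/-- If a weight w satisfies the Solyanik-type Tauberian estimate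
C_w(α) − 1 ≤ B (1−α)^{1/β} for α > 1 − e^{−β}, then for every cube Q and measurable
S ⊆ Q with |S|/|Q| < e^{−β} one has w(S)/w(Q) ≤ B (|S|/|Q|)^{1/β}. -/
theorem tauberian_implies_growth (n : ℕ) (w : (Fin n → ℝ) → ℝ≥0∞) (hw : Measurable w)
    (hfin : ∀ (c : Fin n → ℝ) (r : ℝ), 0 < r → weightMeasure n w (closedBall c r) < ⊤)
    (B β : ℝ) (hB : 1 ≤ B) (hβ : 1 ≤ β)
    (htaub : ∀ α : ℝ, 1 - Real.exp (-β) < α → α < 1 →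
      ∀ E : Set (Fin n → ℝ), MeasurableSet E → 0 < volume E → volume E < ⊤ →
        weightMeasure n w (maxLevelSet n E α) ≤
          (1 + ENNReal.ofReal (B * (1 - α) ^ (1 / β))) * weightMeasure n w E) :
    ∀ (c : Fin n → ℝ) (r : ℝ), 0 < r → ∀ S ⊆ closedBall c r, MeasurableSet S →
      volume S / volume (closedBall c r) < ENNReal.ofReal (Real.exp (-β)) →
      weightMeasure n w S ≤
        ENNReal.ofReal B * (volume S / volume (closedBall c r)) ^ (1 / β) *
          weightMeasure n w (closedBall c r) :=
  tauberian_implies_growth_general n w hfin B β hβ htaub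
end

section
/- Suppose w is a nonnegative locally integrable function on ℝ^n such that C_w(α) − 1 ≤ B (1−α)^{1/β} whenever α > 1 − e^{−β}, for constants B, β ≥ 1. Then for every cube Q and every measurable S ⊆ Q one has w(S)/w(Q) ≤ e (|S|/|Q|)^{1/(2β(1+log B))}; in particular w is an A_∞ weight. -/
open MeasureTheory Metric Set
open scoped ENNReal

lemma taub_aux (B β σ : ℝ) (hB : 1 ≤ B) (hβ : 1 ≤ β) (hσ : 0 < σ)
    (hsmall : Real.exp 1 * σ ^ (1 / (2 * β * (1 + Real.log B))) < 1) :
    ∃ σ' : ℝ, σ < σ' ∧ σ' < Real.exp (-β) ∧ 0 < σ' ∧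
      B * σ' ^ (1 / β) ≤ Real.exp 1 * σ ^ (1 / (2 * β * (1 + Real.log B))) := by
  have hL : 0 ≤ Real.log B := Real.log_nonneg hB
  set L := Real.log B with hLdef
  set D := 2 * β * (1 + L) with hDdef
  have hD2 : 2 ≤ D := by nlinarith
  have hDpos : 0 < D := by linarith
  set p := 1 / D with hpdef
  have hppos : 0 < p := by positivity
  have hpD : p * D = 1 := by rw [hpdef]; exact one_div_mul_cancel hDpos.ne'
  have hBpos : (0:ℝ) < B := by linarith
  have hβne : β ≠ 0 := by linarith
  -- extract log σ < -D
  have hσp : σ ^ p = Real.exp (Real.log σ * p) := Real.rpow_def_of_pos hσ p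
  have hσp_lt : σ ^ p < Real.exp (-1) := by
    have he : (0:ℝ) < Real.exp 1 := Real.exp_pos 1
    have h1 : σ ^ p < 1 / Real.exp 1 := by
      rw [lt_div_iff₀ he]; linarith [hsmall]
    calc σ ^ p < 1 / Real.exp 1 := h1
      _ = Real.exp (-1) := by rw [Real.exp_neg, one_div]
  have hlogp : Real.log σ * p < -1 := by
    rw [hσp] at hσp_lt
    exact Real.exp_lt_exp.mp hσp_lt
  have hlog : Real.log σ < -D := by
    have h1 := mul_lt_mul_of_pos_right hlogp hDpos
    rw [mul_assoc, hpD, mul_one] at h1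
    linarith
  have hσe : σ < Real.exp (-β) := by
    have h1 : Real.log σ < -β := by nlinarith
    calc σ = Real.exp (Real.log σ) := (Real.exp_log hσ).symm
      _ < Real.exp (-β) := Real.exp_lt_exp.mpr h1
  -- the candidate σ'
  have heB : (0:ℝ) < Real.exp 1 / B := div_pos (Real.exp_pos 1) hBpos
  set A := (Real.exp 1 / B) ^ β * σ ^ (β * p) with hAdef
  have hApos : 0 < A := mul_pos (Real.rpow_pos_of_pos heB β) (Real.rpow_pos_of_pos hσ _)
  have hβp : 0 < 1 - β * p := by nlinarith
  have hlogA : Real.log A = β * (1 - L) + β * p * Real.log σ := by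
    rw [hAdef, Real.log_mul (ne_of_gt (Real.rpow_pos_of_pos heB β))
      (ne_of_gt (Real.rpow_pos_of_pos hσ _)), Real.log_rpow heB, Real.log_rpow hσ,
      Real.log_div (Real.exp_ne_zero 1) (ne_of_gt hBpos), Real.log_exp, ← hLdef]
  have hlt1 : σ < A := by
    have hstep : (1 - β * p) * Real.log σ < (1 - β * p) * (-D) :=
      mul_lt_mul_of_pos_left hlog hβp
    have hlogσA : Real.log σ < Real.log A := by
      rw [hlogA]; nlinarith [hstep, hpD]
    calc σ = Real.exp (Real.log σ) := (Real.exp_log hσ).symm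
      _ < Real.exp (Real.log A) := Real.exp_lt_exp.mpr hlogσA
      _ = A := Real.exp_log hApos
  refine ⟨min A ((σ + Real.exp (-β)) / 2), lt_min hlt1 (by linarith), ?_, ?_, ?_⟩
  · exact lt_of_le_of_lt (min_le_right _ _) (by linarith)
  · exact lt_min hApos (by positivity)
  · have h1 : (min A ((σ + Real.exp (-β)) / 2)) ^ (1/β) ≤ A ^ (1/β) :=
      Real.rpow_le_rpow (le_min hApos.le (by positivity)) (min_le_left _ _) (by positivity)
    have hexp : β * p * (1/β) = p := by field_simp
    have h2 : A ^ (1/β) = (Real.exp 1 / B) * σ ^ p := by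
      rw [hAdef, Real.mul_rpow (Real.rpow_nonneg heB.le β) (Real.rpow_nonneg hσ.le _),
        ← Real.rpow_mul heB.le, ← Real.rpow_mul hσ.le,
        mul_one_div_cancel hβne, Real.rpow_one, hexp]
    calc B * (min A ((σ + Real.exp (-β)) / 2)) ^ (1/β)
        ≤ B * ((Real.exp 1 / B) * σ ^ p) := by
          rw [← h2]; exact mul_le_mul_of_nonneg_left h1 hBpos.le
      _ = Real.exp 1 * σ ^ p := by field_simp

/-- If a weight w satisfies the Solyanik-type Tauberian estimate
C_w(α) − 1 ≤ B (1−α)^{1/β} for α > 1 − e^{−β} (B, β ≥ 1), then for every cube Q and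
every measurable S ⊆ Q we have w(S)/w(Q) ≤ e (|S|/|Q|)^{1/(2β(1+log B))}; in particular
w is an A_∞ weight. -/
theorem tauberian_implies_Ainfty (n : ℕ) (w : (Fin n → ℝ) → ℝ≥0∞) (hw : Measurable w)
    (hfin : ∀ (c : Fin n → ℝ) (r : ℝ), 0 < r → weightMeasure n w (closedBall c r) < ⊤)
    (B β : ℝ) (hB : 1 ≤ B) (hβ : 1 ≤ β)
    (htaub : ∀ α : ℝ, 1 - Real.exp (-β) < α → α < 1 →
      ∀ E : Set (Fin n → ℝ), MeasurableSet E → 0 < volume E → volume E < ⊤ →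
        weightMeasure n w (maxLevelSet n E α) ≤
          (1 + ENNReal.ofReal (B * (1 - α) ^ (1 / β))) * weightMeasure n w E) :
    ∀ (c : Fin n → ℝ) (r : ℝ), 0 < r → ∀ S ⊆ closedBall c r, MeasurableSet S →
      weightMeasure n w S ≤
        ENNReal.ofReal (Real.exp 1) *
          (volume S / volume (closedBall c r)) ^ (1 / (2 * β * (1 + Real.log B))) *
          weightMeasure n w (closedBall c r) := by
  intro c r hr S hS hSm
  have hQm : MeasurableSet (closedBall c r) := measurableSet_closedBall
  have hQpos : 0 < volume (closedBall c r) := measure_closedBall_pos volume c hr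
  have hQlt : volume (closedBall c r) < ⊤ := measure_closedBall_lt_top
  have hSlt : volume S < ⊤ := (measure_mono hS).trans_lt hQlt
  set a := (volume S).toReal with hadef
  set b := (volume (closedBall c r)).toReal with hbdef
  have hbpos : 0 < b := ENNReal.toReal_pos hQpos.ne' hQlt.ne
  have hSa : volume S = ENNReal.ofReal a := (ENNReal.ofReal_toReal hSlt.ne).symm
  have hQb : volume (closedBall c r) = ENNReal.ofReal b := (ENNReal.ofReal_toReal hQlt.ne).symm
  have hab : a ≤ b := ENNReal.toReal_mono hQlt.ne (measure_mono hS)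
  by_cases ha0 : volume S = 0
  · have hz : weightMeasure n w S = 0 := by
      show MeasureTheory.volume.withDensity w S = 0
      rw [withDensity_apply _ hSm, Measure.restrict_eq_zero.mpr ha0, lintegral_zero_measure]
    simp [hz]
  · have hapos : 0 < a := ENNReal.toReal_pos ha0 hSlt.ne
    have hσpos : 0 < a / b := div_pos hapos hbpos
    rw [hSa, hQb, ← ENNReal.ofReal_div_of_pos hbpos, ENNReal.ofReal_rpow_of_pos hσpos,
      ← ENNReal.ofReal_mul (Real.exp_nonneg 1)]
    set p := 1 / (2 * β * (1 + Real.log B)) with hpdef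
    by_cases hcase : 1 ≤ Real.exp 1 * (a / b) ^ p
    · calc weightMeasure n w S ≤ weightMeasure n w (closedBall c r) := measure_mono hS
        _ = 1 * weightMeasure n w (closedBall c r) := (one_mul _).symm
        _ ≤ _ := mul_le_mul_left (ENNReal.one_le_ofReal.mpr hcase) _
    · push_neg at hcase
      obtain ⟨σ', hgt, hlt, hpos', hkey⟩ := taub_aux B β (a / b) hB hβ hσpos hcase
      have hexpβ1 : Real.exp (-β) ≤ 1 := by
        calc Real.exp (-β) ≤ Real.exp 0 := Real.exp_le_exp.mpr (by linarith)
          _ = 1 := Real.exp_zero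
      have hσ'lt1 : σ' < 1 := lt_of_lt_of_le hlt hexpβ1
      have hα1 : (1 : ℝ) - σ' < 1 := by linarith
      have hα2 : 1 - Real.exp (-β) < 1 - σ' := by linarith
      have hEm : MeasurableSet (closedBall c r \ S) := hQm.diff hSm
      have hEvol : volume (closedBall c r \ S) = ENNReal.ofReal (b - a) := by
        rw [measure_diff hS hSm.nullMeasurableSet hSlt.ne, hSa, hQb]
        exact (ENNReal.ofReal_sub b hapos.le).symm
      have haσ'b : a < σ' * b := by
        have := (div_lt_iff₀ hbpos).mp hgt
        linarith
      have hba : 0 < b - a := by nlinarith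
      have hEpos : 0 < volume (closedBall c r \ S) := by
        rw [hEvol]; exact ENNReal.ofReal_pos.mpr hba
      have hElt : volume (closedBall c r \ S) < ⊤ := by
        rw [hEvol]; exact ENNReal.ofReal_lt_top
      have hαnn : 0 ≤ 1 - σ' := by linarith
      have hcover : closedBall c r ⊆ maxLevelSet n (closedBall c r \ S) (1 - σ') := by
        intro x hx
        refine ⟨c, r, hr, hx, ?_⟩
        rw [inter_eq_self_of_subset_right diff_subset, hEvol, hQb,
          ← ENNReal.ofReal_mul hαnn]
        exact (ENNReal.ofReal_lt_ofReal_iff hba).mpr (by nlinarith)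
      have ht := htaub (1 - σ') hα2 hα1 (closedBall c r \ S) hEm hEpos hElt
      have h1α : (1 : ℝ) - (1 - σ') = σ' := by ring
      rw [h1α] at ht
      have hQfin : weightMeasure n w (closedBall c r) < ⊤ := hfin c r hr
      have hwE_ne : weightMeasure n w (closedBall c r \ S) ≠ ⊤ :=
        ((measure_mono diff_subset).trans_lt hQfin).ne
      have hadd : weightMeasure n w S + weightMeasure n w (closedBall c r \ S)
          = weightMeasure n w (closedBall c r) := by
        rw [← measure_union disjoint_sdiff_right hEm, union_diff_cancel hS]
      have hchain : weightMeasure n w S + weightMeasure n w (closedBall c r \ S) ≤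
          ENNReal.ofReal (B * σ' ^ (1/β)) * weightMeasure n w (closedBall c r \ S)
            + weightMeasure n w (closedBall c r \ S) := by
        calc weightMeasure n w S + weightMeasure n w (closedBall c r \ S)
            = weightMeasure n w (closedBall c r) := hadd
          _ ≤ weightMeasure n w (maxLevelSet n (closedBall c r \ S) (1 - σ')) :=
              measure_mono hcover
          _ ≤ (1 + ENNReal.ofReal (B * σ' ^ (1/β))) *
              weightMeasure n w (closedBall c r \ S) := ht
          _ = _ := by rw [add_mul, one_mul, add_comm]
      have hfinal : weightMeasure n w S ≤
          ENNReal.ofReal (B * σ' ^ (1/β)) * weightMeasure n w (closedBall c r \ S) :=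
        (ENNReal.add_le_add_iff_right hwE_ne).mp hchain
      calc weightMeasure n w S
          ≤ ENNReal.ofReal (B * σ' ^ (1/β)) * weightMeasure n w (closedBall c r \ S) := hfinal
        _ ≤ ENNReal.ofReal (Real.exp 1 * (a / b) ^ p) * weightMeasure n w (closedBall c r) :=
            mul_le_mul' (ENNReal.ofReal_le_ofReal hkey) (measure_mono diff_subset)
end
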